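/- arXiv:1207.0946 — 6 statements merged into one kernel-verified Lean document; each statement's English description precedes it below -/
import Mathlib

section
/- Let (e_j) be a quasi-greedy basis of a Banach space X. Then there is a constant c > 0 such that k_N = sup_{|A|≤N} ‖S_A‖ ≤ c·log N for all N ≥ 2. -/
open Finset NNReal ENNReal Filter

noncomputable section

variable (𝕜 X : Type*) [RCLike 𝕜] [NormedAddCommGroup X] [NormedSpace 𝕜 X]

/-- A normalized Schauder basis of a (real or complex) Banach space, given together with
its biorthogonal coefficient functionals. -/
structure GreedyBasis where
  e : ℕ → X
  coeff : ℕ → X →L[𝕜] 𝕜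
  norm_e : ∀ j, ‖e j‖ = 1
  biorth : ∀ i j, coeff i (e j) = if i = j then 1 else 0
  expansion : ∀ x : X,
    Tendsto (fun n => ∑ j ∈ Finset.range n, coeff j x • e j) atTop (nhds x)

variable {𝕜 X}

namespace GreedyBasis

variable (b : GreedyBasis 𝕜 X)

/-- The coordinate projection `S_A` onto a finite set `A` of indices. -/
def S (A : Finset ℕ) : X →L[𝕜] X := ∑ j ∈ A, (b.coeff j).smulRight (b.e j)

/-- `π` is a greedy (decreasing) rearrangement of the coefficients of `x`. -/
def Greedy (x : X) (π : Equiv.Perm ℕ) : Prop :=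
  ∀ k : ℕ, ‖b.coeff (π (k + 1)) x‖ ≤ ‖b.coeff (π k) x‖

/-- The thresholding greedy algorithm of order `N` (relative to the greedy ordering `π`). -/
def G (N : ℕ) (π : Equiv.Perm ℕ) (x : X) : X :=
  ∑ k ∈ Finset.range N, b.coeff (π k) x • b.e (π k)

/-- The best `N`-term approximation error `σ_N(x)`. -/
def σ (N : ℕ) (x : X) : ℝ≥0∞ :=
  ⨅ (A : Finset ℕ) (_ : A.card ≤ N) (c : ℕ → 𝕜),
    (‖x - ∑ j ∈ A, c j • b.e j‖₊ : ℝ≥0∞)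

/-- The expansional best approximation error `σ̃_N(x)`. -/
def σt (N : ℕ) (x : X) : ℝ≥0∞ :=
  ⨅ (A : Finset ℕ) (_ : A.card = N), (‖x - b.S A x‖₊ : ℝ≥0∞)

/-- `k_N = sup_{|A| ≤ N} ‖S_A‖`. -/
def kN (N : ℕ) : ℝ≥0∞ := ⨆ (A : Finset ℕ) (_ : A.card ≤ N), (‖b.S A‖₊ : ℝ≥0∞)

/-- Right democracy function `h_r(n) = sup_{|A| = n} ‖∑_{j ∈ A} e_j‖`. -/
def hr (n : ℕ) : ℝ≥0∞ := ⨆ (A : Finset ℕ) (_ : A.card = n), (‖∑ j ∈ A, b.e j‖₊ : ℝ≥0∞)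

/-- Left democracy function `h_l(n) = inf_{|A| = n} ‖∑_{j ∈ A} e_j‖`. -/
def hl (n : ℕ) : ℝ≥0∞ := ⨅ (A : Finset ℕ) (_ : A.card = n), (‖∑ j ∈ A, b.e j‖₊ : ℝ≥0∞)

/-- `μ(N) = sup_{1 ≤ n ≤ N} h_r(n)/h_l(n)`. -/
def μ (N : ℕ) : ℝ≥0∞ := ⨆ n ∈ Finset.Icc 1 N, b.hr n / b.hl n

/-- The basis is quasi-greedy with constant `K`:  `‖G_N(x)‖ ≤ K ‖x‖` for every `x`, every `N`,
and every greedy rearrangement. -/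
def QuasiGreedy (K : ℝ≥0) : Prop :=
  ∀ (x : X) (π : Equiv.Perm ℕ), b.Greedy x π → ∀ N : ℕ, ‖b.G N π x‖ ≤ K * ‖x‖

/-- The Lebesgue constant `C_N = sup_x ‖x - G_N(x)‖ / σ_N(x)`. -/
def CN (N : ℕ) : ℝ≥0∞ :=
  ⨆ (x : X) (π : Equiv.Perm ℕ) (_ : b.Greedy x π) (_ : b.σ N x ≠ 0),
    (‖x - b.G N π x‖₊ : ℝ≥0∞) / b.σ N x

/-- `C̃_N = sup_x ‖x - G_N(x)‖ / σ̃_N(x)`. -/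
def CtN (N : ℕ) : ℝ≥0∞ :=
  ⨆ (x : X) (π : Equiv.Perm ℕ) (_ : b.Greedy x π) (_ : b.σt N x ≠ 0),
    (‖x - b.G N π x‖₊ : ℝ≥0∞) / b.σt N x

/-- `D_N = sup_x σ̃_N(x) / σ_N(x)`. -/
def DN (N : ℕ) : ℝ≥0∞ :=
  ⨆ (x : X) (_ : b.σ N x ≠ 0), b.σt N x / b.σ N x

end GreedyBasis


namespace GreedyBasisProof

variable {𝕜 X : Type*} [RCLike 𝕜] [NormedAddCommGroup X] [NormedSpace 𝕜 X]

lemma lemC (v : ℕ → X) :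
    ∀ (F : Finset ℕ) (c : ℕ → ℝ) (t M : ℝ),
    0 ≤ t → (∀ j ∈ F, 0 ≤ c j) → (∀ j ∈ F, c j ≤ t) →
    (∀ F' ⊆ F, ‖∑ j ∈ F', v j‖ ≤ M) →
    ‖∑ j ∈ F, ((c j : ℝ) : 𝕜) • v j‖ ≤ t * M := by
  intro F
  induction F using Finset.strongInduction with
  | _ F ih =>
    intro c t M ht h0 h1 hM
    have hM0 : (0:ℝ) ≤ M := by
      have := hM ∅ (Finset.empty_subset F); simpa using this
    rcases F.eq_empty_or_nonempty with rfl | hF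
    · simpa using mul_nonneg ht hM0
    obtain ⟨j₀, hj₀F, hj₀min⟩ := F.exists_min_image c hF
    have hsplit : ∑ j ∈ F, ((c j : ℝ) : 𝕜) • v j
        = ((c j₀ : ℝ) : 𝕜) • ∑ j ∈ F, v j
          + ∑ j ∈ F.erase j₀, ((c j - c j₀ : ℝ) : 𝕜) • v j := by
      have h2 : ∑ j ∈ F.erase j₀, ((c j - c j₀ : ℝ) : 𝕜) • v j
          = ∑ j ∈ F, ((c j - c j₀ : ℝ) : 𝕜) • v j := by
        apply Finset.sum_subset (F.erase_subset j₀)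
        intro x hx hx'
        have : x = j₀ := by
          by_contra h
          exact hx' (Finset.mem_erase.2 ⟨h, hx⟩)
        simp [this]
      rw [h2, Finset.smul_sum, ← Finset.sum_add_distrib]
      apply Finset.sum_congr rfl
      intro j hj
      rw [← add_smul]
      congr 1
      push_cast
      ring
    rw [hsplit]
    have hb1 : ‖((c j₀ : ℝ) : 𝕜) • ∑ j ∈ F, v j‖ ≤ c j₀ * M := by
      rw [norm_smul, RCLike.norm_ofReal, abs_of_nonneg (h0 j₀ hj₀F)]
      exact mul_le_mul_of_nonneg_left (hM F le_rfl) (h0 j₀ hj₀F)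
    have hb2 : ‖∑ j ∈ F.erase j₀, ((c j - c j₀ : ℝ) : 𝕜) • v j‖ ≤ (t - c j₀) * M := by
      apply ih (F.erase j₀) (Finset.erase_ssubset hj₀F) (fun j => c j - c j₀) (t - c j₀) M
      · linarith [h1 j₀ hj₀F]
      · intro j hj; have := hj₀min j (Finset.mem_of_mem_erase hj); linarith
      · intro j hj; have := h1 j (Finset.mem_of_mem_erase hj); linarith
      · intro F' hF'; exact hM F' (hF'.trans (F.erase_subset j₀))
    calc ‖_ + _‖ ≤ c j₀ * M + (t - c j₀) * M := norm_add_le_of_le hb1 hb2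
    _ = t * M := by ring

lemma lemD' (v : ℕ → X) (a : ℕ → 𝕜) (M : ℝ) :
    ∀ (n : ℕ) (L : Finset ℕ) (hL : L.Nonempty), L.card = n →
    (∀ j ∈ L, 0 < ‖a j‖) →
    (∀ s : ℝ, ‖∑ j ∈ L.filter (fun j => s ≤ ‖a j‖), a j • v j‖ ≤ M) →
    ‖∑ j ∈ L, (((‖a j‖ : ℝ) : 𝕜)⁻¹ * a j) • v j
      - (((L.inf' hL fun j => ‖a j‖ : ℝ) : 𝕜))⁻¹ • ∑ j ∈ L, a j • v j‖
      ≤ (1 / (L.inf' hL fun j => ‖a j‖) - 1 / (L.sup' hL fun j => ‖a j‖)) * M := by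
  intro n
  induction n using Nat.strong_induction_on with
  | _ n ih =>
    intro L hL hcard hpos hM
    set fa : ℕ → ℝ := fun j => ‖a j‖ with hfa
    set t := L.inf' hL fa with htdef
    set s := L.sup' hL fa with hsdef
    have htpos : 0 < t := by
      obtain ⟨j₀, hj₀, hj₀e⟩ := L.exists_mem_eq_inf' hL fa
      rw [htdef, hj₀e]; exact hpos j₀ hj₀
    have hts : t ≤ s := by
      obtain ⟨j₀, hj₀⟩ := hL
      exact le_trans (Finset.inf'_le fa hj₀) (Finset.le_sup' fa hj₀)
    set L' := L.filter (fun j => fa j ≠ t) with hL'def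
    rcases L'.eq_empty_or_nonempty with hL'e | hL'ne
    · -- all norms equal t
      have hall : ∀ j ∈ L, fa j = t := by
        intro j hj
        by_contra h
        have : j ∈ L' := Finset.mem_filter.2 ⟨hj, h⟩
        rw [hL'e] at this; simp at this
      have hst : s = t := by
        apply le_antisymm
        · exact Finset.sup'_le hL fa fun j hj => le_of_eq (hall j hj)
        · exact hts
      have hzero : ∑ j ∈ L, (((‖a j‖ : ℝ) : 𝕜)⁻¹ * a j) • v j
          - ((t : ℝ) : 𝕜)⁻¹ • ∑ j ∈ L, a j • v j = 0 := by
        rw [Finset.smul_sum, ← Finset.sum_sub_distrib]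
        apply Finset.sum_eq_zero
        intro j hj
        rw [smul_smul, ← sub_smul]
        have h : ‖a j‖ = t := hall j hj
        rw [h]
        simp
      rw [hzero, hst]
      simp
    · -- main induction step
      set t' := L'.inf' hL'ne fa with ht'def
      have hL'sub : L' ⊆ L := Finset.filter_subset _ _
      have htt'le : t ≤ t' := by
        apply Finset.le_inf'
        intro j hj; exact Finset.inf'_le fa (hL'sub hj)
      have htt' : t < t' := by
        rcases lt_or_eq_of_le htt'le with h | h
        · exact h
        · exfalso
          obtain ⟨j₁, hj₁, hj₁e⟩ := L'.exists_mem_eq_inf' hL'ne fa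
          have : fa j₁ ≠ t := (Finset.mem_filter.1 hj₁).2
          rw [ht'def] at h
          exact this (by rw [← hj₁e, ← h])
      have ht'pos : 0 < t' := lt_trans htpos htt'
      have hL'filter : L' = L.filter (fun j => t' ≤ fa j) := by
        ext j
        simp only [hL'def, Finset.mem_filter]
        constructor
        · rintro ⟨hj, hne⟩
          exact ⟨hj, Finset.inf'_le fa (Finset.mem_filter.2 ⟨hj, hne⟩)⟩
        · rintro ⟨hj, hle⟩
          exact ⟨hj, fun h => absurd hle (by rw [h]; exact not_le.2 htt')⟩
      have hsup' : L'.sup' hL'ne fa = s := by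
        apply le_antisymm
        · exact Finset.sup'_le hL'ne fa fun j hj => Finset.le_sup' fa (hL'sub hj)
        · obtain ⟨j₂, hj₂, hj₂e⟩ := L.exists_mem_eq_sup' hL fa
          have hj₂L' : j₂ ∈ L' := by
            apply Finset.mem_filter.2
            refine ⟨hj₂, ?_⟩
            obtain ⟨j₃, hj₃⟩ := hL'ne
            have h1 : t' ≤ fa j₃ := Finset.inf'_le fa hj₃
            have h2 : fa j₃ ≤ s := Finset.le_sup' fa (hL'sub hj₃)
            intro h
            rw [← hj₂e] at h
            -- s = t, but t < t' ≤ fa j₃ ≤ s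
            linarith
          rw [hsdef, hj₂e]
          exact Finset.le_sup' fa hj₂L'
      have hcard' : L'.card < n := by
        rw [← hcard]
        apply Finset.card_lt_card
        constructor
        · exact hL'sub
        · intro hsub
          obtain ⟨j₀, hj₀, hj₀e⟩ := L.exists_mem_eq_inf' hL fa
          have : j₀ ∈ L' := hsub hj₀
          exact (Finset.mem_filter.1 this).2 hj₀e.symm
      have hM' : ∀ s₀ : ℝ, ‖∑ j ∈ L'.filter (fun j => s₀ ≤ fa j), a j • v j‖ ≤ M := by
        intro s₀
        have : L'.filter (fun j => s₀ ≤ fa j) = L.filter (fun j => max s₀ t' ≤ fa j) := by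
          rw [hL'filter, Finset.filter_filter]
          ext j
          simp only [Finset.mem_filter]
          constructor
          · rintro ⟨hj, h1, h2⟩; exact ⟨hj, max_le h2 h1⟩
          · rintro ⟨hj, h⟩; exact ⟨hj, le_trans (le_max_right _ _) h, le_trans (le_max_left _ _) h⟩
        rw [this]; exact hM _
      have IH := ih L'.card hcard' L' hL'ne rfl (fun j hj => hpos j (hL'sub hj)) hM'
      rw [← ht'def, hsup'] at IH
      -- algebra: split L into E and L'
      have hsum1 : ∀ (g : ℕ → X), ∑ j ∈ L, g j = ∑ j ∈ L', g j + ∑ j ∈ L.filter (fun j => fa j = t), g j := by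
        intro g
        rw [hL'def]
        rw [← Finset.sum_filter_add_sum_filter_not L (fun j => fa j = t) g]
        rw [add_comm]
      set E := L.filter (fun j => fa j = t) with hEdef
      have hE_theta : ∑ j ∈ E, (((‖a j‖ : ℝ) : 𝕜)⁻¹ * a j) • v j
          = ((t:ℝ) : 𝕜)⁻¹ • ∑ j ∈ E, a j • v j := by
        rw [Finset.smul_sum]
        apply Finset.sum_congr rfl
        intro j hj
        have h : ‖a j‖ = t := (Finset.mem_filter.1 hj).2
        rw [smul_smul, h]
      have hzL' : ‖∑ j ∈ L', a j • v j‖ ≤ M := by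
        rw [hL'filter]; exact hM t'
      -- key identity
      have hkey : ∑ j ∈ L, (((‖a j‖ : ℝ) : 𝕜)⁻¹ * a j) • v j
            - ((t : ℝ) : 𝕜)⁻¹ • ∑ j ∈ L, a j • v j
          = (∑ j ∈ L', (((‖a j‖ : ℝ) : 𝕜)⁻¹ * a j) • v j
              - ((t' : ℝ) : 𝕜)⁻¹ • ∑ j ∈ L', a j • v j)
            + ((((t' : ℝ) : 𝕜))⁻¹ - (((t : ℝ) : 𝕜))⁻¹) • ∑ j ∈ L', a j • v j := by
        rw [hsum1 (fun j => (((‖a j‖ : ℝ) : 𝕜)⁻¹ * a j) • v j), hsum1 (fun j => a j • v j)]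
        rw [hE_theta]
        rw [smul_add, sub_smul]
        abel
      rw [hkey]
      have hnrm : ‖((((t' : ℝ) : 𝕜))⁻¹ - (((t : ℝ) : 𝕜))⁻¹)‖ = 1/t - 1/t' := by
        rw [← RCLike.ofReal_inv, ← RCLike.ofReal_inv, ← RCLike.ofReal_sub, RCLike.norm_ofReal]
        rw [abs_of_nonpos]
        · rw [neg_sub]; rw [one_div, one_div]
        · simp only [sub_nonpos]
          exact inv_anti₀ htpos htt'le
      calc ‖_ + _‖ ≤ (1 / t' - 1 / s) * M + (1/t - 1/t') * ‖∑ j ∈ L', a j • v j‖ := by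
            apply norm_add_le_of_le IH
            rw [norm_smul, hnrm]
      _ ≤ (1 / t' - 1 / s) * M + (1/t - 1/t') * M := by
            apply add_le_add (le_refl _)
            apply mul_le_mul_of_nonneg_left hzL'
            have h1 : 1/t' ≤ 1/t := by
              rw [one_div, one_div]; exact inv_anti₀ htpos htt'le
            linarith
      _ = (1 / t - 1 / s) * M := by ring

lemma lemD (v : ℕ → X) (a : ℕ → 𝕜) (L : Finset ℕ) (t M : ℝ) (ht : 0 < t)
    (hta : ∀ j ∈ L, t ≤ ‖a j‖) (hM0 : 0 ≤ M)
    (hM : ∀ s : ℝ, ‖∑ j ∈ L.filter (fun j => s ≤ ‖a j‖), a j • v j‖ ≤ M) :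
    ‖∑ j ∈ L, (((‖a j‖ : ℝ) : 𝕜)⁻¹ * a j) • v j‖ ≤ 2 * M / t := by
  rcases L.eq_empty_or_nonempty with rfl | hL
  · simp; positivity
  have hpos : ∀ j ∈ L, 0 < ‖a j‖ := fun j hj => lt_of_lt_of_le ht (hta j hj)
  have H := lemD' v a M L.card L hL rfl hpos hM
  set t₀ := L.inf' hL fun j => ‖a j‖ with ht₀
  set s₀ := L.sup' hL fun j => ‖a j‖ with hs₀
  have htt₀ : t ≤ t₀ := Finset.le_inf' hL _ hta
  have ht₀pos : 0 < t₀ := lt_of_lt_of_le ht htt₀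
  have hs₀pos : 0 < s₀ := by
    obtain ⟨j₀, hj₀⟩ := hL
    exact lt_of_lt_of_le (hpos j₀ hj₀) (Finset.le_sup' (fun j => ‖a j‖) hj₀)
  have hzL : ‖∑ j ∈ L, a j • v j‖ ≤ M := by
    have : L.filter (fun j => (0:ℝ) ≤ ‖a j‖) = L :=
      Finset.filter_true_of_mem fun j _ => norm_nonneg _
    calc ‖∑ j ∈ L, a j • v j‖ = ‖∑ j ∈ L.filter (fun j => (0:ℝ) ≤ ‖a j‖), a j • v j‖ := by rw [this]
    _ ≤ M := hM 0
  calc ‖∑ j ∈ L, (((‖a j‖ : ℝ) : 𝕜)⁻¹ * a j) • v j‖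
      ≤ ‖∑ j ∈ L, (((‖a j‖ : ℝ) : 𝕜)⁻¹ * a j) • v j
          - ((t₀ : ℝ) : 𝕜)⁻¹ • ∑ j ∈ L, a j • v j‖
        + ‖((t₀ : ℝ) : 𝕜)⁻¹ • ∑ j ∈ L, a j • v j‖ := by
          have h := norm_add_le (∑ j ∈ L, (((‖a j‖ : ℝ) : 𝕜)⁻¹ * a j) • v j
            - ((t₀ : ℝ) : 𝕜)⁻¹ • ∑ j ∈ L, a j • v j) (((t₀ : ℝ) : 𝕜)⁻¹ • ∑ j ∈ L, a j • v j)
          rwa [sub_add_cancel] at h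
  _ ≤ (1/t₀ - 1/s₀) * M + (1/t₀) * M := by
      apply add_le_add H
      rw [norm_smul, ← RCLike.ofReal_inv, RCLike.norm_ofReal, abs_of_nonneg (by positivity), one_div]
      exact mul_le_mul_of_nonneg_left hzL (by positivity)
  _ ≤ 2 * M / t := by
      have h1 : 1/t₀ ≤ 1/t := by
        rw [one_div, one_div]; exact inv_anti₀ ht htt₀
      have h2 : 0 ≤ 1/s₀ := by positivity
      have h3 : (1/t₀ - 1/s₀) * M + (1/t₀) * M ≤ (1/t) * M + (1/t) * M := by
        apply add_le_add <;> apply mul_le_mul_of_nonneg_right _ hM0 <;> linarith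
      calc _ ≤ (1/t) * M + (1/t) * M := h3
      _ = 2 * M / t := by ring

lemma S_apply (b : GreedyBasis 𝕜 X) (A : Finset ℕ) (x : X) :
    b.S A x = ∑ j ∈ A, b.coeff j x • b.e j := by
  simp [GreedyBasis.S, ContinuousLinearMap.sum_apply]

lemma coeff_sum (b : GreedyBasis 𝕜 X) (B : Finset ℕ) (c : ℕ → 𝕜) (i : ℕ) :
    b.coeff i (∑ j ∈ B, c j • b.e j) = if i ∈ B then c i else 0 := by
  rw [map_sum]
  have : ∀ j ∈ B, b.coeff i (c j • b.e j) = if j = i then c i else 0 := by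
    intro j hj
    rw [map_smul, b.biorth]
    by_cases h : i = j <;> simp [h, eq_comm]
  rw [Finset.sum_congr rfl this, Finset.sum_ite_eq']

/-- Thresholding lemma, core version: G ⊆ range m. -/

lemma lemT0 (b : GreedyBasis 𝕜 X) (K : ℝ≥0) (hK : b.QuasiGreedy K)
    (y : X) (m : ℕ) (hy : ∀ j, j ∉ Finset.range m → b.coeff j y = 0)
    (G : Finset ℕ) (hGm : G ⊆ Finset.range m)
    (hG : ∀ i ∈ G, ∀ i' ∉ G, ‖b.coeff i' y‖ ≤ ‖b.coeff i y‖) :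
    ‖b.S G y‖ ≤ (K : ℝ) * ‖y‖ := by
  classical
  set a : ℕ → 𝕜 := fun j => b.coeff j y with ha
  set p : ℕ → ℕ := fun i => if i ∈ G then 0 else 1 with hp
  set key : ℕ → ℝᵒᵈ ×ₗ (ℕ ×ₗ ℕ) :=
    fun i => toLex (OrderDual.toDual ‖a i‖, toLex (p i, i)) with hkey
  have keyinj : Function.Injective key := by
    intro i j h
    have := congrArg (fun x => ((ofLex ((ofLex x).2)).2 : ℕ)) h
    simpa [hkey] using this
  set r : ℕ → ℕ → Prop := fun i i' => key i ≤ key i' with hr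
  haveI : DecidableRel r := Classical.decRel r
  haveI : IsTrans ℕ r := ⟨fun _ _ _ h h' => le_trans h h'⟩
  haveI : IsAntisymm ℕ r := ⟨fun i j h h' => keyinj (le_antisymm h h')⟩
  haveI : IsTotal ℕ r := ⟨fun i j => le_total (key i) (key j)⟩
  have hr_norm : ∀ i i', r i i' → ‖a i'‖ ≤ ‖a i‖ := by
    intro i i' h
    rcases (Prod.Lex.le_iff).1 h with h1 | ⟨h1, _⟩
    · exact le_of_lt h1
    · exact le_of_eq (congrArg OrderDual.ofDual h1).symm
  have hGfirst : ∀ i ∈ G, ∀ i', i' ∉ G → ¬ r i' i := by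
    intro i hi i' hi' hcon
    rcases (Prod.Lex.le_iff).1 hcon with h1 | ⟨h1, h2⟩
    · exact absurd (hG i hi i' hi') (not_le.2 h1)
    · rcases (Prod.Lex.le_iff).1 h2 with h3 | ⟨h3, _⟩
      · simp only [hkey, hp, ofLex_toLex, if_pos hi, if_neg hi'] at h3; omega
      · simp only [hkey, hp, ofLex_toLex, if_pos hi, if_neg hi'] at h3; omega
  set l : List ℕ := (Finset.range m).sort r with hl
  have hlen : l.length = m := by rw [hl, Finset.length_sort, Finset.card_range]
  have hsorted : l.Pairwise r := Finset.pairwise_sort _ r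
  have hnodup : l.Nodup := Finset.sort_nodup _ r
  have hmeml : ∀ j, j ∈ l ↔ j < m := by
    intro j; rw [hl, Finset.mem_sort, Finset.mem_range]
  set f : ℕ → ℕ := fun k => if h : k < m then l.get ⟨k, by rwa [hlen]⟩ else k with hf
  have hflt : ∀ k, k < m → f k < m := by
    intro k hk
    rw [hf]; simp only [dif_pos hk]
    exact (hmeml _).1 (List.get_mem _ _)
  have hfinj : Function.Injective f := by
    intro k k' h
    by_cases h1 : k < m <;> by_cases h2 : k' < m
    · rw [hf] at h; simp only [dif_pos h1, dif_pos h2] at h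
      have := (List.Nodup.get_inj_iff hnodup).1 h
      exact congrArg Fin.val this
    · exfalso
      have h3 := hflt k h1
      have h4 : f k' = k' := by rw [hf]; simp only [dif_neg h2]
      rw [h4] at h; omega
    · exfalso
      have h3 := hflt k' h2
      have h4 : f k = k := by rw [hf]; simp only [dif_neg h1]
      rw [h4] at h; omega
    · rw [hf] at h; simpa only [dif_neg h1, dif_neg h2] using h
  have hfsurj : Function.Surjective f := by
    intro j
    by_cases hj : j < m
    · obtain ⟨k, hk⟩ := List.mem_iff_get.1 ((hmeml j).2 hj)
      refine ⟨k.1, ?_⟩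
      have hks : k.1 < m := hlen ▸ k.2
      rw [hf]; simp only [dif_pos hks]
      rw [Fin.eta]; exact hk
    · exact ⟨j, by rw [hf]; simp only [dif_neg hj]⟩
  set π : Equiv.Perm ℕ := Equiv.ofBijective f ⟨hfinj, hfsurj⟩ with hπ
  have hπapp : ∀ k, π k = f k := fun k => rfl
  have hzero : ∀ k, ¬ k < m → a k = 0 := by
    intro k hk; exact hy k (by simpa [Finset.mem_range] using hk)
  have hgreedy : b.Greedy y π := by
    intro k
    rw [hπapp, hπapp]
    by_cases h2 : k + 1 < m
    · have h1 : k < m := by omega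
      have hrel : r (f k) (f (k+1)) := by
        rw [hf]; simp only [dif_pos h1, dif_pos h2]
        exact hsorted.rel_get_of_lt (by simp [Fin.lt_def])
      exact hr_norm _ _ hrel
    · have : f (k+1) = k + 1 := by rw [hf]; simp only [dif_neg h2]
      rw [this]
      rw [show b.coeff (k+1) y = 0 from hzero _ h2]
      simp
  set N := G.card with hN
  have hNm : N ≤ m := by
    rw [hN, ← Finset.card_range m]; exact Finset.card_le_card hGm
  set P : Finset ℕ := (Finset.range m).filter (fun k => f k ∈ G) with hP
  have hPdc : ∀ k ∈ P, ∀ k' ≤ k, k' ∈ P := by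
    intro k hk k' hk'
    obtain ⟨hkm, hkG⟩ := Finset.mem_filter.1 hk
    have hkm' : k' < m := lt_of_le_of_lt (by omega) (Finset.mem_range.1 hkm)
    refine Finset.mem_filter.2 ⟨Finset.mem_range.2 hkm', ?_⟩
    by_contra hcon
    rcases eq_or_lt_of_le hk' with rfl | hlt
    · exact hcon hkG
    · have hrel : r (f k') (f k) := by
        rw [hf]; simp only [dif_pos hkm', dif_pos (Finset.mem_range.1 hkm)]
        exact hsorted.rel_get_of_lt (by simp [Fin.lt_def]; omega)
      exact hGfirst (f k) hkG (f k') hcon hrel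
  have hPimg : P.image f = G := by
    apply Finset.Subset.antisymm
    · intro j hj
      obtain ⟨k, hk, rfl⟩ := Finset.mem_image.1 hj
      exact (Finset.mem_filter.1 hk).2
    · intro j hj
      have hjm : j < m := Finset.mem_range.1 (hGm hj)
      obtain ⟨k, hk⟩ := hfsurj j
      have hkm : k < m := by
        by_contra h
        rw [hf] at hk; simp only [dif_neg h] at hk; omega
      exact Finset.mem_image.2 ⟨k, Finset.mem_filter.2 ⟨Finset.mem_range.2 hkm, hk ▸ hj⟩, hk⟩
  have hPcard : P.card = N := by
    rw [hN, ← hPimg, Finset.card_image_of_injective _ hfinj]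
  have hPrange : P = Finset.range N := by
    ext k
    simp only [Finset.mem_range]
    constructor
    · intro hk
      have hsub : Finset.range (k+1) ⊆ P := by
        intro k' hk'
        exact hPdc k hk k' (by simpa [Finset.mem_range, Nat.lt_succ_iff] using hk')
      have := Finset.card_le_card hsub
      rw [Finset.card_range, hPcard] at this
      omega
    · intro hk
      by_contra hcon
      have hsub : P ⊆ Finset.range k := by
        intro k' hk'
        rw [Finset.mem_range]
        by_contra h
        exact hcon (hPdc k' hk' k (by omega))
      have := Finset.card_le_card hsub
      rw [Finset.card_range, hPcard] at this
      omega
  have himg : (Finset.range N).image (fun k => π k) = G := by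
    rw [← hPrange]
    simpa only [hπapp] using hPimg
  have hGN : b.G N π y = b.S G y := by
    rw [GreedyBasis.G, S_apply, ← himg]
    rw [Finset.sum_image]
    intro i _ j _ h
    exact π.injective h
  have := hK y π hgreedy N
  rwa [hGN] at this

/-- Thresholding lemma. -/

lemma lemT (b : GreedyBasis 𝕜 X) (K : ℝ≥0) (hK : b.QuasiGreedy K)
    (y : X) (m : ℕ) (hy : ∀ j, j ∉ Finset.range m → b.coeff j y = 0)
    (G : Finset ℕ)
    (hG : ∀ i ∈ G, ∀ i' ∉ G, ‖b.coeff i' y‖ ≤ ‖b.coeff i y‖) :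
    ‖b.S G y‖ ≤ (K : ℝ) * ‖y‖ := by
  classical
  have hSeq : b.S G y = b.S (G ∩ Finset.range m) y := by
    rw [S_apply, S_apply]
    apply (Finset.sum_subset (Finset.inter_subset_left)  _).symm
    intro j hj hj'
    have : j ∉ Finset.range m := by
      intro h; exact hj' (Finset.mem_inter.2 ⟨hj, h⟩)
    rw [hy j this, zero_smul]
  rw [hSeq]
  apply lemT0 b K hK y m hy _ (Finset.inter_subset_right)
  intro i hi i' hi'
  obtain ⟨hiG, _⟩ := Finset.mem_inter.1 hi
  by_cases h : i' ∈ G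
  · have : i' ∉ Finset.range m := by
      intro hcon; exact hi' (Finset.mem_inter.2 ⟨h, hcon⟩)
    rw [hy i' this]
    simp
  · exact hG i hiG i' h

lemma coeff_bound (b : GreedyBasis 𝕜 X) (K : ℝ≥0) (hK : b.QuasiGreedy K)
    (y : X) (m : ℕ) (hy : ∀ j, j ∉ Finset.range m → b.coeff j y = 0)
    (j : ℕ) : ‖b.coeff j y‖ ≤ 2 * (K : ℝ) * ‖y‖ := by
  classical
  by_cases hj : b.coeff j y = 0
  · rw [hj]; simp; positivity
  set G₂ : Finset ℕ := (Finset.range m).filter (fun i => ‖b.coeff j y‖ < ‖b.coeff i y‖) with hG₂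
  have hjG₂ : j ∉ G₂ := by
    intro h
    exact absurd (Finset.mem_filter.1 h).2 (lt_irrefl _)
  have hout : ∀ i', i' ∉ G₂ → ‖b.coeff i' y‖ ≤ ‖b.coeff j y‖ := by
    intro i' hi'
    by_cases h : i' ∈ Finset.range m
    · by_contra hcon
      exact hi' (Finset.mem_filter.2 ⟨h, not_le.1 hcon⟩)
    · rw [hy i' h]; simp
  have hT2 : ‖b.S G₂ y‖ ≤ (K:ℝ) * ‖y‖ := by
    apply lemT b K hK y m hy
    intro i hi i' hi'
    exact le_trans (hout i' hi') (le_of_lt (Finset.mem_filter.1 hi).2)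
  have hT1 : ‖b.S (insert j G₂) y‖ ≤ (K:ℝ) * ‖y‖ := by
    apply lemT b K hK y m hy
    intro i hi i' hi'
    have hi'2 : i' ∉ G₂ := fun h => hi' (Finset.mem_insert_of_mem h)
    rcases Finset.mem_insert.1 hi with rfl | hi
    · exact hout i' hi'2
    · exact le_trans (hout i' hi'2) (le_of_lt (Finset.mem_filter.1 hi).2)
  have hdiff : b.S (insert j G₂) y - b.S G₂ y = b.coeff j y • b.e j := by
    rw [S_apply, S_apply, Finset.sum_insert hjG₂]
    abel
  have : ‖b.coeff j y‖ = ‖b.coeff j y • b.e j‖ := by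
    rw [norm_smul, b.norm_e, mul_one]
  rw [this, ← hdiff]
  calc ‖_ - _‖ ≤ ‖b.S (insert j G₂) y‖ + ‖b.S G₂ y‖ := norm_sub_le _ _
  _ ≤ (K:ℝ) * ‖y‖ + (K:ℝ) * ‖y‖ := add_le_add hT1 hT2
  _ = 2 * (K:ℝ) * ‖y‖ := by ring

lemma one_le_K (b : GreedyBasis 𝕜 X) (K : ℝ≥0) (hK : b.QuasiGreedy K) :
    1 ≤ (K : ℝ) := by
  have hgreedy : b.Greedy (b.e 0) (Equiv.refl ℕ) := by
    intro k
    simp only [Equiv.refl_apply, b.biorth]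
    rw [if_neg (by omega : ¬ k + 1 = 0)]
    simp
  have h := hK (b.e 0) (Equiv.refl ℕ) hgreedy 1
  have hG1 : b.G 1 (Equiv.refl ℕ) (b.e 0) = b.e 0 := by
    rw [GreedyBasis.G]
    simp [b.biorth]
  rw [hG1, b.norm_e] at h
  simpa using h

lemma mainP (b : GreedyBasis 𝕜 X) (K : ℝ≥0) (hK : b.QuasiGreedy K)
    (N : ℕ) (hN : 2 ≤ N) (y : X) (m : ℕ)
    (hy : ∀ j, j ∉ Finset.range m → b.coeff j y = 0)
    (A : Finset ℕ) (hA : A.card ≤ N) :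
    ‖b.S A y‖ ≤ (8*(K:ℝ)^2*((Nat.log 2 N : ℝ) + 1) + 2*(K:ℝ)) * ‖y‖ := by
  classical
  have K1 : 1 ≤ (K : ℝ) := one_le_K b K hK
  have hKpos : 0 < (K : ℝ) := lt_of_lt_of_le one_pos K1
  by_cases hy0 : y = 0
  · rw [hy0]
    simp only [map_zero, norm_zero]
    positivity
  have hynorm : 0 < ‖y‖ := norm_pos_iff.2 hy0
  set a : ℕ → 𝕜 := fun j => b.coeff j y with hadef
  set R : ℝ := 2 * (K:ℝ) * ‖y‖ with hRdef
  have hR : 0 < R := by positivity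
  have haR : ∀ j, ‖a j‖ ≤ R := fun j => coeff_bound b K hK y m hy j
  set m' : ℕ := Nat.log 2 N + 1 with hm'def
  have hNpow : (N:ℝ) < 2^m' := by
    have := Nat.lt_pow_succ_log_self (by norm_num : 1 < 2) N
    exact_mod_cast this
  set D : ℕ → Finset ℕ := fun k => A.filter (fun j => R/2^k < ‖a j‖) with hD
  set g : ℕ → X := fun k => ∑ j ∈ D k, a j • b.e j with hg
  have hg0 : g 0 = 0 := by
    rw [hg, hD]
    simp only [pow_zero, div_one]
    rw [Finset.filter_false_of_mem (fun j _ => not_lt.2 (haR j)), Finset.sum_empty]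
  have htele : ∑ k ∈ Finset.range m', (g (k+1) - g k) = g m' := by
    rw [Finset.sum_range_sub g m', hg0, sub_zero]
  have hsplit : b.S A y = g m' + ∑ j ∈ A.filter (fun j => ¬ (R/2^m' < ‖a j‖)), a j • b.e j := by
    rw [S_apply]
    rw [← Finset.sum_filter_add_sum_filter_not A (fun j => R/2^m' < ‖a j‖) (fun j => a j • b.e j)]
  -- tail bound
  have htail : ‖∑ j ∈ A.filter (fun j => ¬ (R/2^m' < ‖a j‖)), a j • b.e j‖ ≤ 2*(K:ℝ)*‖y‖ := by
    set T := A.filter (fun j => ¬ (R/2^m' < ‖a j‖)) with hT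
    calc ‖∑ j ∈ T, a j • b.e j‖ ≤ ∑ j ∈ T, ‖a j • b.e j‖ := norm_sum_le _ _
    _ ≤ ∑ _j ∈ T, R/2^m' := by
        apply Finset.sum_le_sum
        intro j hj
        rw [norm_smul, b.norm_e, mul_one]
        exact not_lt.1 (Finset.mem_filter.1 hj).2
    _ = (T.card : ℝ) * (R/2^m') := by rw [Finset.sum_const, nsmul_eq_mul]
    _ ≤ (N : ℝ) * (R/2^m') := by
        apply mul_le_mul_of_nonneg_right _ (by positivity)
        exact_mod_cast le_trans (Finset.card_filter_le A _) hA
    _ ≤ (2^m' : ℝ) * (R/2^m') := mul_le_mul_of_nonneg_right hNpow.le (by positivity)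
    _ = R := by field_simp
    _ = 2*(K:ℝ)*‖y‖ := hRdef
  -- level bound
  have hlevel : ∀ k, ‖g (k+1) - g k‖ ≤ 8*(K:ℝ)^2*‖y‖ := by
    intro k
    set t : ℝ := R/2^(k+1) with htdef
    have ht : 0 < t := by positivity
    have h2t : 2*t = R/2^k := by
      rw [htdef, pow_succ]
      field_simp
    have hDsub : D k ⊆ D (k+1) := by
      intro j hj
      simp only [hD, Finset.mem_filter] at hj ⊢
      refine ⟨hj.1, lt_of_le_of_lt ?_ hj.2⟩
      apply div_le_div_of_nonneg_left hR.le (by positivity)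
      exact pow_le_pow_right₀ one_le_two (by omega)
    have hgdiff : g (k+1) - g k = ∑ j ∈ D (k+1) \ D k, a j • b.e j :=
      (Finset.sum_sdiff_eq_sub hDsub).symm
    set Ak := D (k+1) \ D k with hAk
    have hAkprop : ∀ j ∈ Ak, t < ‖a j‖ ∧ ‖a j‖ ≤ 2*t := by
      intro j hj
      obtain ⟨h1, h2⟩ := Finset.mem_sdiff.1 hj
      refine ⟨(Finset.mem_filter.1 h1).2, ?_⟩
      rw [h2t]
      have hjA : j ∈ A := (Finset.mem_filter.1 h1).1
      by_contra hcon
      exact h2 (Finset.mem_filter.2 ⟨hjA, not_le.1 hcon⟩)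
    set L := (Finset.range m).filter (fun j => t < ‖a j‖ ∧ ‖a j‖ ≤ 2*t) with hL
    have hAkL : Ak ⊆ L := by
      intro j hj
      refine Finset.mem_filter.2 ⟨?_, hAkprop j hj⟩
      by_contra h
      have h0 : a j = 0 := hy j h
      have h2 := (hAkprop j hj).1
      rw [h0] at h2
      simp at h2
      linarith
    have hM : ∀ s : ℝ, ‖∑ j ∈ L.filter (fun j => s ≤ ‖a j‖), a j • b.e j‖ ≤ 2*(K:ℝ)*‖y‖ := by
      intro s
      by_cases hs : s ≤ 2*t
      · set C₁ := (Finset.range m).filter (fun j => t < ‖a j‖ ∧ s ≤ ‖a j‖) with hC₁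
        set C₂ := (Finset.range m).filter (fun j => 2*t < ‖a j‖) with hC₂
        have hC21 : C₂ ⊆ C₁ := by
          intro j hj
          obtain ⟨h1, h2⟩ := Finset.mem_filter.1 hj
          exact Finset.mem_filter.2 ⟨h1, lt_trans (by linarith) h2, by linarith⟩
        have heq : L.filter (fun j => s ≤ ‖a j‖) = C₁ \ C₂ := by
          ext j
          simp only [hL, hC₁, hC₂, Finset.mem_filter, Finset.mem_sdiff]
          constructor
          · rintro ⟨⟨hjm, h1, h2⟩, h3⟩
            exact ⟨⟨hjm, h1, h3⟩, fun h => absurd h.2 (not_lt.2 h2)⟩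
          · rintro ⟨⟨hjm, h1, h3⟩, h4⟩
            have h5 : ‖a j‖ ≤ 2*t := by
              by_contra h
              exact h4 ⟨hjm, not_le.1 h⟩
            exact ⟨⟨hjm, h1, h5⟩, h3⟩
        rw [heq, Finset.sum_sdiff_eq_sub hC21, ← S_apply, ← S_apply]
        have hT1 : ‖b.S C₁ y‖ ≤ (K:ℝ)*‖y‖ := by
          apply lemT b K hK y m hy
          intro i hi i' hi'
          obtain ⟨_, hi1, hi2⟩ := Finset.mem_filter.1 hi
          by_cases h : i' ∈ Finset.range m
          · by_cases h2 : t < ‖a i'‖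
            · have : ¬ s ≤ ‖a i'‖ := fun hcon => hi' (Finset.mem_filter.2 ⟨h, h2, hcon⟩)
              exact le_trans (not_le.1 this).le hi2
            · exact le_trans (not_lt.1 h2) hi1.le
          · rw [hy i' h]; simp
        have hT2 : ‖b.S C₂ y‖ ≤ (K:ℝ)*‖y‖ := by
          apply lemT b K hK y m hy
          intro i hi i' hi'
          have hi1 := (Finset.mem_filter.1 hi).2
          by_cases h : i' ∈ Finset.range m
          · have : ¬ 2*t < ‖a i'‖ := fun hcon => hi' (Finset.mem_filter.2 ⟨h, hcon⟩)
            exact le_trans (not_lt.1 this) hi1.le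
          · rw [hy i' h]; simp
        calc ‖b.S C₁ y - b.S C₂ y‖ ≤ ‖b.S C₁ y‖ + ‖b.S C₂ y‖ := norm_sub_le _ _
        _ ≤ (K:ℝ)*‖y‖ + (K:ℝ)*‖y‖ := add_le_add hT1 hT2
        _ = 2*(K:ℝ)*‖y‖ := by ring
      · have hempty : L.filter (fun j => s ≤ ‖a j‖) = ∅ := by
          apply Finset.filter_false_of_mem
          intro j hj
          have := (Finset.mem_filter.1 hj).2.2
          push_neg at hs
          exact not_le.2 (lt_of_le_of_lt this hs)
        rw [hempty]
        simp
        positivity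
    have hta : ∀ j ∈ L, t ≤ ‖a j‖ := fun j hj => ((Finset.mem_filter.1 hj).2.1).le
    have hw := lemD b.e a L t (2*(K:ℝ)*‖y‖) ht hta (by positivity) hM
    set w := ∑ j ∈ L, (((‖a j‖ : ℝ) : 𝕜)⁻¹ * a j) • b.e j with hwdef
    have hcoeffw : ∀ i, b.coeff i w = if i ∈ L then ((‖a i‖:ℝ):𝕜)⁻¹ * a i else 0 :=
      fun i => coeff_sum b L _ i
    have hwsupp : ∀ j, j ∉ Finset.range m → b.coeff j w = 0 := by
      intro j hj
      rw [hcoeffw, if_neg]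
      intro h
      exact hj (Finset.mem_filter.1 h).1
    have hCM : ∀ F ⊆ Ak, ‖∑ j ∈ F, (((‖a j‖:ℝ):𝕜)⁻¹ * a j) • b.e j‖ ≤ (K:ℝ)*‖w‖ := by
      intro F hF
      have hFL : F ⊆ L := hF.trans hAkL
      have hnorm1 : ∀ i ∈ L, ‖b.coeff i w‖ = 1 := by
        intro i hiL
        have hpos : 0 < ‖a i‖ := lt_trans ht (Finset.mem_filter.1 hiL).2.1
        rw [hcoeffw, if_pos hiL, norm_mul, norm_inv, RCLike.norm_ofReal, abs_norm]
        rw [inv_mul_cancel₀ (ne_of_gt hpos)]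
      have hSF : b.S F w = ∑ j ∈ F, (((‖a j‖:ℝ):𝕜)⁻¹ * a j) • b.e j := by
        rw [S_apply]
        apply Finset.sum_congr rfl
        intro j hj
        rw [hcoeffw, if_pos (hFL hj)]
      rw [← hSF]
      apply lemT b K hK w m hwsupp
      intro i hi i' hi'
      rw [hnorm1 i (hFL hi)]
      by_cases h : i' ∈ L
      · rw [hnorm1 i' h]
      · rw [hcoeffw, if_neg h]; simp
    have hlemC := lemC (𝕜 := 𝕜) (fun j => (((‖a j‖:ℝ):𝕜)⁻¹ * a j) • b.e j) Ak
      (fun j => ‖a j‖) (2*t) ((K:ℝ)*‖w‖) (by positivity)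
      (fun j _ => norm_nonneg _) (fun j hj => (hAkprop j hj).2) hCM
    have hsum_eq : ∑ j ∈ Ak, ((‖a j‖:ℝ):𝕜) • ((((‖a j‖:ℝ):𝕜)⁻¹ * a j) • b.e j)
        = ∑ j ∈ Ak, a j • b.e j := by
      apply Finset.sum_congr rfl
      intro j hj
      rw [smul_smul]
      have hpos : 0 < ‖a j‖ := lt_trans ht (hAkprop j hj).1
      have hanz : ((‖a j‖:ℝ):𝕜) ≠ 0 := by
        rw [RCLike.ofReal_ne_zero]
        exact ne_of_gt hpos
      rw [mul_inv_cancel_left₀ hanz]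
    rw [hgdiff, ← hsum_eq]
    calc ‖∑ j ∈ Ak, ((‖a j‖:ℝ):𝕜) • ((((‖a j‖:ℝ):𝕜)⁻¹ * a j) • b.e j)‖
        ≤ 2*t*((K:ℝ)*‖w‖) := hlemC
    _ ≤ 2*t*((K:ℝ)*(2*(2*(K:ℝ)*‖y‖)/t)) := by
        apply mul_le_mul_of_nonneg_left _ (by positivity)
        exact mul_le_mul_of_nonneg_left hw (by positivity)
    _ = 8*(K:ℝ)^2*‖y‖ := by
        field_simp
        ring
  -- assemble
  rw [hsplit]
  calc ‖g m' + _‖ ≤ ‖g m'‖ + ‖∑ j ∈ A.filter (fun j => ¬ (R/2^m' < ‖a j‖)), a j • b.e j‖ :=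
        norm_add_le _ _
  _ ≤ (m' : ℝ) * (8*(K:ℝ)^2*‖y‖) + 2*(K:ℝ)*‖y‖ := by
      apply add_le_add _ htail
      rw [← htele]
      calc ‖∑ k ∈ Finset.range m', (g (k+1) - g k)‖
          ≤ ∑ k ∈ Finset.range m', ‖g (k+1) - g k‖ := norm_sum_le _ _
      _ ≤ ∑ _k ∈ Finset.range m', 8*(K:ℝ)^2*‖y‖ := Finset.sum_le_sum (fun k _ => hlevel k)
      _ = (m' : ℝ) * (8*(K:ℝ)^2*‖y‖) := by rw [Finset.sum_const, nsmul_eq_mul, Finset.card_range]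
  _ = (8*(K:ℝ)^2*((Nat.log 2 N : ℝ) + 1) + 2*(K:ℝ)) * ‖y‖ := by
      rw [hm'def]
      push_cast
      ring

end GreedyBasisProof

/-- For a quasi-greedy basis there is `c > 0` with `k_N ≤ c log N` for all `N ≥ 2`,
i.e. `‖S_A‖ ≤ c log N` whenever `|A| ≤ N`. -/
theorem stmt9 (b : GreedyBasis 𝕜 X) (K : ℝ≥0) (hK : b.QuasiGreedy K) :
    ∃ c : ℝ, 0 < c ∧ ∀ N : ℕ, 2 ≤ N → ∀ A : Finset ℕ, A.card ≤ N →
      ‖b.S A‖ ≤ c * Real.log N := by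
  have K1 : 1 ≤ (K:ℝ) := GreedyBasisProof.one_le_K b K hK
  have hlog2 : 0 < Real.log 2 := Real.log_pos one_lt_two
  refine ⟨(16*(K:ℝ)^2 + 2*(K:ℝ)) / Real.log 2, ?_, ?_⟩
  · apply div_pos _ hlog2
    nlinarith
  intro N hN A hA
  set CL : ℝ := 8*(K:ℝ)^2*((Nat.log 2 N : ℝ) + 1) + 2*(K:ℝ) with hCL
  have hCL0 : 0 ≤ CL := by positivity
  have key : ∀ x : X, ‖b.S A x‖ ≤ CL * ‖x‖ := by
    intro x
    set n₀ := (A.sup id) + 1 with hn₀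
    have hterm : ∀ n, n₀ ≤ n →
        ‖b.S A x‖ ≤ CL * ‖∑ j ∈ Finset.range n, b.coeff j x • b.e j‖ := by
      intro n hn
      set y := ∑ j ∈ Finset.range n, b.coeff j x • b.e j with hy
      have hAsub : A ⊆ Finset.range n := by
        intro j hj
        rw [Finset.mem_range]
        have : j ≤ A.sup id := Finset.le_sup (f := id) hj
        omega
      have hsupp : ∀ j, j ∉ Finset.range n → b.coeff j y = 0 := by
        intro j hj
        rw [hy, GreedyBasisProof.coeff_sum, if_neg hj]
      have hSeq : b.S A y = b.S A x := by
        rw [GreedyBasisProof.S_apply, GreedyBasisProof.S_apply]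
        apply Finset.sum_congr rfl
        intro j hj
        rw [hy, GreedyBasisProof.coeff_sum, if_pos (hAsub hj)]
      rw [← hSeq]
      exact GreedyBasisProof.mainP b K hK N hN y n hsupp A hA
    have hlim : Tendsto (fun n => CL * ‖∑ j ∈ Finset.range n, b.coeff j x • b.e j‖)
        atTop (nhds (CL * ‖x‖)) :=
      Tendsto.const_mul CL ((continuous_norm.tendsto x).comp (b.expansion x))
    exact ge_of_tendsto hlim (Filter.eventually_atTop.2 ⟨n₀, hterm⟩)
  have hnat : (Nat.log 2 N : ℝ) * Real.log 2 ≤ Real.log N := by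
    have h1 : (2:ℕ)^(Nat.log 2 N) ≤ N := Nat.pow_log_le_self 2 (by omega)
    have h2 : ((2:ℝ))^(Nat.log 2 N) ≤ (N:ℝ) := by exact_mod_cast h1
    calc (Nat.log 2 N : ℝ) * Real.log 2 = Real.log ((2:ℝ)^(Nat.log 2 N)) :=
          (Real.log_pow _ _).symm
    _ ≤ Real.log N := Real.log_le_log (by positivity) h2
  have hlogN : Real.log 2 ≤ Real.log N := by
    apply Real.log_le_log two_pos
    exact_mod_cast hN
  have hineq : CL ≤ ((16*(K:ℝ)^2 + 2*(K:ℝ)) / Real.log 2) * Real.log N := by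
    rw [hCL, div_mul_eq_mul_div, le_div_iff₀ hlog2]
    nlinarith [hlogN, hnat, sq_nonneg ((K:ℝ))]
  have hc0 : 0 ≤ ((16*(K:ℝ)^2 + 2*(K:ℝ)) / Real.log 2) * Real.log N := le_trans hCL0 hineq
  apply ContinuousLinearMap.opNorm_le_bound _ hc0
  intro x
  exact le_trans (key x) (mul_le_mul_of_nonneg_right hineq (norm_nonneg x))
end
end

section
/- Let (e_j) be a normalized quasi-greedy basis of X. Then there exists c > 0 such that for all N, k ≥ 1 and all x ∈ X, ‖x − G_{N+k}(x)‖ ≤ c·(1 + h_r(N)/h_l(k))·σ_N(x). -/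
open Finset NNReal ENNReal Filter

noncomputable section

variable (𝕜 X : Type*) [RCLike 𝕜] [NormedAddCommGroup X] [NormedSpace 𝕜 X]

variable {𝕜 X}

namespace GreedyBasis

variable (b : GreedyBasis 𝕜 X)


lemma S_apply' (A : Finset ℕ) (x : X) : b.S A x = ∑ j ∈ A, b.coeff j x • b.e j := by
  simp [S, ContinuousLinearMap.sum_apply]

lemma coeff_sum' (A : Finset ℕ) (c : ℕ → 𝕜) (i : ℕ) :
    b.coeff i (∑ j ∈ A, c j • b.e j) = if i ∈ A then c i else 0 := by
  rw [map_sum]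
  have : ∀ j ∈ A, b.coeff i (c j • b.e j) = if i = j then c j else 0 := by
    intro j _
    rw [map_smul, b.biorth i j]
    by_cases h : i = j <;> simp [h]
  rw [Finset.sum_congr rfl this, Finset.sum_ite_eq]

lemma coeff_tendsto' (x : X) : Tendsto (fun j => ‖b.coeff j x‖) atTop (nhds 0) := by
  have h := b.expansion x
  have h2 : Tendsto (fun j : ℕ => (∑ i ∈ Finset.range (j + 1), b.coeff i x • b.e i) -
      ∑ i ∈ Finset.range j, b.coeff i x • b.e i) atTop (nhds (x - x)) :=
    (h.comp (tendsto_add_atTop_nat 1)).sub h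
  rw [sub_self] at h2
  have h3 : (fun j : ℕ => (∑ i ∈ Finset.range (j + 1), b.coeff i x • b.e i) -
      ∑ i ∈ Finset.range j, b.coeff i x • b.e i) = fun j => b.coeff j x • b.e j := by
    funext j; rw [Finset.sum_range_succ]; abel
  rw [h3] at h2
  have h4 := h2.norm
  simp only [norm_smul, b.norm_e, mul_one, norm_zero] at h4
  exact h4

lemma finite_ge' (x : X) {s : ℝ} (hs : 0 < s) : {j : ℕ | s ≤ ‖b.coeff j x‖}.Finite := by
  have h := (b.coeff_tendsto' x).eventually_lt_const hs
  obtain ⟨n, hn⟩ := eventually_atTop.1 h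
  refine (Set.finite_Iio n).subset fun j hj => ?_
  have hj' : s ≤ ‖b.coeff j x‖ := hj
  by_contra hcon
  exact absurd hj' (not_le.2 (hn j (not_lt.1 hcon)))

lemma eq_zero_of_coeff' (x : X) (h : ∀ j, b.coeff j x = 0) : x = 0 := by
  have h2 := b.expansion x
  simp only [h, zero_smul, Finset.sum_const_zero] at h2
  exact tendsto_nhds_unique h2 tendsto_const_nhds

lemma exists_sorted (ρ : ℕ → ℝ) : ∀ (n : ℕ) (Γ : Finset ℕ), Γ.card = n →
    ∃ l : List ℕ, l.Nodup ∧ l.toFinset = Γ ∧ l.Chain' (fun i j => ρ j ≤ ρ i) := by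
  intro n
  induction n with
  | zero =>
    intro Γ h
    exact ⟨[], by simp, by simp [(Finset.card_eq_zero.1 h)], List.isChain_nil⟩
  | succ m ih =>
    intro Γ h
    have hne : Γ.Nonempty := Finset.card_pos.1 (by omega)
    obtain ⟨i, hiΓ, hmax⟩ := Finset.exists_max_image Γ ρ hne
    obtain ⟨l, hnd, htf, hch⟩ := ih (Γ.erase i) (by rw [Finset.card_erase_of_mem hiΓ]; omega)
    refine ⟨i :: l, ?_, ?_, ?_⟩
    · rw [List.nodup_cons]
      refine ⟨fun hmem => ?_, hnd⟩
      have : i ∈ Γ.erase i := htf ▸ List.mem_toFinset.2 hmem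
      simp at this
    · rw [List.toFinset_cons, htf, Finset.insert_erase hiΓ]
    · show List.IsChain _ _
      rw [List.isChain_cons]
      refine ⟨fun j hj => ?_, hch⟩
      apply hmax
      have : j ∈ l.toFinset := List.mem_toFinset.2 (List.mem_of_mem_head? hj)
      rw [htf] at this
      exact Finset.mem_of_mem_erase this


lemma S_norm_le_fin (K : ℝ≥0) (hK : b.QuasiGreedy K) (y : X) (n : ℕ)
    (hy : ∀ j, n ≤ j → b.coeff j y = 0) (Γ : Finset ℕ)
    (hΓ : ∀ i ∉ Γ, ∀ j ∈ Γ, ‖b.coeff i y‖ ≤ ‖b.coeff j y‖) :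
    ‖b.S Γ y‖ ≤ K * ‖y‖ := by
  classical
  set ρ : ℕ → ℝ := fun j => ‖b.coeff j y‖ with hρ
  set F : Finset ℕ := Γ ∪ Finset.range n with hF
  have hΓF : Γ ⊆ F := Finset.subset_union_left
  obtain ⟨l₁, hnd₁, htf₁, hch₁⟩ := exists_sorted ρ Γ.card Γ rfl
  obtain ⟨l₂, hnd₂, htf₂, hch₂⟩ := exists_sorted ρ (F \ Γ).card (F \ Γ) rfl
  set L : List ℕ := l₁ ++ l₂ with hL
  have hmem₁ : ∀ a, a ∈ l₁ ↔ a ∈ Γ := fun a => by rw [← htf₁, List.mem_toFinset]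
  have hmem₂ : ∀ a, a ∈ l₂ ↔ a ∈ F \ Γ := fun a => by rw [← htf₂, List.mem_toFinset]
  have hndL : L.Nodup := by
    rw [hL, List.nodup_append]
    refine ⟨hnd₁, hnd₂, fun a ha a' hb hab => ?_⟩
    subst hab
    have h1 := (hmem₁ a).1 ha
    have h2 := (hmem₂ a).1 hb
    exact (Finset.mem_sdiff.1 h2).2 h1
  have hmemL : ∀ a, a ∈ L ↔ a ∈ F := by
    intro a
    rw [hL, List.mem_append, hmem₁, hmem₂, Finset.mem_sdiff]
    constructor
    · rintro (h | h)
      · exact hΓF h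
      · exact h.1
    · intro h
      by_cases hΓa : a ∈ Γ
      · exact Or.inl hΓa
      · exact Or.inr ⟨h, hΓa⟩
  have hchL : L.Chain' (fun i j => ρ j ≤ ρ i) := by
    show List.IsChain _ _
    rw [hL, List.isChain_append]
    refine ⟨hch₁, hch₂, fun a ha c hc => ?_⟩
    have haΓ : a ∈ Γ := (hmem₁ a).1 (List.mem_of_mem_getLast? ha)
    have hcF : c ∈ F \ Γ := (hmem₂ c).1 (List.mem_of_mem_head? hc)
    exact hΓ c (Finset.mem_sdiff.1 hcF).2 a haΓ
  set p : ℕ → Prop := fun m => m ∉ F with hp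
  haveI : DecidablePred p := fun m => instDecidableNot
  have hpinf : (setOf p).Infinite := by
    have : (setOf p) = (↑F : Set ℕ)ᶜ := by ext m; simp [hp]; exact Iff.rfl
    rw [this]
    exact (F.finite_toSet).infinite_compl
  set f : ℕ → ℕ := fun m => if h : m < L.length then L.get ⟨m, h⟩ else Nat.nth p (m - L.length)
    with hfd
  have hfin : ∀ m (h : m < L.length), f m = L.get ⟨m, h⟩ := by
    intro m h; simp only [hfd, dif_pos h]
  have hfout : ∀ m, L.length ≤ m → f m = Nat.nth p (m - L.length) := by
    intro m h; simp only [hfd, dif_neg (not_lt.2 h)]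
  have hfmemF : ∀ m (h : m < L.length), f m ∈ F := by
    intro m h; rw [hfin m h, ← hmemL]; exact List.get_mem L _
  have hfnotF : ∀ m, L.length ≤ m → f m ∉ F := by
    intro m h; rw [hfout m h]; exact Nat.nth_mem_of_infinite hpinf _
  have hinj : Function.Injective f := by
    intro a a' hab
    by_cases ha : a < L.length <;> by_cases hb : a' < L.length
    · rw [hfin a ha, hfin a' hb] at hab
      exact congrArg Fin.val (List.nodup_iff_injective_get.1 hndL hab)
    · exact absurd (hab ▸ hfmemF a ha) (hfnotF a' (not_lt.1 hb))
    · exact absurd (hab ▸ hfnotF a (not_lt.1 ha)) (not_not.2 (hfmemF a' hb))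
    · rw [hfout a (not_lt.1 ha), hfout a' (not_lt.1 hb)] at hab
      have := Nat.nth_injective hpinf hab
      omega
  have hsurj : Function.Surjective f := by
    intro v
    by_cases hv : v ∈ F
    · have : v ∈ L := (hmemL v).2 hv
      obtain ⟨idx, hidx⟩ := List.mem_iff_get.1 this
      exact ⟨idx, by rw [hfin idx idx.isLt]; exact hidx⟩
    · refine ⟨Nat.count p v + L.length, ?_⟩
      rw [hfout _ (by omega), Nat.add_sub_cancel]
      exact Nat.nth_count hv
  set π : Equiv.Perm ℕ := Equiv.ofBijective f ⟨hinj, hsurj⟩ with hπd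
  have hπf : ∀ m, π m = f m := fun m => rfl
  have hgreedy : b.Greedy y π := by
    intro m
    rw [hπf, hπf]
    by_cases h1 : m + 1 < L.length
    · have h0 : m < L.length := by omega
      rw [hfin _ h1, hfin _ h0]
      exact List.isChain_iff_getElem.1 hchL m (by omega)
    · have hnot : f (m + 1) ∉ F := hfnotF _ (by omega)
      have hz : b.coeff (f (m + 1)) y = 0 := by
        apply hy
        by_contra hcon
        exact hnot (hF ▸ Finset.mem_union_right _ (Finset.mem_range.2 (by omega)))
      rw [hz]
      simp [norm_nonneg]
  have hlen₁ : l₁.length = Γ.card := by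
    rw [← htf₁, List.toFinset_card_of_nodup hnd₁]
  have himg : (Finset.range Γ.card).image (fun m => π m) = Γ := by
    apply Finset.eq_of_subset_of_card_le
    · intro v hv
      obtain ⟨m, hm, rfl⟩ := Finset.mem_image.1 hv
      have hm' : m < l₁.length := by rw [hlen₁]; exact Finset.mem_range.1 hm
      have hml : m < L.length := by rw [hL, List.length_append]; omega
      rw [hπf, hfin m hml]
      have : L.get ⟨m, hml⟩ = l₁.get ⟨m, hm'⟩ := List.getElem_append_left (bs := l₂) hm'
      rw [this, ← hmem₁]
      exact List.get_mem l₁ _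
    · rw [Finset.card_image_of_injective _ (fun a a' h => hinj (by rw [← hπf, ← hπf]; exact h)),
        Finset.card_range]
  have hG : b.G Γ.card π y = b.S Γ y := by
    rw [S_apply']
    conv_rhs => rw [← himg]
    rw [Finset.sum_image (fun a _ a' _ h => π.injective h)]
    rfl
  rw [← hG]
  exact hK y π hgreedy Γ.card

lemma S_norm_le (K : ℝ≥0) (hK : b.QuasiGreedy K) (y : X) (Γ : Finset ℕ)
    (hΓ : ∀ i ∉ Γ, ∀ j ∈ Γ, ‖b.coeff i y‖ ≤ ‖b.coeff j y‖) :
    ‖b.S Γ y‖ ≤ K * ‖y‖ := by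
  set nΓ := Γ.sup id + 1 with hnΓ
  have hΓn : ∀ j ∈ Γ, j < nΓ := fun j hj =>
    lt_of_le_of_lt (Finset.le_sup (f := id) hj) (lt_add_one _)
  have key : ∀ m, nΓ ≤ m → ‖b.S Γ y‖ ≤ K * ‖∑ j ∈ Finset.range m, b.coeff j y • b.e j‖ := by
    intro m hm
    set w := ∑ j ∈ Finset.range m, b.coeff j y • b.e j with hw
    have hcw : ∀ i, b.coeff i w = if i ∈ Finset.range m then b.coeff i y else 0 := fun i =>
      b.coeff_sum' _ _ i
    have hSw : b.S Γ w = b.S Γ y := by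
      rw [S_apply', S_apply']
      refine Finset.sum_congr rfl fun j hj => ?_
      rw [hcw j, if_pos (Finset.mem_range.2 (lt_of_lt_of_le (hΓn j hj) hm))]
    have hyw : ∀ j, m ≤ j → b.coeff j w = 0 := fun j hj => by
      rw [hcw]; rw [if_neg (by simp; omega)]
    have hΓw : ∀ i ∉ Γ, ∀ j ∈ Γ, ‖b.coeff i w‖ ≤ ‖b.coeff j w‖ := by
      intro i hi j hj
      rw [hcw i, hcw j, if_pos (Finset.mem_range.2 (lt_of_lt_of_le (hΓn j hj) hm))]
      by_cases him : i ∈ Finset.range m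
      · rw [if_pos him]; exact hΓ i hi j hj
      · rw [if_neg him]; simp
    calc ‖b.S Γ y‖ = ‖b.S Γ w‖ := by rw [hSw]
      _ ≤ K * ‖w‖ := b.S_norm_le_fin K hK w m hyw Γ hΓw
  refine ge_of_tendsto (((b.expansion y).norm).const_mul (K : ℝ)) ?_
  exact eventually_atTop.2 ⟨nΓ, key⟩

lemma conv_smul (w : ℕ → X) (Γ : Finset ℕ) : ∀ (M : ℝ),
    (∀ C ⊆ Γ, ‖∑ j ∈ C, w j‖ ≤ M) → ∀ (lam : ℕ → ℝ) (m : ℝ), 0 ≤ m →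
    (∀ j ∈ Γ, 0 ≤ lam j ∧ lam j ≤ m) →
    ‖∑ j ∈ Γ, ((lam j : 𝕜)) • w j‖ ≤ m * M := by
  classical
  induction Γ using Finset.strongInduction with
  | _ Γ ih =>
    intro M h lam m hm hlam
    have hM : 0 ≤ M := by
      have h0 := h ∅ (Finset.empty_subset _)
      simpa using h0
    rcases Finset.eq_empty_or_nonempty Γ with rfl | hne
    · simpa using mul_nonneg hm hM
    · obtain ⟨j₀, hj₀, hmin⟩ := Finset.exists_min_image Γ lam hne
      have hsplit : ∑ j ∈ Γ, ((lam j : 𝕜)) • w j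
          = ((lam j₀ : 𝕜)) • (∑ j ∈ Γ, w j)
            + ∑ j ∈ Γ.erase j₀, (((lam j - lam j₀ : ℝ) : 𝕜)) • w j := by
        rw [Finset.smul_sum]
        have hz : ∑ j ∈ Γ.erase j₀, (((lam j - lam j₀ : ℝ) : 𝕜)) • w j
            = ∑ j ∈ Γ, (((lam j - lam j₀ : ℝ) : 𝕜)) • w j := by
          refine Finset.sum_subset (Finset.erase_subset _ _) fun j hj hj' => ?_
          have hjj : j = j₀ := by
            by_contra hcon
            exact hj' (Finset.mem_erase.2 ⟨hcon, hj⟩)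
          rw [hjj]
          simp
        rw [hz, ← Finset.sum_add_distrib]
        refine Finset.sum_congr rfl fun j _ => ?_
        rw [← add_smul]
        congr 1
        push_cast
        ring
      rw [hsplit]
      have h1 : ‖((lam j₀ : 𝕜)) • (∑ j ∈ Γ, w j)‖ ≤ lam j₀ * M := by
        rw [norm_smul, RCLike.norm_ofReal, abs_of_nonneg (hlam j₀ hj₀).1]
        exact mul_le_mul_of_nonneg_left (h Γ subset_rfl) (hlam j₀ hj₀).1
      have h2 : ‖∑ j ∈ Γ.erase j₀, (((lam j - lam j₀ : ℝ) : 𝕜)) • w j‖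
          ≤ (m - lam j₀) * M := by
        refine ih (Γ.erase j₀) (Finset.erase_ssubset hj₀) M
          (fun C hC => h C (hC.trans (Finset.erase_subset _ _)))
          (fun j => lam j - lam j₀) (m - lam j₀) (by linarith [(hlam j₀ hj₀).2]) ?_
        intro j hj
        have hjΓ := Finset.mem_of_mem_erase hj
        exact ⟨sub_nonneg.2 (hmin j hjΓ), sub_le_sub_right (hlam j hjΓ).2 _⟩
      calc ‖_ + _‖ ≤ lam j₀ * M + (m - lam j₀) * M :=
            le_trans (norm_add_le _ _) (add_le_add h1 h2)
        _ = m * M := by ring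

lemma norm_I_le_one : ‖(RCLike.I : 𝕜)‖ ≤ 1 := by
  rcases @RCLike.I_mul_I_ax 𝕜 _ with h | h
  · simp [h]
  · have h2 := congrArg norm h
    rw [norm_mul, norm_neg, norm_one] at h2
    nlinarith [norm_nonneg (RCLike.I : 𝕜)]

lemma conv_smul_real (w : ℕ → X) (Γ : Finset ℕ) (M : ℝ)
    (h : ∀ C ⊆ Γ, ‖∑ j ∈ C, w j‖ ≤ M) (lam : ℕ → ℝ) (m : ℝ) (hm : 0 ≤ m)
    (hlam : ∀ j ∈ Γ, |lam j| ≤ m) :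
    ‖∑ j ∈ Γ, ((lam j : 𝕜)) • w j‖ ≤ 2 * (m * M) := by
  have hpt : ∀ j, ((lam j : 𝕜)) • w j
      = ((max (lam j) 0 : ℝ) : 𝕜) • w j - ((max (-lam j) 0 : ℝ) : 𝕜) • w j := by
    intro j
    rw [← sub_smul, ← RCLike.ofReal_sub]
    congr 2
    rcases le_total (lam j) 0 with hle | hle
    · rw [max_eq_right hle, max_eq_left (by linarith)]; ring
    · rw [max_eq_left hle, max_eq_right (by linarith)]; ring
  rw [Finset.sum_congr rfl (fun j _ => hpt j), Finset.sum_sub_distrib]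
  have h1 := conv_smul (𝕜 := 𝕜) w Γ M h (fun j => max (lam j) 0) m hm
    (fun j hj => ⟨le_max_right _ _, max_le (le_trans (le_abs_self _) (hlam j hj)) hm⟩)
  have h2 := conv_smul (𝕜 := 𝕜) w Γ M h (fun j => max (-lam j) 0) m hm
    (fun j hj => ⟨le_max_right _ _, max_le (le_trans (neg_le_abs _) (hlam j hj)) hm⟩)
  calc ‖_ - _‖ ≤ m * M + m * M := le_trans (norm_sub_le _ _) (add_le_add h1 h2)
    _ = 2 * (m * M) := by ring

lemma conv_smul_complex (w : ℕ → X) (Γ : Finset ℕ) (M : ℝ)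
    (h : ∀ C ⊆ Γ, ‖∑ j ∈ C, w j‖ ≤ M) (c : ℕ → 𝕜) (m : ℝ) (hm : 0 ≤ m)
    (hc : ∀ j ∈ Γ, ‖c j‖ ≤ m) :
    ‖∑ j ∈ Γ, c j • w j‖ ≤ 4 * (m * M) := by
  have hM : 0 ≤ M := by
    have h0 := h ∅ (Finset.empty_subset _)
    simpa using h0
  have hpt : ∀ j, c j • w j = ((RCLike.re (c j) : ℝ) : 𝕜) • w j
      + ((RCLike.im (c j) : ℝ) : 𝕜) • ((RCLike.I : 𝕜) • w j) := by
    intro j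
    rw [smul_smul, ← add_smul]
    congr 1
    exact (RCLike.re_add_im (c j)).symm
  rw [Finset.sum_congr rfl (fun j _ => hpt j), Finset.sum_add_distrib]
  have hI : ∀ C ⊆ Γ, ‖∑ j ∈ C, (RCLike.I : 𝕜) • w j‖ ≤ M := by
    intro C hC
    rw [← Finset.smul_sum, norm_smul]
    calc ‖(RCLike.I : 𝕜)‖ * ‖∑ j ∈ C, w j‖ ≤ 1 * M :=
          mul_le_mul norm_I_le_one (h C hC) (norm_nonneg _) zero_le_one
      _ = M := one_mul M
  have h1 := conv_smul_real (𝕜 := 𝕜) w Γ M h (fun j => RCLike.re (c j)) m hm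
    (fun j hj => le_trans (RCLike.abs_re_le_norm _) (hc j hj))
  have h2 := conv_smul_real (𝕜 := 𝕜) (fun j => (RCLike.I : 𝕜) • w j) Γ M hI
    (fun j => RCLike.im (c j)) m hm
    (fun j hj => le_trans (RCLike.abs_im_le_norm _) (hc j hj))
  calc ‖_ + _‖ ≤ 2 * (m * M) + 2 * (m * M) := le_trans (norm_add_le _ _) (add_le_add h1 h2)
    _ = 4 * (m * M) := by ring

lemma abel_smul (w : ℕ → X) (ρ : ℕ → ℝ) (Γ : Finset ℕ) : ∀ (M : ℝ),
    (∀ s : ℝ, ‖∑ j ∈ Γ.filter (fun j => ρ j ≤ s), w j‖ ≤ M) →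
    ∀ (lam : ℕ → ℝ) (m : ℝ), 0 ≤ m → (∀ j ∈ Γ, 0 ≤ lam j ∧ lam j ≤ m) →
    (∀ i ∈ Γ, ∀ j ∈ Γ, ρ i ≤ ρ j → lam j ≤ lam i) →
    ‖∑ j ∈ Γ, ((lam j : 𝕜)) • w j‖ ≤ m * M := by
  classical
  induction Γ using Finset.strongInduction with
  | _ Γ ih =>
    intro M h lam m hm hlam hanti
    have hM : 0 ≤ M := by
      have := h 0
      rcases Finset.eq_empty_or_nonempty (Γ.filter (fun j => ρ j ≤ (0:ℝ))) with he | hne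
      · rw [he] at this; simpa using this
      · exact le_trans (norm_nonneg _) this
    rcases Finset.eq_empty_or_nonempty Γ with rfl | hne
    · simpa using mul_nonneg hm hM
    · obtain ⟨j₁, hj₁, hmax⟩ := Finset.exists_max_image Γ ρ hne
      set E : Finset ℕ := Γ.filter (fun j => ρ j₁ ≤ ρ j) with hE
      have hj₁E : j₁ ∈ E := Finset.mem_filter.2 ⟨hj₁, le_rfl⟩
      set lam₁ := lam j₁ with hlam₁
      have hlamE : ∀ j ∈ E, lam j = lam₁ := by
        intro j hj
        obtain ⟨hjΓ, hjρ⟩ := Finset.mem_filter.1 hj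
        exact le_antisymm (hanti j₁ hj₁ j hjΓ hjρ) (hanti j hjΓ j₁ hj₁ (hmax j hjΓ))
      have hlamlow : ∀ j ∈ Γ, lam₁ ≤ lam j := fun j hj => hanti j hj j₁ hj₁ (hmax j hj)
      set Γ' : Finset ℕ := Γ \ E with hΓ'
      have hΓ'ss : Γ' ⊂ Γ := Finset.sdiff_ssubset (Finset.filter_subset _ _) ⟨j₁, hj₁E⟩
      have hΓ'mem : ∀ j, j ∈ Γ' ↔ (j ∈ Γ ∧ ¬ ρ j₁ ≤ ρ j) := by
        intro j
        rw [hΓ', Finset.mem_sdiff, hE, Finset.mem_filter]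
        constructor
        · rintro ⟨h1, h2⟩; exact ⟨h1, fun hc => h2 ⟨h1, hc⟩⟩
        · rintro ⟨h1, h2⟩; exact ⟨h1, fun hc => h2 hc.2⟩
      have hfull : Γ.filter (fun j => ρ j ≤ ρ j₁) = Γ :=
        Finset.filter_true_of_mem fun j hj => hmax j hj
      have hsplit : ∑ j ∈ Γ, ((lam j : 𝕜)) • w j
          = ((lam₁ : 𝕜)) • (∑ j ∈ Γ, w j)
            + ∑ j ∈ Γ', (((lam j - lam₁ : ℝ) : 𝕜)) • w j := by
        rw [Finset.smul_sum]
        have hz : ∑ j ∈ Γ', (((lam j - lam₁ : ℝ) : 𝕜)) • w j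
            = ∑ j ∈ Γ, (((lam j - lam₁ : ℝ) : 𝕜)) • w j := by
          refine Finset.sum_subset (Finset.sdiff_subset) fun j hj hj' => ?_
          have hjE : j ∈ E := by
            by_contra hcon
            exact hj' ((hΓ'mem j).2 ⟨hj, fun hc => hcon (Finset.mem_filter.2 ⟨hj, hc⟩)⟩)
          rw [hlamE j hjE]
          simp
        rw [hz, ← Finset.sum_add_distrib]
        refine Finset.sum_congr rfl fun j _ => ?_
        rw [← add_smul]
        congr 1
        push_cast
        ring
      rw [hsplit]
      have h1 : ‖((lam₁ : 𝕜)) • (∑ j ∈ Γ, w j)‖ ≤ lam₁ * M := by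
        rw [norm_smul, RCLike.norm_ofReal, abs_of_nonneg (hlam j₁ hj₁).1]
        refine mul_le_mul_of_nonneg_left ?_ (hlam j₁ hj₁).1
        have := h (ρ j₁)
        rwa [hfull] at this
      have hbd' : ∀ s : ℝ, ‖∑ j ∈ Γ'.filter (fun j => ρ j ≤ s), w j‖ ≤ M := by
        intro s
        rcases lt_or_ge s (ρ j₁) with hs | hs
        · have heq : Γ'.filter (fun j => ρ j ≤ s) = Γ.filter (fun j => ρ j ≤ s) := by
            ext j
            rw [Finset.mem_filter, Finset.mem_filter, hΓ'mem]
            constructor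
            · rintro ⟨⟨hjΓ, _⟩, hjs⟩; exact ⟨hjΓ, hjs⟩
            · rintro ⟨hjΓ, hjs⟩
              exact ⟨⟨hjΓ, fun hmem => absurd (hmem.trans hjs) (not_le.2 hs)⟩, hjs⟩
          rw [heq]; exact h s
        · have hΓ'all : Γ'.filter (fun j => ρ j ≤ s) = Γ' := by
            refine Finset.filter_true_of_mem fun j hj => ?_
            obtain ⟨hjΓ, hjE⟩ := Finset.mem_sdiff.1 hj
            have : ¬ ρ j₁ ≤ ρ j := fun hcon => hjE (Finset.mem_filter.2 ⟨hjΓ, hcon⟩)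
            linarith [not_le.1 this]
          rw [hΓ'all]
          rcases Finset.eq_empty_or_nonempty Γ' with he | hne'
          · rw [he]; simpa using hM
          · obtain ⟨j₂, hj₂, hmax₂⟩ := Finset.exists_max_image Γ' ρ hne'
            have hj₂lt : ρ j₂ < ρ j₁ := not_le.1 ((hΓ'mem j₂).1 hj₂).2
            have heq2 : Γ' = Γ.filter (fun j => ρ j ≤ ρ j₂) := by
              ext j
              rw [Finset.mem_filter, hΓ'mem]
              constructor
              · rintro ⟨hjΓ, hjE⟩
                exact ⟨hjΓ, hmax₂ j ((hΓ'mem j).2 ⟨hjΓ, hjE⟩)⟩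
              · rintro ⟨hjΓ, hjs⟩
                exact ⟨hjΓ, fun hmem => by linarith⟩
            rw [heq2]; exact h (ρ j₂)
      have h2 : ‖∑ j ∈ Γ', (((lam j - lam₁ : ℝ) : 𝕜)) • w j‖ ≤ (m - lam₁) * M := by
        refine ih Γ' hΓ'ss M hbd' (fun j => lam j - lam₁) (m - lam₁)
          (by linarith [(hlam j₁ hj₁).2]) ?_ ?_
        · intro j hj
          have hjΓ := ((hΓ'mem j).1 hj).1
          exact ⟨sub_nonneg.2 (hlamlow j hjΓ), sub_le_sub_right (hlam j hjΓ).2 _⟩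
        · intro i hi j hj hij
          have hiΓ := ((hΓ'mem i).1 hi).1
          have hjΓ := ((hΓ'mem j).1 hj).1
          exact sub_le_sub_right (hanti i hiΓ j hjΓ hij) _
      calc ‖_ + _‖ ≤ lam₁ * M + (m - lam₁) * M :=
            le_trans (norm_add_le _ _) (add_le_add h1 h2)
        _ = m * M := by ring

lemma coeff_norm_le (K : ℝ≥0) (hK : b.QuasiGreedy K) (w : X) (i : ℕ) :
    ‖b.coeff i w‖ ≤ 2 * K * ‖w‖ := by
  classical
  rcases eq_or_lt_of_le (norm_nonneg (b.coeff i w)) with h0 | hpos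
  · rw [← h0]; positivity
  · have hfin : {j : ℕ | ‖b.coeff i w‖ < ‖b.coeff j w‖}.Finite :=
      (b.finite_ge' w hpos).subset fun j hj => by
        have hj' : ‖b.coeff i w‖ < ‖b.coeff j w‖ := hj
        exact le_of_lt hj'
    set Γ₂ : Finset ℕ := hfin.toFinset with hΓ₂
    have hmem₂ : ∀ j, j ∈ Γ₂ ↔ ‖b.coeff i w‖ < ‖b.coeff j w‖ := fun j => Set.Finite.mem_toFinset _
    have hi2 : i ∉ Γ₂ := fun hc => lt_irrefl _ ((hmem₂ i).1 hc)
    set Γ₁ : Finset ℕ := insert i Γ₂ with hΓ₁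
    have hp1 : ∀ i' ∉ Γ₁, ∀ j ∈ Γ₁, ‖b.coeff i' w‖ ≤ ‖b.coeff j w‖ := by
      intro i' hi' j hj
      have hi'le : ‖b.coeff i' w‖ ≤ ‖b.coeff i w‖ :=
        not_lt.1 fun hc => hi' (Finset.mem_insert_of_mem ((hmem₂ i').2 hc))
      rcases Finset.mem_insert.1 hj with rfl | hj2
      · exact hi'le
      · exact hi'le.trans (le_of_lt ((hmem₂ j).1 hj2))
    have hp2 : ∀ i' ∉ Γ₂, ∀ j ∈ Γ₂, ‖b.coeff i' w‖ ≤ ‖b.coeff j w‖ := by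
      intro i' hi' j hj
      exact (not_lt.1 fun hc => hi' ((hmem₂ i').2 hc)).trans (le_of_lt ((hmem₂ j).1 hj))
    have h1 := b.S_norm_le K hK w Γ₁ hp1
    have h2 := b.S_norm_le K hK w Γ₂ hp2
    have h3 : b.S Γ₁ w - b.S Γ₂ w = b.coeff i w • b.e i := by
      rw [S_apply', S_apply', hΓ₁, Finset.sum_insert hi2]
      abel
    have h4 : ‖b.coeff i w • b.e i‖ ≤ 2 * K * ‖w‖ := by
      rw [← h3]
      calc ‖b.S Γ₁ w - b.S Γ₂ w‖ ≤ ‖b.S Γ₁ w‖ + ‖b.S Γ₂ w‖ := norm_sub_le _ _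
        _ ≤ K * ‖w‖ + K * ‖w‖ := add_le_add h1 h2
        _ = 2 * K * ‖w‖ := by ring
    rwa [norm_smul, b.norm_e i, mul_one] at h4

lemma one_le_qg (K : ℝ≥0) (hK : b.QuasiGreedy K) : 1 ≤ K := by
  have hg : b.Greedy (b.e 0) (Equiv.refl ℕ) := by
    intro m
    have : b.coeff (m + 1) (b.e 0) = 0 := by
      rw [b.biorth]; simp
    rw [Equiv.refl_apply, Equiv.refl_apply, this]
    simp
  have h := hK (b.e 0) (Equiv.refl ℕ) hg 1
  have hGe : b.G 1 (Equiv.refl ℕ) (b.e 0) = b.e 0 := by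
    rw [G]
    simp [b.biorth]
  rw [hGe, b.norm_e 0] at h
  rw [mul_one] at h
  exact_mod_cast h

lemma greedy_anti (x : X) (π : Equiv.Perm ℕ) (hπ : b.Greedy x π) :
    ∀ {m l : ℕ}, m ≤ l → ‖b.coeff (π l) x‖ ≤ ‖b.coeff (π m) x‖ := by
  intro m l h
  induction l, h using Nat.le_induction with
  | base => exact le_rfl
  | succ l hml ih => exact le_trans (hπ l) ih

lemma coeff_G (M : ℕ) (π : Equiv.Perm ℕ) (x : X) (m : ℕ) :
    b.coeff (π m) (b.G M π x) = if m < M then b.coeff (π m) x else 0 := by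
  classical
  rw [G, map_sum]
  have hterm : ∀ l ∈ Finset.range M, b.coeff (π m) (b.coeff (π l) x • b.e (π l))
      = if m = l then b.coeff (π l) x else 0 := by
    intro l _
    rw [map_smul, b.biorth]
    by_cases h : m = l
    · simp [h, π.injective.eq_iff]
    · have : π m ≠ π l := fun hc => h (π.injective hc)
      simp [this, h]
  rw [Finset.sum_congr rfl hterm, Finset.sum_ite_eq]
  by_cases h : m < M <;> simp [h]

lemma sub_G_eq_zero (x : X) (π : Equiv.Perm ℕ) (hπ : b.Greedy x π) (M : ℕ) (hM : 1 ≤ M)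
    (h0 : ‖b.coeff (π (M - 1)) x‖ = 0) : x - b.G M π x = 0 := by
  apply b.eq_zero_of_coeff'
  intro i
  obtain ⟨m, rfl⟩ := π.surjective i
  rw [map_sub, b.coeff_G M π x m]
  by_cases hm : m < M
  · rw [if_pos hm, sub_self]
  · rw [if_neg hm, sub_zero]
    have hle : ‖b.coeff (π m) x‖ ≤ ‖b.coeff (π (M - 1)) x‖ := b.greedy_anti x π hπ (by omega)
    rw [h0] at hle
    exact norm_le_zero_iff.1 hle

lemma key_estimate (K : ℝ≥0) (hK : b.QuasiGreedy K) (N k₀ : ℕ) (hN : 1 ≤ N) (hk : 1 ≤ k₀)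
    (x : X) (π : Equiv.Perm ℕ) (hπ : b.Greedy x π)
    (htne : ‖b.coeff (π (N + k₀ - 1)) x‖ ≠ 0)
    (A : Finset ℕ) (hA : A.card ≤ N) (c : ℕ → 𝕜) :
    (‖x - b.G (N + k₀) π x‖₊ : ℝ≥0∞) ≤
      ((64 * K ^ 3 + K + 1 : ℝ≥0) : ℝ≥0∞) * (1 + b.hr N / b.hl k₀) *
        (‖x - ∑ j ∈ A, c j • b.e j‖₊ : ℝ≥0∞) := by
  classical
  have hK1 : (1 : ℝ) ≤ (K : ℝ) := by exact_mod_cast b.one_le_qg K hK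
  have hK0 : (0 : ℝ) ≤ (K : ℝ) := by linarith
  set z : X := ∑ j ∈ A, c j • b.e j with hzd
  set y : X := x - z with hyd
  set t : ℝ := ‖b.coeff (π (N + k₀ - 1)) x‖ with htd
  have ht0 : 0 < t := lt_of_le_of_ne (norm_nonneg _) (Ne.symm htne)
  set Λ : Finset ℕ := (Finset.range (N + k₀)).image π with hΛd
  have hGS : b.G (N + k₀) π x = ∑ j ∈ Λ, b.coeff j x • b.e j := by
    rw [hΛd, Finset.sum_image (fun a _ a' _ h => π.injective h)]
    rfl
  have hΛcard : Λ.card = N + k₀ := by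
    rw [hΛd, Finset.card_image_of_injective _ π.injective, Finset.card_range]
  have hΛlow : ∀ j ∈ Λ, t ≤ ‖b.coeff j x‖ := by
    intro j hj
    rw [hΛd] at hj
    obtain ⟨m, hm, rfl⟩ := Finset.mem_image.1 hj
    exact b.greedy_anti x π hπ (by have := Finset.mem_range.1 hm; omega)
  have hΛout : ∀ i ∉ Λ, ‖b.coeff i x‖ ≤ t := by
    intro i hi
    have hm : ¬ π.symm i < N + k₀ := fun hc =>
      hi (hΛd ▸ Finset.mem_image.2 ⟨π.symm i, Finset.mem_range.2 hc, π.apply_symm_apply i⟩)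
    have h2 := b.greedy_anti x π hπ (show N + k₀ - 1 ≤ π.symm i by omega)
    rwa [π.apply_symm_apply] at h2
  have hcy : ∀ i, b.coeff i y = b.coeff i x - (if i ∈ A then c i else 0) := by
    intro i
    rw [hyd, map_sub, hzd, b.coeff_sum']
  have hcyA : ∀ i ∉ A, b.coeff i y = b.coeff i x := fun i hi => by
    rw [hcy, if_neg hi, sub_zero]
  set ρ : ℕ → ℝ := fun i => ‖b.coeff i y‖ with hρd
  have hfinΓ : {i : ℕ | t < ρ i}.Finite :=
    (b.finite_ge' y ht0).subset fun i hi => by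
      have hi' : t < ρ i := hi
      exact le_of_lt hi'
  set Γ : Finset ℕ := hfinΓ.toFinset ∪ (Λ \ A) with hΓd
  have hΓmem : ∀ i, i ∈ Γ ↔ (t < ρ i ∨ i ∈ Λ \ A) := by
    intro i
    rw [hΓd, Finset.mem_union, Set.Finite.mem_toFinset]
    rfl
  have hΓlow : ∀ j ∈ Γ, t ≤ ρ j := by
    intro j hj
    rcases (hΓmem j).1 hj with h | h
    · exact le_of_lt h
    · have hjA := (Finset.mem_sdiff.1 h).2
      have h2 := hΛlow j (Finset.mem_sdiff.1 h).1
      show t ≤ ‖b.coeff j y‖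
      rw [hcyA j hjA]
      exact h2
  have hΓout : ∀ i ∉ Γ, ρ i ≤ t := by
    intro i hi
    by_contra hlt
    exact hi ((hΓmem i).2 (Or.inl (not_le.1 hlt)))
  have hΓpair : ∀ i ∉ Γ, ∀ j ∈ Γ, ‖b.coeff i y‖ ≤ ‖b.coeff j y‖ := fun i hi j hj =>
    (hΓout i hi).trans (hΓlow j hj)
  have hSΓ : ‖b.S Γ y‖ ≤ K * ‖y‖ := b.S_norm_le K hK y Γ hΓpair
  have hΓρpos : ∀ j ∈ Γ, 0 < ρ j := fun j hj => lt_of_lt_of_le ht0 (hΓlow j hj)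
  -- filter bound
  have hbd : ∀ s : ℝ, ‖∑ j ∈ Γ.filter (fun j => ρ j ≤ s), b.coeff j y • b.e j‖
      ≤ 2 * ((K : ℝ) * ‖y‖) := by
    intro s
    have hsplit := Finset.sum_filter_add_sum_filter_not Γ (fun j => ρ j ≤ s)
      (fun j => b.coeff j y • b.e j)
    have hDpair : ∀ i ∉ Γ.filter (fun j => ¬ ρ j ≤ s), ∀ j ∈ Γ.filter (fun j => ¬ ρ j ≤ s),
        ‖b.coeff i y‖ ≤ ‖b.coeff j y‖ := by
      intro i hi j hj
      obtain ⟨hjΓ, hjs⟩ := Finset.mem_filter.1 hj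
      by_cases hiΓ : i ∈ Γ
      · have his : ρ i ≤ s := by
          by_contra hcon
          exact hi (Finset.mem_filter.2 ⟨hiΓ, hcon⟩)
        exact le_trans his (le_of_lt (not_le.1 hjs))
      · exact hΓpair i hiΓ j hjΓ
    have hD := b.S_norm_le K hK y _ hDpair
    rw [S_apply'] at hD
    have hC : ∑ j ∈ Γ.filter (fun j => ρ j ≤ s), b.coeff j y • b.e j
        = b.S Γ y - ∑ j ∈ Γ.filter (fun j => ¬ ρ j ≤ s), b.coeff j y • b.e j := by
      rw [S_apply', ← hsplit]
      abel
    rw [hC]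
    calc ‖b.S Γ y - ∑ j ∈ Γ.filter (fun j => ¬ ρ j ≤ s), b.coeff j y • b.e j‖
        ≤ ‖b.S Γ y‖ + ‖∑ j ∈ Γ.filter (fun j => ¬ ρ j ≤ s), b.coeff j y • b.e j‖ :=
          norm_sub_le _ _
      _ ≤ K * ‖y‖ + K * ‖y‖ := add_le_add hSΓ hD
      _ = 2 * ((K : ℝ) * ‖y‖) := by ring
  -- sign vector
  set sg : ℕ → 𝕜 := fun j => b.coeff j y / ((ρ j : ℝ) : 𝕜) with hsgd
  have hsgnorm : ∀ j ∈ Γ, ‖sg j‖ = 1 := by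
    intro j hj
    show ‖b.coeff j y / ((ρ j : ℝ) : 𝕜)‖ = 1
    rw [norm_div, RCLike.norm_ofReal, abs_of_nonneg (norm_nonneg _)]
    exact div_self (ne_of_gt (hΓρpos j hj))
  have hsgne : ∀ j ∈ Γ, sg j ≠ 0 := by
    intro j hj hc0
    have h1 := hsgnorm j hj
    rw [hc0, norm_zero] at h1
    norm_num at h1
  set V : X := ∑ j ∈ Γ, sg j • b.e j with hVd
  have hcV : ∀ i, b.coeff i V = if i ∈ Γ then sg i else 0 := fun i => b.coeff_sum' Γ sg i
  have hsub : ∀ C ⊆ Γ, ‖∑ j ∈ C, sg j • b.e j‖ ≤ (K : ℝ) * ‖V‖ := by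
    intro C hC
    have hpair : ∀ i ∉ C, ∀ j ∈ C, ‖b.coeff i V‖ ≤ ‖b.coeff j V‖ := by
      intro i hi j hj
      rw [hcV, hcV, if_pos (hC hj), hsgnorm j (hC hj)]
      by_cases hiΓ : i ∈ Γ
      · rw [if_pos hiΓ, hsgnorm i hiΓ]
      · rw [if_neg hiΓ, norm_zero]
        norm_num
    have h2 := b.S_norm_le K hK V C hpair
    rw [S_apply'] at h2
    have hCe : ∑ j ∈ C, b.coeff j V • b.e j = ∑ j ∈ C, sg j • b.e j :=
      Finset.sum_congr rfl fun j hj => by rw [hcV, if_pos (hC hj)]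
    rwa [hCe] at h2
  have htV : t * ‖V‖ ≤ 2 * ((K : ℝ) * ‖y‖) := by
    have habel := abel_smul (𝕜 := 𝕜) (fun j => b.coeff j y • b.e j) ρ Γ (2 * ((K : ℝ) * ‖y‖))
      hbd (fun j => t / ρ j) 1 zero_le_one
      (fun j hj => ⟨div_nonneg ht0.le (hΓρpos j hj).le,
        (div_le_one (hΓρpos j hj)).2 (hΓlow j hj)⟩)
      (fun i hi j hj hij => by
        show t / ρ j ≤ t / ρ i
        rw [div_le_div_iff₀ (hΓρpos j hj) (hΓρpos i hi)]
        exact mul_le_mul_of_nonneg_left hij ht0.le)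
    have hident : ∑ j ∈ Γ, (((t / ρ j : ℝ) : 𝕜)) • (b.coeff j y • b.e j) = ((t : ℝ) : 𝕜) • V := by
      rw [hVd, Finset.smul_sum]
      refine Finset.sum_congr rfl fun j hj => ?_
      rw [smul_smul, smul_smul]
      congr 1
      show ((t / ρ j : ℝ) : 𝕜) * b.coeff j y = ((t : ℝ) : 𝕜) * (b.coeff j y / ((ρ j : ℝ) : 𝕜))
      rw [RCLike.ofReal_div]
      ring
    rw [hident] at habel
    rw [norm_smul, RCLike.norm_ofReal, abs_of_nonneg ht0.le, one_mul] at habel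
    exact habel
  -- the set W
  have hWex : k₀ ≤ (Λ \ A).card := by
    have h1 := Finset.le_card_sdiff A Λ
    omega
  obtain ⟨W, hWsub, hWcard⟩ := Finset.exists_subset_card_eq hWex
  have hWΓ : W ⊆ Γ := fun i hi => (hΓmem i).2 (Or.inr (hWsub hi))
  have hW1 : ‖∑ j ∈ W, b.e j‖ ≤ 4 * (1 * ((K : ℝ) * ‖V‖)) := by
    have hWid : ∑ j ∈ Γ, (if j ∈ W then (sg j)⁻¹ else 0) • (sg j • b.e j)
        = ∑ j ∈ W, b.e j := by
      rw [← Finset.sum_subset hWΓ (fun j hj hj' => by simp only [if_neg hj', zero_smul])]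
      refine Finset.sum_congr rfl fun j hj => ?_
      simp only [if_pos hj, smul_smul, inv_mul_cancel₀ (hsgne j (hWΓ hj)), one_smul]
    rw [← hWid]
    refine conv_smul_complex (fun j => sg j • b.e j) Γ ((K : ℝ) * ‖V‖) hsub
      (fun j => if j ∈ W then (sg j)⁻¹ else 0) 1 zero_le_one ?_
    intro j hj
    by_cases hjW : j ∈ W
    · simp only [if_pos hjW, norm_inv, hsgnorm j (hWΓ hjW)]
      norm_num
    · simp only [if_neg hjW, norm_zero]
      norm_num
  have htW : t * ‖∑ j ∈ W, b.e j‖ ≤ 8 * (K : ℝ) ^ 2 * ‖y‖ := by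
    have step1 : t * ‖∑ j ∈ W, b.e j‖ ≤ t * (4 * (1 * ((K : ℝ) * ‖V‖))) :=
      mul_le_mul_of_nonneg_left hW1 ht0.le
    have step2 : t * (4 * (1 * ((K : ℝ) * ‖V‖))) = 4 * (K : ℝ) * (t * ‖V‖) := by ring
    have step3 : 4 * (K : ℝ) * (t * ‖V‖) ≤ 4 * (K : ℝ) * (2 * ((K : ℝ) * ‖y‖)) :=
      mul_le_mul_of_nonneg_left htV (by positivity)
    calc t * ‖∑ j ∈ W, b.e j‖ ≤ 4 * (K : ℝ) * (t * ‖V‖) := by rw [← step2]; exact step1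
      _ ≤ 4 * (K : ℝ) * (2 * ((K : ℝ) * ‖y‖)) := step3
      _ = 8 * (K : ℝ) ^ 2 * ‖y‖ := by ring
  -- y ≠ 0
  have hyne : y ≠ 0 := by
    obtain ⟨i, hi⟩ := Finset.card_pos.1 (lt_of_lt_of_le (by omega : 0 < k₀) hWex)
    intro hy0
    have h1 := hcyA i (Finset.mem_sdiff.1 hi).2
    rw [hy0, map_zero] at h1
    have h2 := hΛlow i (Finset.mem_sdiff.1 hi).1
    rw [← h1, norm_zero] at h2
    linarith
  -- decomposition
  set g : ℕ → 𝕜 := fun i => (if i ∈ A then c i else 0) - (if i ∈ Λ then b.coeff i x else 0)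
    + (if i ∈ Γ then b.coeff i y else 0) with hgd
  set d : X := ∑ i ∈ A, g i • b.e i with hdd
  have hgzero : ∀ i ∉ A, g i = 0 := by
    intro i hiA
    show (if i ∈ A then c i else 0) - (if i ∈ Λ then b.coeff i x else 0)
      + (if i ∈ Γ then b.coeff i y else 0) = 0
    rw [if_neg hiA]
    by_cases hiΛ : i ∈ Λ
    · have hiΓ : i ∈ Γ := (hΓmem i).2 (Or.inr (Finset.mem_sdiff.2 ⟨hiΛ, hiA⟩))
      rw [if_pos hiΛ, if_pos hiΓ, hcyA i hiA]
      ring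
    · have hiΓ : i ∉ Γ := by
        intro hc
        rcases (hΓmem i).1 hc with h | h
        · have h2 := hΛout i hiΛ
          have h3 : t < ‖b.coeff i y‖ := h
          rw [hcyA i hiA] at h3
          linarith
        · exact hiΛ (Finset.mem_sdiff.1 h).1
      rw [if_neg hiΛ, if_neg hiΓ]
      ring
  have hid : x - b.G (N + k₀) π x = (y - b.S Γ y) + d := by
    have hxz : x - b.G (N + k₀) π x - (y - b.S Γ y)
        = z - (∑ j ∈ Λ, b.coeff j x • b.e j) + ∑ j ∈ Γ, b.coeff j y • b.e j := by
      rw [hGS, S_apply', hyd]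
      abel
    set F : Finset ℕ := A ∪ Λ ∪ Γ with hFd
    have hAF : A ⊆ F := (Finset.subset_union_left).trans Finset.subset_union_left
    have hΛF : Λ ⊆ F := (Finset.subset_union_right).trans Finset.subset_union_left
    have hΓF : Γ ⊆ F := Finset.subset_union_right
    have ez : z = ∑ i ∈ F, (if i ∈ A then c i else 0) • b.e i := by
      rw [hzd, ← Finset.sum_subset hAF (fun i _ hi' => by simp only [if_neg hi', zero_smul])]
      exact Finset.sum_congr rfl fun i hi => by simp only [if_pos hi]
    have eΛ : ∑ j ∈ Λ, b.coeff j x • b.e j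
        = ∑ i ∈ F, (if i ∈ Λ then b.coeff i x else 0) • b.e i := by
      rw [← Finset.sum_subset hΛF (fun i _ hi' => by simp only [if_neg hi', zero_smul])]
      exact Finset.sum_congr rfl fun i hi => by simp only [if_pos hi]
    have eΓ : ∑ j ∈ Γ, b.coeff j y • b.e j
        = ∑ i ∈ F, (if i ∈ Γ then b.coeff i y else 0) • b.e i := by
      rw [← Finset.sum_subset hΓF (fun i _ hi' => by simp only [if_neg hi', zero_smul])]
      exact Finset.sum_congr rfl fun i hi => by simp only [if_pos hi]
    have hsum : z - (∑ j ∈ Λ, b.coeff j x • b.e j) + ∑ j ∈ Γ, b.coeff j y • b.e j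
        = ∑ i ∈ F, g i • b.e i := by
      rw [ez, eΛ, eΓ, ← Finset.sum_sub_distrib, ← Finset.sum_add_distrib]
      refine Finset.sum_congr rfl fun i _ => ?_
      rw [← sub_smul, ← add_smul]
    have hdF : ∑ i ∈ F, g i • b.e i = d := by
      rw [hdd]
      exact (Finset.sum_subset hAF fun i _ hi' => by simp only [hgzero i hi', zero_smul]).symm
    have hfin2 : x - b.G (N + k₀) π x - (y - b.S Γ y) = d := by rw [hxz, hsum, hdF]
    rw [sub_eq_iff_eq_add] at hfin2
    rw [hfin2]
    abel
  have hgsmall : ∀ i ∈ A, ‖g i‖ ≤ 2 * t := by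
    intro i hiA
    have hcyi : b.coeff i y = b.coeff i x - c i := by rw [hcy, if_pos hiA]
    show ‖(if i ∈ A then c i else 0) - (if i ∈ Λ then b.coeff i x else 0)
      + (if i ∈ Γ then b.coeff i y else 0)‖ ≤ 2 * t
    rw [if_pos hiA]
    by_cases hiΛ : i ∈ Λ <;> by_cases hiΓ : i ∈ Γ
    · rw [if_pos hiΛ, if_pos hiΓ, hcyi]
      have he : c i - b.coeff i x + (b.coeff i x - c i) = 0 := by ring
      rw [he, norm_zero]
      linarith
    · rw [if_pos hiΛ, if_neg hiΓ]
      have he : c i - b.coeff i x + 0 = -(b.coeff i y) := by rw [hcyi]; ring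
      rw [he, norm_neg]
      have h2 : ‖b.coeff i y‖ ≤ t := hΓout i hiΓ
      linarith
    · rw [if_neg hiΛ, if_pos hiΓ]
      have he : c i - 0 + b.coeff i y = b.coeff i x := by rw [hcyi]; ring
      rw [he]
      linarith [hΛout i hiΛ]
    · rw [if_neg hiΛ, if_neg hiΓ]
      have he : c i - 0 + 0 = b.coeff i x - b.coeff i y := by rw [hcyi]; ring
      rw [he]
      have h2 : ‖b.coeff i y‖ ≤ t := hΓout i hiΓ
      calc ‖b.coeff i x - b.coeff i y‖ ≤ ‖b.coeff i x‖ + ‖b.coeff i y‖ := norm_sub_le _ _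
        _ ≤ t + t := add_le_add (hΛout i hiΛ) h2
        _ = 2 * t := by ring
  obtain ⟨B, hAB, hBcard⟩ := Infinite.exists_superset_card_eq A N hA
  set uB : X := ∑ j ∈ B, b.e j with huBd
  have hcuB : ∀ i, b.coeff i uB = if i ∈ B then 1 else 0 := by
    intro i
    have h1 : uB = ∑ j ∈ B, (1 : 𝕜) • b.e j := by rw [huBd]; simp
    rw [h1, b.coeff_sum']
  have hsubB : ∀ C ⊆ B, ‖∑ j ∈ C, b.e j‖ ≤ (K : ℝ) * ‖uB‖ := by
    intro C hC
    have hpair : ∀ i ∉ C, ∀ j ∈ C, ‖b.coeff i uB‖ ≤ ‖b.coeff j uB‖ := by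
      intro i hi j hj
      rw [hcuB, hcuB, if_pos (hC hj)]
      by_cases hiB : i ∈ B
      · rw [if_pos hiB]
      · rw [if_neg hiB]
        simp
    have h2 := b.S_norm_le K hK uB C hpair
    rw [S_apply'] at h2
    have hCe : ∑ j ∈ C, b.coeff j uB • b.e j = ∑ j ∈ C, b.e j :=
      Finset.sum_congr rfl fun j hj => by rw [hcuB, if_pos (hC hj), one_smul]
    rwa [hCe] at h2
  have hdB : d = ∑ j ∈ B, (if j ∈ A then g j else 0) • b.e j := by
    rw [hdd, ← Finset.sum_subset hAB (fun j _ hj' => by simp only [if_neg hj', zero_smul])]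
    exact Finset.sum_congr rfl fun j hj => by simp only [if_pos hj]
  have hd : ‖d‖ ≤ 4 * ((2 * t) * ((K : ℝ) * ‖uB‖)) := by
    rw [hdB]
    refine conv_smul_complex (fun j => b.e j) B ((K : ℝ) * ‖uB‖) hsubB
      (fun j => if j ∈ A then g j else 0) (2 * t) (by linarith) ?_
    intro j hj
    by_cases hjA : j ∈ A
    · simp only [if_pos hjA]; exact hgsmall j hjA
    · simp only [if_neg hjA, norm_zero]; linarith
  have hu : ‖y - b.S Γ y‖ ≤ (1 + (K : ℝ)) * ‖y‖ := by
    calc ‖y - b.S Γ y‖ ≤ ‖y‖ + ‖b.S Γ y‖ := norm_sub_le _ _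
      _ ≤ ‖y‖ + K * ‖y‖ := add_le_add_right hSΓ _
      _ = (1 + (K : ℝ)) * ‖y‖ := by ring
  -- ℝ≥0∞ assembly
  set t' : ℝ≥0 := ‖b.coeff (π (N + k₀ - 1)) x‖₊ with ht'd
  have ht'c : (t' : ℝ) = t := rfl
  have hE1 : (‖y - b.S Γ y‖₊ : ℝ≥0∞) ≤ ((1 + K : ℝ≥0) : ℝ≥0∞) * (‖y‖₊ : ℝ≥0∞) := by
    rw [← ENNReal.coe_mul, ENNReal.coe_le_coe, ← NNReal.coe_le_coe]
    push_cast
    exact hu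
  have hE2 : (‖d‖₊ : ℝ≥0∞) ≤ ((8 * K : ℝ≥0) : ℝ≥0∞) * ((t' : ℝ≥0∞) * (‖uB‖₊ : ℝ≥0∞)) := by
    rw [← ENNReal.coe_mul, ← ENNReal.coe_mul, ENNReal.coe_le_coe, ← NNReal.coe_le_coe]
    push_cast
    rw [ht'c]
    calc ‖d‖ ≤ 4 * ((2 * t) * ((K : ℝ) * ‖uB‖)) := hd
      _ = 8 * (K : ℝ) * (t * ‖uB‖) := by ring
  have hWle : b.hl k₀ ≤ (‖∑ j ∈ W, b.e j‖₊ : ℝ≥0∞) := iInf₂_le W hWcard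
  have hE3 : (t' : ℝ≥0∞) * b.hl k₀ ≤ ((8 * K ^ 2 : ℝ≥0) : ℝ≥0∞) * (‖y‖₊ : ℝ≥0∞) := by
    calc (t' : ℝ≥0∞) * b.hl k₀ ≤ (t' : ℝ≥0∞) * (‖∑ j ∈ W, b.e j‖₊ : ℝ≥0∞) :=
          mul_le_mul_right hWle _
      _ ≤ ((8 * K ^ 2 : ℝ≥0) : ℝ≥0∞) * (‖y‖₊ : ℝ≥0∞) := by
          rw [← ENNReal.coe_mul, ← ENNReal.coe_mul, ENNReal.coe_le_coe, ← NNReal.coe_le_coe]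
          push_cast
          rw [ht'c]
          exact htW
  have hy0' : (‖y‖₊ : ℝ≥0∞) ≠ 0 := by
    simp only [ne_eq, ENNReal.coe_eq_zero, nnnorm_eq_zero]
    exact hyne
  have hE4 : (t' : ℝ≥0∞) ≤ ((8 * K ^ 2 : ℝ≥0) : ℝ≥0∞) * (‖y‖₊ : ℝ≥0∞) / b.hl k₀ := by
    rw [ENNReal.le_div_iff_mul_le (Or.inr ?hne) (Or.inr ?hnt)]
    · exact hE3
    case hne =>
      refine mul_ne_zero ?_ hy0'
      simp only [ne_eq, ENNReal.coe_eq_zero]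
      intro hc
      have : (0 : ℝ) = 8 * (K : ℝ) ^ 2 := by exact_mod_cast hc.symm
      nlinarith
    case hnt =>
      exact ENNReal.mul_ne_top ENNReal.coe_ne_top ENNReal.coe_ne_top
  have hE5 : (‖uB‖₊ : ℝ≥0∞) ≤ b.hr N :=
    le_iSup₂ (f := fun (A' : Finset ℕ) (_ : A'.card = N) =>
      ((‖∑ j ∈ A', b.e j‖₊ : ℝ≥0) : ℝ≥0∞)) B hBcard
  have hmain : (‖x - b.G (N + k₀) π x‖₊ : ℝ≥0∞)
      ≤ ((1 + K : ℝ≥0) : ℝ≥0∞) * (‖y‖₊ : ℝ≥0∞)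
        + ((64 * K ^ 3 : ℝ≥0) : ℝ≥0∞) * (b.hr N / b.hl k₀) * (‖y‖₊ : ℝ≥0∞) := by
    rw [hid]
    calc (‖(y - b.S Γ y) + d‖₊ : ℝ≥0∞) ≤ (‖y - b.S Γ y‖₊ : ℝ≥0∞) + (‖d‖₊ : ℝ≥0∞) := by
          exact_mod_cast nnnorm_add_le _ _
      _ ≤ ((1 + K : ℝ≥0) : ℝ≥0∞) * (‖y‖₊ : ℝ≥0∞)
          + ((8 * K : ℝ≥0) : ℝ≥0∞) * ((t' : ℝ≥0∞) * (‖uB‖₊ : ℝ≥0∞)) := add_le_add hE1 hE2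
      _ ≤ ((1 + K : ℝ≥0) : ℝ≥0∞) * (‖y‖₊ : ℝ≥0∞)
          + ((8 * K : ℝ≥0) : ℝ≥0∞) * ((((8 * K ^ 2 : ℝ≥0) : ℝ≥0∞) * (‖y‖₊ : ℝ≥0∞) / b.hl k₀)
            * b.hr N) :=
          add_le_add_right (mul_le_mul_right (mul_le_mul' hE4 hE5) _) _
      _ = ((1 + K : ℝ≥0) : ℝ≥0∞) * (‖y‖₊ : ℝ≥0∞)
          + ((64 * K ^ 3 : ℝ≥0) : ℝ≥0∞) * (b.hr N / b.hl k₀) * (‖y‖₊ : ℝ≥0∞) := by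
          rw [div_eq_mul_inv, div_eq_mul_inv]
          push_cast
          ring
  refine hmain.trans ?_
  have hexp : ((64 * K ^ 3 + K + 1 : ℝ≥0) : ℝ≥0∞) * (1 + b.hr N / b.hl k₀) * (‖y‖₊ : ℝ≥0∞)
      = ((64 * K ^ 3 + K + 1 : ℝ≥0) : ℝ≥0∞) * (‖y‖₊ : ℝ≥0∞)
        + ((64 * K ^ 3 + K + 1 : ℝ≥0) : ℝ≥0∞) * (b.hr N / b.hl k₀) * (‖y‖₊ : ℝ≥0∞) := by
    ring
  rw [hexp]
  refine add_le_add ?_ ?_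
  · refine mul_le_mul_left (ENNReal.coe_le_coe.2 ?_) _
    calc (1 + K : ℝ≥0) = K + 1 := by rw [add_comm]
      _ ≤ 64 * K ^ 3 + K + 1 := by
        rw [add_assoc]
        exact le_add_self
  · refine mul_le_mul_left (mul_le_mul_left (ENNReal.coe_le_coe.2 ?_) _) _
    calc (64 * K ^ 3 : ℝ≥0) ≤ 64 * K ^ 3 + K := le_add_right le_rfl
      _ ≤ 64 * K ^ 3 + K + 1 := le_add_right le_rfl

end GreedyBasis



/-- For a normalized quasi-greedy basis there is `c > 0` such that for all `N, k ≥ 1`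
and all `x`, `‖x - G_{N+k}(x)‖ ≤ c (1 + h_r(N)/h_l(k)) σ_N(x)`. -/
theorem stmt10 (b : GreedyBasis 𝕜 X) (K : ℝ≥0) (hK : b.QuasiGreedy K) :
    ∃ c : ℝ≥0, 0 < c ∧ ∀ N k : ℕ, 1 ≤ N → 1 ≤ k →
      ∀ (x : X) (π : Equiv.Perm ℕ), b.Greedy x π →
        (‖x - b.G (N + k) π x‖₊ : ℝ≥0∞) ≤ (c : ℝ≥0∞) * (1 + b.hr N / b.hl k) * b.σ N x := by
  classical
  have hK1 : 1 ≤ K := b.one_le_qg K hK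
  have hK0 : K ≠ 0 := by
    intro h
    rw [h] at hK1
    exact absurd hK1 (by norm_num)
  refine ⟨64 * K ^ 3 + K + 1, by positivity, ?_⟩
  intro N k hN hk x π hπ
  by_cases ht : ‖b.coeff (π (N + k - 1)) x‖ = 0
  · rw [b.sub_G_eq_zero x π hπ (N + k) (by omega) ht]
    simp
  · by_cases hσ : b.σ N x = 0
    · exfalso
      apply ht
      have hper : ∀ (A : Finset ℕ), A.card ≤ N → ∀ c : ℕ → 𝕜,
          ((‖b.coeff (π (N + k - 1)) x‖₊ : ℝ≥0) : ℝ≥0∞)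
            ≤ ((2 * K : ℝ≥0) : ℝ≥0∞) * (‖x - ∑ j ∈ A, c j • b.e j‖₊ : ℝ≥0∞) := by
        intro A hA c
        set z := ∑ j ∈ A, c j • b.e j with hz
        set y := x - z with hy
        set Λ : Finset ℕ := (Finset.range (N + k)).image π with hΛ
        have hΛcard : Λ.card = N + k := by
          rw [hΛ, Finset.card_image_of_injective _ π.injective, Finset.card_range]
        have hnotsub : ¬ Λ ⊆ A := fun hsub => by
          have := Finset.card_le_card hsub
          omega
        obtain ⟨i, hiΛ, hiA⟩ := Finset.not_subset.1 hnotsub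
        have h1 : ‖b.coeff (π (N + k - 1)) x‖ ≤ ‖b.coeff i x‖ := by
          rw [hΛ] at hiΛ
          obtain ⟨m, hm, rfl⟩ := Finset.mem_image.1 hiΛ
          exact b.greedy_anti x π hπ (by have := Finset.mem_range.1 hm; omega)
        have h2 : b.coeff i y = b.coeff i x := by
          rw [hy, map_sub, hz, b.coeff_sum', if_neg hiA, sub_zero]
        have h3 : ‖b.coeff i y‖ ≤ 2 * K * ‖y‖ := b.coeff_norm_le K hK y i
        rw [← ENNReal.coe_mul, ENNReal.coe_le_coe, ← NNReal.coe_le_coe]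
        push_cast
        calc ‖b.coeff (π (N + k - 1)) x‖ ≤ ‖b.coeff i x‖ := h1
          _ = ‖b.coeff i y‖ := by rw [h2]
          _ ≤ 2 * K * ‖y‖ := h3
      have h2K0 : ((2 * K : ℝ≥0) : ℝ≥0∞) ≠ 0 := by
        simp only [ne_eq, ENNReal.coe_eq_zero]
        intro hc
        exact hK0 (by simpa using hc)
      have h2KT : ((2 * K : ℝ≥0) : ℝ≥0∞) ≠ ⊤ := ENNReal.coe_ne_top
      have hdiv : ((‖b.coeff (π (N + k - 1)) x‖₊ : ℝ≥0) : ℝ≥0∞) / ((2 * K : ℝ≥0) : ℝ≥0∞)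
          ≤ b.σ N x := by
        refine le_iInf fun A => le_iInf fun hA => le_iInf fun c => ?_
        rw [ENNReal.div_le_iff_le_mul (Or.inl h2K0) (Or.inl h2KT), mul_comm]
        exact hper A hA c
      rw [hσ, nonpos_iff_eq_zero, ENNReal.div_eq_zero_iff] at hdiv
      rcases hdiv with h | h
      · rw [ENNReal.coe_eq_zero, nnnorm_eq_zero] at h
        rw [h, norm_zero]
      · exact absurd h h2KT
    · have hBne : (∑ j ∈ Finset.range N, b.e j) ≠ 0 := by
        intro hc
        have heq : ∑ j ∈ Finset.range N, (1 : 𝕜) • b.e j = ∑ j ∈ Finset.range N, b.e j := by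
          simp
        have h1 : b.coeff 0 (∑ j ∈ Finset.range N, (1 : 𝕜) • b.e j) = 1 := by
          rw [b.coeff_sum', if_pos (Finset.mem_range.2 (by omega))]
        rw [heq, hc, map_zero] at h1
        exact one_ne_zero h1.symm
      have hrge : ((‖∑ j ∈ Finset.range N, b.e j‖₊ : ℝ≥0) : ℝ≥0∞) ≤ b.hr N :=
        le_iSup₂ (f := fun (A' : Finset ℕ) (_ : A'.card = N) =>
          ((‖∑ j ∈ A', b.e j‖₊ : ℝ≥0) : ℝ≥0∞)) (Finset.range N) (Finset.card_range N)
      have hrne : b.hr N ≠ 0 := by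
        intro hc
        rw [hc, nonpos_iff_eq_zero, ENNReal.coe_eq_zero, nnnorm_eq_zero] at hrge
        exact hBne hrge
      by_cases hhl : b.hl k = 0
      · have htop : (1 : ℝ≥0∞) + b.hr N / b.hl k = ⊤ := by
          rw [hhl, ENNReal.div_zero hrne]
          simp
        rw [htop, ENNReal.mul_top (by
          simp only [ne_eq, ENNReal.coe_eq_zero]
          positivity), ENNReal.top_mul hσ]
        exact le_top
      · have hrtop : b.hr N ≠ ⊤ := by
          have hle : b.hr N ≤ (N : ℝ≥0∞) := by
            refine iSup₂_le fun A hA => ?_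
            calc ((‖∑ j ∈ A, b.e j‖₊ : ℝ≥0) : ℝ≥0∞)
                ≤ ((∑ j ∈ A, ‖b.e j‖₊ : ℝ≥0) : ℝ≥0∞) :=
                  ENNReal.coe_le_coe.2 (nnnorm_sum_le _ _)
              _ = (A.card : ℝ≥0∞) := by
                  have hone : ∀ j ∈ A, ‖b.e j‖₊ = 1 := fun j _ =>
                    NNReal.coe_injective (by simp [b.norm_e j])
                  rw [Finset.sum_congr rfl hone, Finset.sum_const, nsmul_eq_mul, mul_one]
                  simp
              _ ≤ (N : ℝ≥0∞) := by
                  exact_mod_cast Nat.cast_le.2 (le_of_eq hA)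
          exact ne_top_of_le_ne_top (ENNReal.natCast_ne_top N) hle
        set a : ℝ≥0∞ := ((64 * K ^ 3 + K + 1 : ℝ≥0) : ℝ≥0∞) * (1 + b.hr N / b.hl k) with had
        have haT : a ≠ ⊤ := by
          rw [had]
          refine ENNReal.mul_ne_top ENNReal.coe_ne_top ?_
          refine ENNReal.add_ne_top.2 ⟨ENNReal.one_ne_top, ?_⟩
          exact (ENNReal.div_lt_top hrtop hhl).ne
        have ha0 : a ≠ 0 := by
          rw [had]
          refine mul_ne_zero ?_ ?_
          · simp only [ne_eq, ENNReal.coe_eq_zero]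
            positivity
          · intro hc
            have : (1 : ℝ≥0∞) ≤ 0 := hc ▸ le_add_right le_rfl
            simp at this
        have hdiv : (‖x - b.G (N + k) π x‖₊ : ℝ≥0∞) / a ≤ b.σ N x := by
          refine le_iInf fun A => le_iInf fun hA => le_iInf fun c => ?_
          rw [ENNReal.div_le_iff_le_mul (Or.inl ha0) (Or.inl haT), mul_comm]
          exact b.key_estimate K hK N k hN hk x π hπ ht A hA c
        calc (‖x - b.G (N + k) π x‖₊ : ℝ≥0∞)
            = a * ((‖x - b.G (N + k) π x‖₊ : ℝ≥0∞) / a) :=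
              (ENNReal.mul_div_cancel ha0 haT).symm
          _ ≤ a * b.σ N x := mul_le_mul_right hdiv _
          _ = ((64 * K ^ 3 + K + 1 : ℝ≥0) : ℝ≥0∞) * (1 + b.hr N / b.hl k) * b.σ N x := by
              rw [had]
end
end

section
/- In ℓ¹, the Lindenstrauss system x_n = e_n − (e_{2n} + e_{2n+1})/2 satisfies, for finitely supported scalars (b_k), ‖Σ_{k=1}^n b_k x_k‖_{ℓ¹} = |b_1| + Σ_{k=2}^n |b_k − b_{⌊k/2⌋}/2| + (1/2)·Σ_{k=n+1}^{2n+1} |b_{⌊k/2⌋}|. -/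
open Finset

noncomputable section

/-- The Lindenstrauss system `x_n = e_n - (e_{2n} + e_{2n+1})/2` in `ℓ¹`. -/
def lind (n : ℕ) : lp (fun _ : ℕ => ℝ) 1 :=
  lp.single 1 n 1 - (2 : ℝ)⁻¹ • (lp.single 1 (2 * n) 1 + lp.single 1 (2 * n + 1) 1)

lemma lind_apply (k m : ℕ) : (lind k : ∀ _ : ℕ, ℝ) m =
    (if m = k then (1:ℝ) else 0)
      - (2:ℝ)⁻¹ * ((if m = 2*k then (1:ℝ) else 0) + (if m = 2*k+1 then (1:ℝ) else 0)) := by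
  simp only [lind, lp.coeFn_sub, lp.coeFn_smul, lp.coeFn_add, Pi.sub_apply, Pi.smul_apply,
    Pi.add_apply, lp.single_apply, smul_eq_mul]
  simp [dite_eq_ite, Pi.single_apply]

lemma coord (n : ℕ) (b : ℕ → ℝ) (m : ℕ) :
    ((∑ k ∈ Finset.Icc 1 n, b k • lind k : lp (fun _ : ℕ => ℝ) 1) : ∀ _ : ℕ, ℝ) m =
    (if m ∈ Finset.Icc 1 n then b m else 0)
      - (2:ℝ)⁻¹ * (if m / 2 ∈ Finset.Icc 1 n then b (m / 2) else 0) := by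
  rw [lp.coeFn_sum]
  simp only [Finset.sum_apply, lp.coeFn_smul, Pi.smul_apply, lind_apply, smul_eq_mul]
  have h2 : ∀ k : ℕ, (if m = 2*k then (1:ℝ) else 0)
      = (if m % 2 = 0 then (1:ℝ) else 0) * (if k = m/2 then 1 else 0) := by
    intro k; split_ifs <;> (try norm_num) <;> omega
  have h3 : ∀ k : ℕ, (if m = 2*k+1 then (1:ℝ) else 0)
      = (if m % 2 = 1 then (1:ℝ) else 0) * (if k = m/2 then 1 else 0) := by
    intro k; split_ifs <;> (try norm_num) <;> omega
  have expand : ∀ k, b k * ((if m = k then (1:ℝ) else 0)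
        - (2:ℝ)⁻¹ * ((if m = 2*k then (1:ℝ) else 0) + (if m = 2*k+1 then (1:ℝ) else 0)))
      = b k * (if m = k then (1:ℝ) else 0)
        - b k * ((2:ℝ)⁻¹ * ((if m % 2 = 0 then (1:ℝ) else 0) * (if k = m/2 then 1 else 0)))
        - b k * ((2:ℝ)⁻¹ * ((if m % 2 = 1 then (1:ℝ) else 0) * (if k = m/2 then 1 else 0))) := by
    intro k; rw [h2, h3]; ring
  have e1 : ∑ k ∈ Finset.Icc 1 n, b k * (if m = k then (1:ℝ) else 0)
      = if m ∈ Finset.Icc 1 n then b m else 0 := by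
    simp only [mul_ite, mul_one, mul_zero]
    rw [Finset.sum_ite_eq (Finset.Icc 1 n) m b]
  have e2 : ∀ c : ℝ, ∑ k ∈ Finset.Icc 1 n,
      b k * ((2:ℝ)⁻¹ * (c * (if k = m/2 then (1:ℝ) else 0)))
      = (2:ℝ)⁻¹ * (c * (if m/2 ∈ Finset.Icc 1 n then b (m/2) else 0)) := by
    intro c
    simp only [mul_ite, mul_one, mul_zero, Finset.sum_ite_eq']
    split_ifs <;> ring
  rw [Finset.sum_congr rfl (fun k _ => expand k), Finset.sum_sub_distrib,
    Finset.sum_sub_distrib, e1, e2, e2]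
  have hc : (if m % 2 = 0 then (1:ℝ) else 0) + (if m % 2 = 1 then (1:ℝ) else 0) = 1 := by
    rcases Nat.mod_two_eq_zero_or_one m with h | h <;> simp [h]
  linear_combination (-(2:ℝ)⁻¹ * (if m/2 ∈ Finset.Icc 1 n then b (m/2) else 0)) * hc

/-- Norm formula for finite combinations of the Lindenstrauss system:
`‖∑_{k=1}^n b_k x_k‖₁ = |b_1| + ∑_{k=2}^n |b_k - b_{⌊k/2⌋}/2| + ½ ∑_{k=n+1}^{2n+1} |b_{⌊k/2⌋}|`. -/
theorem stmt12 (n : ℕ) (hn : 1 ≤ n) (b : ℕ → ℝ) :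
    ‖∑ k ∈ Finset.Icc 1 n, b k • lind k‖ =
      |b 1| + ∑ k ∈ Finset.Icc 2 n, |b k - b (k / 2) / 2| +
        (1 / 2) * ∑ k ∈ Finset.Icc (n + 1) (2 * n + 1), |b (k / 2)| := by
  set f : lp (fun _ : ℕ => ℝ) 1 := ∑ k ∈ Finset.Icc 1 n, b k • lind k with hf
  have hp : (0:ℝ) < (1 : ENNReal).toReal := by norm_num
  have hs : HasSum (fun m : ℕ => ‖f m‖) ‖f‖ := by
    have := lp.hasSum_norm hp f
    simpa using this
  set g : ℕ → ℝ := fun m => (if m ∈ Finset.Icc 1 n then b m else 0)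
      - (2:ℝ)⁻¹ * (if m / 2 ∈ Finset.Icc 1 n then b (m / 2) else 0) with hg
  have hfm : ∀ m, ‖f m‖ = |g m| := fun m => by
    rw [hf, coord n b m, Real.norm_eq_abs]
  have hzero : ∀ m ∉ Finset.Icc 1 (2*n+1), |g m| = 0 := by
    intro m hm
    simp only [Finset.mem_Icc, not_and_or, not_le] at hm
    have h1 : m ∉ Finset.Icc 1 n := by simp only [Finset.mem_Icc]; omega
    have h2 : m / 2 ∉ Finset.Icc 1 n := by simp only [Finset.mem_Icc]; omega
    simp only [hg]; rw [if_neg h1, if_neg h2]; simp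
  have hs2 : HasSum (fun m : ℕ => ‖f m‖) (∑ m ∈ Finset.Icc 1 (2*n+1), |g m|) := by
    simp only [hfm]
    exact hasSum_sum_of_ne_finset_zero hzero
  have hnorm : ‖f‖ = ∑ m ∈ Finset.Icc 1 (2*n+1), |g m| := hs.unique hs2
  rw [hnorm]
  -- split the interval
  have hsplit : ∑ m ∈ Finset.Icc 1 (2*n+1), |g m|
      = |g 1| + ∑ m ∈ Finset.Icc 2 n, |g m| + ∑ m ∈ Finset.Icc (n+1) (2*n+1), |g m| := by
    have h1 : Finset.Icc 1 (2*n+1) = Finset.Ioc 0 (2*n+1) := by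
      rw [← Finset.Icc_add_one_left_eq_Ioc]; rfl
    have h2 : Finset.Icc 2 n = Finset.Ioc 1 n := by rw [← Finset.Icc_add_one_left_eq_Ioc]; rfl
    have h3 : Finset.Icc (n+1) (2*n+1) = Finset.Ioc n (2*n+1) := by
      rw [← Finset.Icc_add_one_left_eq_Ioc]
    rw [h1, h2, h3, ← Finset.sum_Ioc_consecutive _ (by omega : 0 ≤ n) (by omega : n ≤ 2*n+1),
      ← Finset.sum_Ioc_consecutive _ (by omega : 0 ≤ 1) (by omega : 1 ≤ n)]
    congr 1
    congr 1
    simp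
  rw [hsplit]
  congr 1
  · congr 1
    · -- |g 1| = |b 1|
      have h1 : (1:ℕ) ∈ Finset.Icc 1 n := by simp [hn]
      have h2 : (1:ℕ)/2 ∉ Finset.Icc 1 n := by simp
      simp only [hg]; rw [if_pos h1, if_neg h2]; simp
    · -- middle term
      apply Finset.sum_congr rfl
      intro m hm
      simp only [Finset.mem_Icc] at hm
      have h1 : m ∈ Finset.Icc 1 n := by simp only [Finset.mem_Icc]; omega
      have h2 : m / 2 ∈ Finset.Icc 1 n := by simp only [Finset.mem_Icc]; omega
      simp only [hg, h1, h2, if_true]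
      ring_nf
  · -- last term
    rw [Finset.mul_sum]
    apply Finset.sum_congr rfl
    intro m hm
    simp only [Finset.mem_Icc] at hm
    have h1 : m ∉ Finset.Icc 1 n := by simp only [Finset.mem_Icc]; omega
    have h2 : m / 2 ∈ Finset.Icc 1 n := by simp only [Finset.mem_Icc]; omega
    simp only [hg, h1, h2, if_true, if_false, zero_sub, abs_neg, abs_mul]
    rw [abs_of_nonneg (by norm_num : (0:ℝ) ≤ (2:ℝ)⁻¹)]
    ring
end
end

section
/- In ℓ¹ with the difference basis x_1 = e_1, x_n = e_n − e_{n−1} (n ≥ 2): for y = Σ_{n=1}^{2N} x_n and A = {2, 4, ..., 2N}, one has ‖y‖ = 1 and ‖S_A(y)‖ = 2N; hence k_N ≥ 2N for this basis. -/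
open Finset

noncomputable section

/-- The difference basis `x_1 = e_1`, `x_n = e_n - e_{n-1}` of `ℓ¹`. -/
def diffb (n : ℕ) : lp (fun _ : ℕ => ℝ) 1 :=
  if n = 1 then lp.single 1 1 1 else lp.single 1 n 1 - lp.single 1 (n - 1) 1

lemma diffb_telescope : ∀ M : ℕ, 1 ≤ M →
    ∑ n ∈ Finset.Icc 1 M, diffb n = lp.single 1 M 1 := by
  intro M
  induction M with
  | zero => omega
  | succ M ih =>
    intro _
    rcases Nat.eq_zero_or_pos M with h | h
    · subst h; simp [diffb]
    · have hM : 1 ≤ M := h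
      rw [Finset.sum_Icc_succ_top (by omega), ih hM]
      have hne : diffb (M + 1) = lp.single 1 (M + 1) 1 - lp.single 1 M 1 := by
        unfold diffb
        rw [if_neg (by omega)]
        simp
      rw [hne]; abel

def gg (i : ℕ) : ℝ := if Even i then 1 else -1

lemma even_part : ∀ N : ℕ,
    ((Finset.Icc 1 (2 * N)).filter (fun n => Even n)).card = N ∧
    ∑ n ∈ (Finset.Icc 1 (2 * N)).filter (fun n => Even n), diffb n
      = ∑ i ∈ Finset.Icc 1 (2 * N), lp.single 1 i (gg i) := by
  intro N
  induction N with
  | zero => simp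
  | succ N ih =>
    have h1 : Finset.Icc 1 (2 * (N + 1)) = insert (2 * N + 2) (insert (2 * N + 1) (Finset.Icc 1 (2 * N))) := by
      ext x; simp [Finset.mem_Icc, Finset.mem_insert]; omega
    have hni1 : (2 * N + 1) ∉ Finset.Icc 1 (2 * N) := by simp
    have hni2 : (2 * N + 2) ∉ insert (2 * N + 1) (Finset.Icc 1 (2 * N)) := by
      simp [Finset.mem_Icc]
    have hEv : Even (2 * N + 2) := ⟨N + 1, by omega⟩
    have hOd : ¬ Even (2 * N + 1) := by rintro ⟨k, hk⟩; omega
    have hfil : (Finset.Icc 1 (2 * (N + 1))).filter (fun n => Even n)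
        = insert (2 * N + 2) ((Finset.Icc 1 (2 * N)).filter (fun n => Even n)) := by
      rw [h1, Finset.filter_insert, Finset.filter_insert, if_pos hEv, if_neg hOd]
    have hni3 : (2 * N + 2) ∉ (Finset.Icc 1 (2 * N)).filter (fun n => Even n) := by
      simp [Finset.mem_Icc]
    constructor
    · rw [hfil, Finset.card_insert_of_notMem hni3, ih.1]
    · rw [hfil, Finset.sum_insert hni3, ih.2, h1, Finset.sum_insert hni2,
        Finset.sum_insert hni1]
      have e1 : gg (2 * N + 2) = 1 := if_pos hEv
      have e2 : gg (2 * N + 1) = -1 := if_neg hOd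
      have hd : diffb (2 * N + 2) = lp.single 1 (2 * N + 2) 1 - lp.single 1 (2 * N + 1) 1 := by
        unfold diffb
        rw [if_neg (by omega)]
        norm_num
      rw [hd, e1, e2, lp.single_neg]
      abel

lemma norm_single_one (i : ℕ) (a : ℝ) : ‖(lp.single 1 i a : lp (fun _ : ℕ => ℝ) 1)‖ = ‖a‖ := by
  have := lp.norm_single (p := 1) (E := fun _ : ℕ => ℝ) (by norm_num) i a
  simpa using this

/-- For the difference basis of `ℓ¹`, with `y = ∑_{n=1}^{2N} x_n` and
`A = {2, 4, …, 2N}`: `‖y‖ = 1`, `|A| = N` and `‖S_A y‖ = 2N`; hence `k_N ≥ 2N`. -/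
theorem stmt14 (N : ℕ) (hN : 1 ≤ N) :
    ‖∑ n ∈ Finset.Icc 1 (2 * N), diffb n‖ = 1 ∧
    ((Finset.Icc 1 (2 * N)).filter (fun n => Even n)).card = N ∧
    ‖∑ n ∈ (Finset.Icc 1 (2 * N)).filter (fun n => Even n), diffb n‖ = 2 * N ∧
    2 * (N : ℝ) * ‖∑ n ∈ Finset.Icc 1 (2 * N), diffb n‖ ≤
      ‖∑ n ∈ (Finset.Icc 1 (2 * N)).filter (fun n => Even n), diffb n‖ := by
  have h1 : ‖∑ n ∈ Finset.Icc 1 (2 * N), diffb n‖ = 1 := by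
    rw [diffb_telescope (2 * N) (by omega), norm_single_one]
    simp
  have h2 := (even_part N).1
  have h3 : ‖∑ n ∈ (Finset.Icc 1 (2 * N)).filter (fun n => Even n), diffb n‖ = 2 * N := by
    rw [(even_part N).2]
    have := lp.norm_sum_single (p := 1) (E := fun _ : ℕ => ℝ) (by norm_num) gg (Finset.Icc 1 (2 * N))
    simp only [ENNReal.toReal_one, Real.rpow_one] at this
    rw [this]
    have : ∀ i ∈ Finset.Icc 1 (2 * N), ‖gg i‖ = 1 := by
      intro i _
      by_cases h : Even i <;> simp [gg, h]
    rw [Finset.sum_congr rfl this]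
    simp
  exact ⟨h1, h2, h3, by rw [h1, h3]; ring_nf; exact le_refl _⟩
end
end

section
/- Let X, Y be Banach spaces with normalized quasi-greedy bases (e_j), (f_j) respectively. Then the interleaved system (e_1, f_1, e_2, f_2, ...) is a quasi-greedy basis of X ⊕₁ Y (with norm ‖(x,y)‖ = ‖x‖_X + ‖y‖_Y), and its projection constants satisfy k_N^{X⊕Y} = max{k_N^X, k_N^Y}. -/
open Finset NNReal ENNReal Filter

noncomputable section

variable (𝕜 X : Type*) [RCLike 𝕜] [NormedAddCommGroup X] [NormedSpace 𝕜 X]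

variable {𝕜 X}

instance : Fact ((1 : ℝ≥0∞) ≤ 1) := ⟨le_rfl⟩

namespace StmtAux15

variable {b : ℕ → ℝ}

/-- `i` comes before `j` in the decreasing rearrangement. -/
def ltR (b : ℕ → ℝ) (i j : ℕ) : Prop := b j < b i ∨ (b i = b j ∧ i < j)

def preds (b : ℕ → ℝ) (j : ℕ) : Set ℕ := {i | ltR b i j}

noncomputable def rank (b : ℕ → ℝ) (j : ℕ) : ℕ := (preds b j).ncard

lemma ltR_irrefl (i : ℕ) : ¬ ltR b i i := by simp [ltR]

lemma ltR_trans {i j k : ℕ} (h1 : ltR b i j) (h2 : ltR b j k) : ltR b i k := by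
  rcases h1 with h1 | ⟨h1, h1'⟩ <;> rcases h2 with h2 | ⟨h2, h2'⟩
  · exact Or.inl (by linarith)
  · exact Or.inl (by linarith)
  · exact Or.inl (by linarith)
  · exact Or.inr ⟨by linarith, by omega⟩

lemma ltR_total {i j : ℕ} (h : i ≠ j) : ltR b i j ∨ ltR b j i := by
  rcases lt_trichotomy (b i) (b j) with h1 | h1 | h1
  · right; left; exact h1
  · rcases lt_or_gt_of_ne h with h2 | h2
    · left; right; exact ⟨h1, h2⟩
    · right; right; exact ⟨h1.symm, h2⟩
  · left; left; exact h1

lemma preds_finite (H : ∀ j, {i | b j < b i}.Finite) (j : ℕ) : (preds b j).Finite := by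
  apply ((H j).union (Set.finite_Iio j)).subset
  rintro i (h | ⟨h, h'⟩)
  · exact Or.inl h
  · exact Or.inr h'

variable (H : ∀ j, {i | b j < b i}.Finite)
include H

lemma rank_lt_rank {i j : ℕ} (h : ltR b i j) : rank b i < rank b j := by
  apply Set.ncard_lt_ncard _ (preds_finite H j)
  constructor
  · exact fun k hk => ltR_trans hk h
  · intro hsub
    exact ltR_irrefl i (hsub h)

lemma rank_injective : Function.Injective (rank b) := by
  intro i j hij
  by_contra hne
  rcases ltR_total hne with h | h
  · exact absurd hij (Nat.ne_of_lt (rank_lt_rank H h))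
  · exact absurd hij.symm (Nat.ne_of_lt (rank_lt_rank H h))

lemma ltR_of_rank_lt {i j : ℕ} (h : rank b i < rank b j) : ltR b i j := by
  have hne : i ≠ j := fun hij => by simp [hij] at h
  rcases ltR_total hne with h' | h'
  · exact h'
  · exact absurd (rank_lt_rank H h') (by omega)

lemma rank_pred {j m : ℕ} (h : rank b j = m + 1) : ∃ i, rank b i = m := by
  have hfin := preds_finite H j
  have hne : (preds b j).Nonempty := by
    rw [Set.nonempty_iff_ne_empty]
    intro he
    rw [rank, he] at h
    simp at h
  have hne' : hfin.toFinset.Nonempty := by rwa [Set.Finite.toFinset_nonempty]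
  obtain ⟨i, hi, hmax⟩ := hfin.toFinset.exists_max_image (rank b) hne'
  rw [Set.Finite.mem_toFinset] at hi
  refine ⟨i, ?_⟩
  have hpe : preds b i = preds b j \ {i} := by
    ext k
    constructor
    · intro hk
      refine ⟨ltR_trans hk hi, ?_⟩
      simp only [Set.mem_singleton_iff]
      rintro rfl
      exact ltR_irrefl k hk
    · rintro ⟨hk, hki⟩
      simp only [Set.mem_singleton_iff] at hki
      rcases ltR_total hki with h' | h'
      · exact h'
      · exact absurd (hmax k (by rwa [Set.Finite.mem_toFinset])) (by
          have := rank_lt_rank H h'; omega)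
  have : rank b i = (preds b j).ncard - 1 := by
    rw [rank, hpe, Set.ncard_diff_singleton_of_mem hi]
  rw [this, rank] at *
  omega

lemma rank_surjective : Function.Surjective (rank b) := by
  have descend : ∀ d j n, rank b j = n + d → ∃ i, rank b i = n := by
    intro d
    induction d with
    | zero => exact fun j n h => ⟨j, by omega⟩
    | succ d ih =>
      intro j n h
      obtain ⟨i, hi⟩ := rank_pred H (m := n + d) (j := j) (by omega)
      exact ih i n hi
  intro n
  have hbig : ∃ j, n ≤ rank b j := by
    by_contra hc
    push_neg at hc
    have h1 : ((Finset.range (n + 1)).image (rank b)).card = n + 1 := by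
      rw [Finset.card_image_of_injective _ (rank_injective H), Finset.card_range]
    have h2 : ((Finset.range (n + 1)).image (rank b)) ⊆ Finset.range n := by
      intro m hm
      simp only [Finset.mem_image] at hm
      obtain ⟨j, _, rfl⟩ := hm
      exact Finset.mem_range.2 (hc j)
    have := Finset.card_le_card h2
    simp [h1] at this
  obtain ⟨j, hj⟩ := hbig
  exact descend (rank b j - n) j n (by omega)

lemma exists_sortPerm_strict (Λ : Finset ℕ) (hsep : ∀ i ∉ Λ, ∀ j ∈ Λ, b i < b j) :
    ∃ σ : Equiv.Perm ℕ, (∀ k, b (σ (k + 1)) ≤ b (σ k)) ∧ (∀ k, σ k ∈ Λ ↔ k < Λ.card) := by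
  have hbij : Function.Bijective (rank b) := ⟨rank_injective H, rank_surjective H⟩
  refine ⟨(Equiv.ofBijective _ hbij).symm, ?_, ?_⟩
  all_goals
    have hr : ∀ k, rank b ((Equiv.ofBijective _ hbij).symm k) = k :=
      fun k => Equiv.ofBijective_apply_symm_apply _ hbij k
  · intro k
    have h : ltR b ((Equiv.ofBijective _ hbij).symm k) ((Equiv.ofBijective _ hbij).symm (k + 1)) :=
      ltR_of_rank_lt H (by rw [hr, hr]; omega)
    rcases h with h | ⟨h, _⟩
    · exact h.le
    · exact h.ge
  · -- ranks of elements of Λ are < card, others ≥ card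
    have hin : ∀ j ∈ Λ, rank b j < Λ.card := by
      intro j hj
      have hsub : preds b j ⊂ ↑Λ := by
        constructor
        · intro k hk
          by_contra hkΛ
          have := hsep k hkΛ j hj
          rcases hk with hk | ⟨hk, _⟩ <;> linarith
        · intro hsub
          exact ltR_irrefl j (hsub hj)
      calc rank b j < (↑Λ : Set ℕ).ncard := Set.ncard_lt_ncard hsub Λ.finite_toSet
        _ = Λ.card := Set.ncard_coe_finset Λ
    have hout : ∀ j ∉ Λ, Λ.card ≤ rank b j := by
      intro j hj
      have hsub : ↑Λ ⊆ preds b j := fun i hi => Or.inl (hsep j hj i hi)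
      calc Λ.card = (↑Λ : Set ℕ).ncard := (Set.ncard_coe_finset Λ).symm
        _ ≤ rank b j := Set.ncard_le_ncard hsub (preds_finite H j)
    intro k
    constructor
    · intro h
      have := hin _ h
      rwa [hr] at this
    · intro h
      by_contra hc
      have := hout _ hc
      rw [hr] at this
      omega


omit H in
lemma exists_sortPerm (a : ℕ → ℝ) (H : ∀ j, {i | a j < a i}.Finite)
    (Λ : Finset ℕ) (hsep : ∀ j ∈ Λ, ∀ i ∉ Λ, a i ≤ a j) :
    ∃ σ : Equiv.Perm ℕ, (∀ k, a (σ (k + 1)) ≤ a (σ k)) ∧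
      ((Finset.range Λ.card).image σ = Λ) := by
  set b : ℕ → ℝ := fun i => a i + (if i ∈ Λ then 1 else 0) with hb
  have hH : ∀ j, {i | b j < b i}.Finite := by
    intro j
    apply ((H j).union Λ.finite_toSet).subset
    intro i hi
    simp only [Set.mem_setOf_eq, hb] at hi
    by_cases hiΛ : i ∈ Λ
    · exact Or.inr hiΛ
    · left
      simp only [if_neg hiΛ] at hi
      have : (0:ℝ) ≤ if j ∈ Λ then (1:ℝ) else 0 := by positivity
      simp only [Set.mem_setOf_eq]
      linarith
  have hsep' : ∀ i ∉ Λ, ∀ j ∈ Λ, b i < b j := by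
    intro i hi j hj
    simp only [hb, if_neg hi, if_pos hj]
    have := hsep j hj i hi
    linarith
  obtain ⟨σ, hmono, hΛ⟩ := exists_sortPerm_strict hH Λ hsep'
  refine ⟨σ, ?_, ?_⟩
  · intro k
    have h := hmono k
    by_cases h1 : σ (k + 1) ∈ Λ
    · have h0 : σ k ∈ Λ := (hΛ k).2 (by have := (hΛ (k+1)).1 h1; omega)
      simp only [hb, if_pos h1, if_pos h0] at h
      linarith
    · by_cases h0 : σ k ∈ Λ
      · exact hsep _ h0 _ h1
      · simp only [hb, if_neg h1, if_neg h0] at h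
        linarith
  · ext j
    simp only [Finset.mem_image, Finset.mem_range]
    constructor
    · rintro ⟨k, hk, rfl⟩
      exact (hΛ k).2 hk
    · intro hj
      exact ⟨σ.symm j, (hΛ _).1 (by simpa using hj), by simp⟩

end StmtAux15

namespace StmtAux15

section Interleave

variable {𝕜 X Y : Type*} [RCLike 𝕜] [NormedAddCommGroup X] [NormedSpace 𝕜 X]
  [NormedAddCommGroup Y] [NormedSpace 𝕜 Y]

lemma norm_pair (z : WithLp 1 (X × Y)) : ‖z‖ = ‖z.fst‖ + ‖z.snd‖ := by
  rw [WithLp.prod_norm_eq_add (by norm_num)]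
  norm_num

example (u : X) (v : Y) : ((WithLp.equiv 1 (X × Y)).symm (u, v)).fst = u := rfl

def fstL : WithLp 1 (X × Y) →L[𝕜] X :=
  (ContinuousLinearMap.fst 𝕜 X Y).comp
    (WithLp.prodContinuousLinearEquiv 1 𝕜 X Y).toContinuousLinearMap

def sndL : WithLp 1 (X × Y) →L[𝕜] Y :=
  (ContinuousLinearMap.snd 𝕜 X Y).comp
    (WithLp.prodContinuousLinearEquiv 1 𝕜 X Y).toContinuousLinearMap

lemma fstL_apply (z : WithLp 1 (X × Y)) : (fstL (𝕜 := 𝕜) z) = z.fst := rfl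
lemma sndL_apply (z : WithLp 1 (X × Y)) : (sndL (𝕜 := 𝕜) z) = z.snd := rfl

variable (bX : GreedyBasis 𝕜 X) (bY : GreedyBasis 𝕜 Y)

/-- The interleaved system. -/
def ilE (n : ℕ) : WithLp 1 (X × Y) :=
  if Even n then (WithLp.equiv 1 (X × Y)).symm (bX.e (n / 2), 0)
  else (WithLp.equiv 1 (X × Y)).symm (0, bY.e (n / 2))

/-- The coefficient functionals of the interleaved system. -/
def ilCoeff (n : ℕ) : WithLp 1 (X × Y) →L[𝕜] 𝕜 :=
  if Even n then (bX.coeff (n / 2)).comp fstL else (bY.coeff (n / 2)).comp sndL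

lemma ilE_fst (n : ℕ) :
    (ilE bX bY n).fst = if Even n then bX.e (n / 2) else 0 := by
  unfold ilE; split <;> rfl

lemma ilE_snd (n : ℕ) :
    (ilE bX bY n).snd = if Even n then 0 else bY.e (n / 2) := by
  unfold ilE; split <;> rfl

lemma ilCoeff_apply (n : ℕ) (z : WithLp 1 (X × Y)) :
    ilCoeff bX bY n z = if Even n then bX.coeff (n / 2) z.fst
      else bY.coeff (n / 2) z.snd := by
  unfold ilCoeff; split <;> rfl

/-- The even positions of `A`, halved. -/
def evens (A : Finset ℕ) : Finset ℕ := (A.filter (fun n => Even n)).image (fun n => n / 2)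

/-- The odd positions of `A`, halved. -/
def odds (A : Finset ℕ) : Finset ℕ := (A.filter (fun n => ¬ Even n)).image (fun n => n / 2)

lemma mem_evens {A : Finset ℕ} {k : ℕ} : k ∈ evens A ↔ 2 * k ∈ A := by
  simp only [evens, Finset.mem_image, Finset.mem_filter]
  constructor
  · rintro ⟨j, ⟨hj, ⟨c, hc⟩⟩, hjk⟩
    have hjk' : j / 2 = k := hjk
    have : 2 * k = j := by omega
    rwa [this]
  · intro h
    exact ⟨2 * k, ⟨h, ⟨k, by omega⟩⟩, show 2 * k / 2 = k by omega⟩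

lemma mem_odds {A : Finset ℕ} {k : ℕ} : k ∈ odds A ↔ 2 * k + 1 ∈ A := by
  simp only [odds, Finset.mem_image, Finset.mem_filter, Nat.even_iff]
  constructor
  · rintro ⟨j, ⟨hj, hc⟩, hjk⟩
    have hjk' : j / 2 = k := hjk
    have : 2 * k + 1 = j := by omega
    rwa [this]
  · intro h
    exact ⟨2 * k + 1, ⟨h, by omega⟩, show (2 * k + 1) / 2 = k by omega⟩

lemma card_evens_add_card_odds (A : Finset ℕ) : (evens A).card + (odds A).card = A.card := by
  have h1 : (evens A).card = (A.filter (fun n => Even n)).card := by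
    apply Finset.card_image_of_injOn
    intro i hi j hj hij
    simp only [Finset.coe_filter, Set.mem_setOf_eq] at hi hj
    obtain ⟨-, c, hc⟩ := hi; obtain ⟨-, d, hd⟩ := hj
    have hij' : i / 2 = j / 2 := hij
    omega
  have h2 : (odds A).card = (A.filter (fun n => ¬ Even n)).card := by
    apply Finset.card_image_of_injOn
    intro i hi j hj hij
    simp only [Finset.coe_filter, Set.mem_setOf_eq, Nat.even_iff] at hi hj
    have hij' : i / 2 = j / 2 := hij
    omega
  rw [h1, h2, Finset.card_filter_add_card_filter_not]

lemma S_apply' (b : GreedyBasis 𝕜 X) (A : Finset ℕ) (x : X) :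
    b.S A x = ∑ j ∈ A, b.coeff j x • b.e j := by
  simp [GreedyBasis.S, ContinuousLinearMap.sum_apply]

lemma ilS_fst (A : Finset ℕ) (z : WithLp 1 (X × Y)) :
    (∑ j ∈ A, ilCoeff bX bY j z • ilE bX bY j).fst = bX.S (evens A) z.fst := by
  have : (∑ j ∈ A, ilCoeff bX bY j z • ilE bX bY j).fst
      = fstL (𝕜 := 𝕜) (∑ j ∈ A, ilCoeff bX bY j z • ilE bX bY j) := rfl
  rw [this, map_sum, S_apply']
  have heq : ∀ j ∈ A, fstL (𝕜 := 𝕜) (ilCoeff bX bY j z • ilE bX bY j)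
      = if Even j then bX.coeff (j / 2) z.fst • bX.e (j / 2) else 0 := by
    intro j _
    rw [map_smul, fstL_apply, ilE_fst, ilCoeff_apply]
    split
    · rfl
    · simp
  rw [Finset.sum_congr rfl heq, ← Finset.sum_filter]
  unfold evens
  rw [Finset.sum_image]
  intro i hi j hj hij
  simp only [Finset.mem_coe, Finset.mem_filter] at hi hj
  obtain ⟨-, c, hc⟩ := hi; obtain ⟨-, d, hd⟩ := hj
  have hij' : i / 2 = j / 2 := hij
  omega

lemma ilS_snd (A : Finset ℕ) (z : WithLp 1 (X × Y)) :
    (∑ j ∈ A, ilCoeff bX bY j z • ilE bX bY j).snd = bY.S (odds A) z.snd := by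
  have : (∑ j ∈ A, ilCoeff bX bY j z • ilE bX bY j).snd
      = sndL (𝕜 := 𝕜) (∑ j ∈ A, ilCoeff bX bY j z • ilE bX bY j) := rfl
  rw [this, map_sum, S_apply']
  have heq : ∀ j ∈ A, sndL (𝕜 := 𝕜) (ilCoeff bX bY j z • ilE bX bY j)
      = if ¬ Even j then bY.coeff (j / 2) z.snd • bY.e (j / 2) else 0 := by
    intro j _
    rw [map_smul, sndL_apply, ilE_snd, ilCoeff_apply]
    split <;> rename_i hev
    · simp [if_neg (not_not_intro hev)]
    · simp [if_pos hev]
  rw [Finset.sum_congr rfl heq, ← Finset.sum_filter]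
  unfold odds
  rw [Finset.sum_image]
  intro i hi j hj hij
  simp only [Finset.mem_coe, Finset.mem_filter, Nat.even_iff] at hi hj
  obtain ⟨-, h1⟩ := hi; obtain ⟨-, h2⟩ := hj
  have hij' : i / 2 = j / 2 := hij
  omega

lemma evens_range (n : ℕ) : evens (Finset.range n) = Finset.range ((n + 1) / 2) := by
  ext k
  rw [mem_evens, Finset.mem_range, Finset.mem_range]
  omega

lemma odds_range (n : ℕ) : odds (Finset.range n) = Finset.range (n / 2) := by
  ext k
  rw [mem_odds, Finset.mem_range, Finset.mem_range]
  omega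

lemma evens_double (B : Finset ℕ) : evens (B.image (fun k => 2 * k)) = B := by
  ext k
  rw [mem_evens, Finset.mem_image]
  constructor
  · rintro ⟨j, hj, hjk⟩
    have : j = k := by omega
    rwa [← this]
  · intro h
    exact ⟨k, h, rfl⟩

lemma odds_double (B : Finset ℕ) : odds (B.image (fun k => 2 * k)) = ∅ := by
  rw [Finset.eq_empty_iff_forall_notMem]
  intro k hk
  rw [mem_odds, Finset.mem_image] at hk
  obtain ⟨j, _, hj⟩ := hk
  omega

lemma G_eq_S {W : Type*} [NormedAddCommGroup W] [NormedSpace 𝕜 W] (b : GreedyBasis 𝕜 W)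
    (N : ℕ) (π : Equiv.Perm ℕ) (x : W) :
    b.G N π x = b.S ((Finset.range N).image π) x := by
  rw [S_apply', Finset.sum_image (fun a _ c _ h => π.injective h)]
  rfl

lemma greedy_anti {W : Type*} [NormedAddCommGroup W] [NormedSpace 𝕜 W] (b : GreedyBasis 𝕜 W)
    {x : W} {π : Equiv.Perm ℕ} (h : b.Greedy x π) :
    ∀ {k l : ℕ}, k ≤ l → ‖b.coeff (π l) x‖ ≤ ‖b.coeff (π k) x‖ := by
  intro k l hkl
  induction l, hkl using Nat.le_induction with
  | base => exact le_rfl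
  | succ n hn ih => exact (h n).trans ih

lemma greedy_finite {W : Type*} [NormedAddCommGroup W] [NormedSpace 𝕜 W] (b : GreedyBasis 𝕜 W)
    {x : W} {π : Equiv.Perm ℕ} (h : b.Greedy x π) (j : ℕ) :
    {m | ‖b.coeff j x‖ < ‖b.coeff m x‖}.Finite := by
  apply ((Set.finite_Iio (π.symm j)).image π).subset
  intro m hm
  simp only [Set.mem_setOf_eq] at hm
  refine ⟨π.symm m, ?_, by simp⟩
  simp only [Set.mem_Iio]
  by_contra hc
  push_neg at hc
  have h2 := greedy_anti b h hc
  simp only [Equiv.apply_symm_apply] at h2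
  exact absurd hm (by linarith)

lemma il_expansion (z : WithLp 1 (X × Y)) :
    Tendsto (fun n => ∑ j ∈ Finset.range n, ilCoeff bX bY j z • ilE bX bY j) atTop
      (nhds z) := by
  set s := fun n => ∑ j ∈ Finset.range n, ilCoeff bX bY j z • ilE bX bY j with hs
  set E := WithLp.prodContinuousLinearEquiv 1 𝕜 X Y with hE
  have key : ∀ n, E (s n)
      = (bX.S (Finset.range ((n + 1) / 2)) z.fst, bY.S (Finset.range (n / 2)) z.snd) := by
    intro n
    have h1 : E (s n) = ((s n).fst, (s n).snd) := rfl
    rw [h1, hs]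
    simp only []
    rw [ilS_fst, ilS_snd, evens_range, odds_range]
  have hdiv1 : Tendsto (fun n : ℕ => (n + 1) / 2) atTop atTop :=
    tendsto_atTop_atTop.mpr fun m => ⟨2 * m, fun a ha => by omega⟩
  have hdiv2 : Tendsto (fun n : ℕ => n / 2) atTop atTop :=
    tendsto_atTop_atTop.mpr fun m => ⟨2 * m, fun a ha => by omega⟩
  have hXc : Tendsto (fun n => bX.S (Finset.range ((n + 1) / 2)) z.fst) atTop (nhds z.fst) := by
    refine ((bX.expansion z.fst).comp hdiv1).congr fun n => ?_
    simp only [Function.comp_apply, S_apply']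
  have hYc : Tendsto (fun n => bY.S (Finset.range (n / 2)) z.snd) atTop (nhds z.snd) := by
    refine ((bY.expansion z.snd).comp hdiv2).congr fun n => ?_
    simp only [Function.comp_apply, S_apply']
  have h2 : Tendsto (fun n => E (s n)) atTop (nhds (z.fst, z.snd)) := by
    rw [funext key]
    exact hXc.prodMk_nhds hYc
  have h4 : Tendsto s atTop (nhds (E.symm (z.fst, z.snd))) := by
    have h3 := (E.symm.continuous.tendsto (z.fst, z.snd)).comp h2
    refine h3.congr fun n => ?_
    exact E.symm_apply_apply _
  have h5 : E.symm (z.fst, z.snd) = z := rfl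
  rwa [h5] at h4

/-- The interleaved greedy basis. -/
def il : GreedyBasis 𝕜 (WithLp 1 (X × Y)) where
  e := ilE bX bY
  coeff := ilCoeff bX bY
  norm_e := by
    intro j
    rw [norm_pair, ilE_fst, ilE_snd]
    split <;> simp [bX.norm_e, bY.norm_e]
  biorth := by
    intro i j
    rw [ilCoeff_apply, ilE_fst, ilE_snd]
    by_cases hi : Even i <;> by_cases hj : Even j
    · rw [if_pos hi, if_pos hj, bX.biorth]
      obtain ⟨c, hc⟩ := hi; obtain ⟨d, hd⟩ := hj
      exact if_congr (by constructor <;> (intro h; omega)) rfl rfl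
    · rw [if_pos hi, if_neg hj, map_zero, if_neg]
      rintro rfl
      exact hj hi
    · rw [if_neg hi, if_pos hj, map_zero, if_neg]
      rintro rfl
      exact hi hj
    · rw [if_neg hi, if_neg hj, bY.biorth]
      rw [Nat.even_iff] at hi hj
      exact if_congr (by constructor <;> (intro h; omega)) rfl rfl
  expansion := il_expansion bX bY

@[simp] lemma il_coeff_eq : (il bX bY).coeff = ilCoeff bX bY := rfl
@[simp] lemma il_e_eq : (il bX bY).e = ilE bX bY := rfl

lemma normS (A : Finset ℕ) (z : WithLp 1 (X × Y)) :
    ‖(il bX bY).S A z‖ = ‖bX.S (evens A) z.fst‖ + ‖bY.S (odds A) z.snd‖ := by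
  rw [S_apply']
  simp only [il_coeff_eq, il_e_eq]
  rw [norm_pair, ilS_fst, ilS_snd]

lemma coeff_double (z : WithLp 1 (X × Y)) (i : ℕ) :
    (il bX bY).coeff (2 * i) z = bX.coeff i z.fst := by
  rw [il_coeff_eq, ilCoeff_apply, if_pos ⟨i, by omega⟩]
  have h : 2 * i / 2 = i := by omega
  rw [h]

lemma coeff_double_add_one (z : WithLp 1 (X × Y)) (i : ℕ) :
    (il bX bY).coeff (2 * i + 1) z = bY.coeff i z.snd := by
  rw [il_coeff_eq, ilCoeff_apply, if_neg (by rw [Nat.even_iff]; omega)]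
  have h : (2 * i + 1) / 2 = i := by omega
  rw [h]

lemma bound_S_greedySet {W : Type*} [NormedAddCommGroup W] [NormedSpace 𝕜 W]
    (b : GreedyBasis 𝕜 W) {K : ℝ≥0} (hqg : b.QuasiGreedy K) (u : W) (Λ : Finset ℕ)
    (Hfin : ∀ j, {i | ‖b.coeff j u‖ < ‖b.coeff i u‖}.Finite)
    (hsep : ∀ j ∈ Λ, ∀ i ∉ Λ, ‖b.coeff i u‖ ≤ ‖b.coeff j u‖) :
    ‖b.S Λ u‖ ≤ K * ‖u‖ := by
  obtain ⟨σ, hmono, himg⟩ := exists_sortPerm (fun j => ‖b.coeff j u‖) Hfin Λ hsep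
  have hg : b.Greedy u σ := hmono
  have h := hqg u σ hg Λ.card
  rwa [G_eq_S, himg] at h

lemma il_quasiGreedy {KX KY : ℝ≥0} (hX : bX.QuasiGreedy KX) (hY : bY.QuasiGreedy KY) :
    (il bX bY).QuasiGreedy (max KX KY) := by
  intro z π hπ N
  set Λ := (Finset.range N).image π with hΛ
  rw [G_eq_S, ← hΛ]
  have hmemΛ : ∀ m, m ∈ Λ ↔ π.symm m < N := by
    intro m
    rw [hΛ, Finset.mem_image]
    constructor
    · rintro ⟨k, hk, rfl⟩
      simpa using Finset.mem_range.1 hk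
    · intro h
      exact ⟨π.symm m, Finset.mem_range.2 h, by simp⟩
  -- X side
  have HfinX : ∀ j, {i | ‖bX.coeff j z.fst‖ < ‖bX.coeff i z.fst‖}.Finite := by
    intro j
    apply (((greedy_finite (il bX bY) hπ (2 * j)).preimage
      (Function.Injective.injOn (f := fun i : ℕ => 2 * i) fun a c h => by have h' : 2 * a = 2 * c := h; omega))).subset
    intro i hi
    simp only [Set.mem_setOf_eq] at hi
    simp only [Set.mem_preimage, Set.mem_setOf_eq, coeff_double]
    exact hi
  have hsepX : ∀ j ∈ evens Λ, ∀ i ∉ evens Λ, ‖bX.coeff i z.fst‖ ≤ ‖bX.coeff j z.fst‖ := by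
    intro j hj i hi
    rw [mem_evens, hmemΛ] at hj hi
    push_neg at hi
    have h := greedy_anti (il bX bY) hπ (le_of_lt (lt_of_lt_of_le hj hi))
    simp only [Equiv.apply_symm_apply, coeff_double] at h
    exact h
  have hXb : ‖bX.S (evens Λ) z.fst‖ ≤ KX * ‖z.fst‖ :=
    bound_S_greedySet bX hX z.fst (evens Λ) HfinX hsepX
  -- Y side
  have HfinY : ∀ j, {i | ‖bY.coeff j z.snd‖ < ‖bY.coeff i z.snd‖}.Finite := by
    intro j
    apply (((greedy_finite (il bX bY) hπ (2 * j + 1)).preimage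
      (Function.Injective.injOn (f := fun i : ℕ => 2 * i + 1) fun a c h => by have h' : 2 * a + 1 = 2 * c + 1 := h; omega))).subset
    intro i hi
    simp only [Set.mem_setOf_eq] at hi
    simp only [Set.mem_preimage, Set.mem_setOf_eq, coeff_double_add_one]
    exact hi
  have hsepY : ∀ j ∈ odds Λ, ∀ i ∉ odds Λ, ‖bY.coeff i z.snd‖ ≤ ‖bY.coeff j z.snd‖ := by
    intro j hj i hi
    rw [mem_odds, hmemΛ] at hj hi
    push_neg at hi
    have h := greedy_anti (il bX bY) hπ (le_of_lt (lt_of_lt_of_le hj hi))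
    simp only [Equiv.apply_symm_apply, coeff_double_add_one] at h
    exact h
  have hYb : ‖bY.S (odds Λ) z.snd‖ ≤ KY * ‖z.snd‖ :=
    bound_S_greedySet bY hY z.snd (odds Λ) HfinY hsepY
  -- combine
  rw [normS, norm_pair z, NNReal.coe_max]
  have h1 : (KX : ℝ) * ‖z.fst‖ ≤ max (KX : ℝ) KY * ‖z.fst‖ :=
    mul_le_mul_of_nonneg_right (le_max_left _ _) (norm_nonneg _)
  have h2 : (KY : ℝ) * ‖z.snd‖ ≤ max (KX : ℝ) KY * ‖z.snd‖ :=
    mul_le_mul_of_nonneg_right (le_max_right _ _) (norm_nonneg _)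
  rw [mul_add]
  linarith

lemma il_kN (N : ℕ) : (il bX bY).kN N = max (bX.kN N) (bY.kN N) := by
  apply le_antisymm
  · rw [GreedyBasis.kN]
    apply iSup₂_le
    intro A hA
    by_cases hx : bX.kN N = ⊤
    · simp [hx]
    by_cases hy : bY.kN N = ⊤
    · simp [hy]
    set MX := (bX.kN N).toNNReal with hMXd
    set MY := (bY.kN N).toNNReal with hMYd
    have hMX : ∀ B : Finset ℕ, B.card ≤ N → ‖bX.S B‖ ≤ (MX : ℝ) := by
      intro B hB
      have h1 : (‖bX.S B‖₊ : ℝ≥0∞) ≤ bX.kN N := le_iSup₂_of_le B hB le_rfl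
      rw [← ENNReal.coe_toNNReal hx, ENNReal.coe_le_coe] at h1
      exact_mod_cast h1
    have hMY : ∀ B : Finset ℕ, B.card ≤ N → ‖bY.S B‖ ≤ (MY : ℝ) := by
      intro B hB
      have h1 : (‖bY.S B‖₊ : ℝ≥0∞) ≤ bY.kN N := le_iSup₂_of_le B hB le_rfl
      rw [← ENNReal.coe_toNNReal hy, ENNReal.coe_le_coe] at h1
      exact_mod_cast h1
    have hcards := card_evens_add_card_odds A
    have hb : ‖(il bX bY).S A‖ ≤ ((max MX MY : ℝ≥0) : ℝ) := by
      apply ContinuousLinearMap.opNorm_le_bound _ (by positivity)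
      intro z
      rw [normS, norm_pair z]
      have b1 : ‖bX.S (evens A) z.fst‖ ≤ (MX : ℝ) * ‖z.fst‖ :=
        le_trans ((bX.S (evens A)).le_opNorm _)
          (mul_le_mul_of_nonneg_right (hMX _ (by omega)) (norm_nonneg _))
      have b2 : ‖bY.S (odds A) z.snd‖ ≤ (MY : ℝ) * ‖z.snd‖ :=
        le_trans ((bY.S (odds A)).le_opNorm _)
          (mul_le_mul_of_nonneg_right (hMY _ (by omega)) (norm_nonneg _))
      rw [NNReal.coe_max, mul_add]
      have h1 : (MX : ℝ) * ‖z.fst‖ ≤ max (MX : ℝ) MY * ‖z.fst‖ :=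
        mul_le_mul_of_nonneg_right (le_max_left _ _) (norm_nonneg _)
      have h2 : (MY : ℝ) * ‖z.snd‖ ≤ max (MX : ℝ) MY * ‖z.snd‖ :=
        mul_le_mul_of_nonneg_right (le_max_right _ _) (norm_nonneg _)
      linarith
    calc (‖(il bX bY).S A‖₊ : ℝ≥0∞) ≤ ((max MX MY : ℝ≥0) : ℝ≥0∞) := by
          rw [ENNReal.coe_le_coe]
          exact_mod_cast hb
      _ = max ((MX : ℝ≥0∞)) ((MY : ℝ≥0∞)) := ENNReal.coe_max _ _
      _ = max (bX.kN N) (bY.kN N) := by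
          rw [hMXd, hMYd, ENNReal.coe_toNNReal hx, ENNReal.coe_toNNReal hy]
  · rw [max_le_iff]
    constructor
    · rw [GreedyBasis.kN]
      apply iSup₂_le
      intro B hB
      have hinj : Function.Injective (fun k : ℕ => 2 * k) := fun a c h => by have h' : 2 * a = 2 * c := h; omega
      have hcard : (B.image (fun k => 2 * k)).card ≤ N := by
        rw [Finset.card_image_of_injective _ hinj]
        exact hB
      have hle : ‖bX.S B‖ ≤ ‖(il bX bY).S (B.image (fun k => 2 * k))‖ := by
        apply ContinuousLinearMap.opNorm_le_bound _ (norm_nonneg _)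
        intro u
        set w : WithLp 1 (X × Y) := (WithLp.equiv 1 (X × Y)).symm (u, 0) with hw
        have hww : ‖w‖ = ‖u‖ := by
          rw [norm_pair]
          show ‖u‖ + ‖(0 : Y)‖ = ‖u‖
          simp
        have key : ‖(il bX bY).S (B.image (fun k => 2 * k)) w‖ = ‖bX.S B u‖ := by
          rw [normS, evens_double, odds_double]
          show ‖bX.S B u‖ + ‖bY.S ∅ 0‖ = ‖bX.S B u‖
          rw [map_zero]
          simp
        calc ‖bX.S B u‖ = ‖(il bX bY).S (B.image (fun k => 2 * k)) w‖ := key.symm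
          _ ≤ ‖(il bX bY).S (B.image (fun k => 2 * k))‖ * ‖w‖ := ContinuousLinearMap.le_opNorm _ _
          _ = ‖(il bX bY).S (B.image (fun k => 2 * k))‖ * ‖u‖ := by rw [hww]
      calc (‖bX.S B‖₊ : ℝ≥0∞) ≤ (‖(il bX bY).S (B.image (fun k => 2 * k))‖₊ : ℝ≥0∞) := by
            rw [ENNReal.coe_le_coe]
            exact_mod_cast hle
        _ ≤ (il bX bY).kN N := le_iSup₂_of_le _ hcard le_rfl
    · rw [GreedyBasis.kN]
      apply iSup₂_le
      intro B hB
      have hinj : Function.Injective (fun k : ℕ => 2 * k + 1) := fun a c h => by have h' : 2 * a + 1 = 2 * c + 1 := h; omega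
      have hcard : (B.image (fun k => 2 * k + 1)).card ≤ N := by
        rw [Finset.card_image_of_injective _ hinj]
        exact hB
      have hev : evens (B.image (fun k => 2 * k + 1)) = ∅ := by
        rw [Finset.eq_empty_iff_forall_notMem]
        intro k hk
        rw [mem_evens, Finset.mem_image] at hk
        obtain ⟨j, _, hj⟩ := hk
        omega
      have hod : odds (B.image (fun k => 2 * k + 1)) = B := by
        ext k
        rw [mem_odds, Finset.mem_image]
        constructor
        · rintro ⟨j, hj, hjk⟩
          have : j = k := by omega
          rwa [← this]
        · intro h
          exact ⟨k, h, rfl⟩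
      have hle : ‖bY.S B‖ ≤ ‖(il bX bY).S (B.image (fun k => 2 * k + 1))‖ := by
        apply ContinuousLinearMap.opNorm_le_bound _ (norm_nonneg _)
        intro u
        set w : WithLp 1 (X × Y) := (WithLp.equiv 1 (X × Y)).symm (0, u) with hw
        have hww : ‖w‖ = ‖u‖ := by
          rw [norm_pair]
          show ‖(0 : X)‖ + ‖u‖ = ‖u‖
          simp
        have key : ‖(il bX bY).S (B.image (fun k => 2 * k + 1)) w‖ = ‖bY.S B u‖ := by
          rw [normS, hev, hod]
          show ‖bX.S ∅ 0‖ + ‖bY.S B u‖ = ‖bY.S B u‖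
          rw [map_zero]
          simp
        calc ‖bY.S B u‖ = ‖(il bX bY).S (B.image (fun k => 2 * k + 1)) w‖ := key.symm
          _ ≤ ‖(il bX bY).S (B.image (fun k => 2 * k + 1))‖ * ‖w‖ :=
              ContinuousLinearMap.le_opNorm _ _
          _ = ‖(il bX bY).S (B.image (fun k => 2 * k + 1))‖ * ‖u‖ := by rw [hww]
      calc (‖bY.S B‖₊ : ℝ≥0∞) ≤ (‖(il bX bY).S (B.image (fun k => 2 * k + 1))‖₊ : ℝ≥0∞) := by
            rw [ENNReal.coe_le_coe]
            exact_mod_cast hle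
        _ ≤ (il bX bY).kN N := le_iSup₂_of_le _ hcard le_rfl

end Interleave

end StmtAux15

/-- The interleaved system `(e₁, f₁, e₂, f₂, …)` of two normalized quasi-greedy bases is a
quasi-greedy basis of `X ⊕₁ Y`, and `k_N^{X⊕Y} = max {k_N^X, k_N^Y}`. -/
theorem stmt15 {Y : Type*} [NormedAddCommGroup Y] [NormedSpace 𝕜 Y]
    (bX : GreedyBasis 𝕜 X) (bY : GreedyBasis 𝕜 Y) (KX KY : ℝ≥0)
    (hX : bX.QuasiGreedy KX) (hY : bY.QuasiGreedy KY) :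
    ∃ b : GreedyBasis 𝕜 (WithLp 1 (X × Y)),
      (∀ i : ℕ, b.e (2 * i) = (WithLp.equiv 1 (X × Y)).symm (bX.e i, 0)) ∧
      (∀ i : ℕ, b.e (2 * i + 1) = (WithLp.equiv 1 (X × Y)).symm (0, bY.e i)) ∧
      (∃ K : ℝ≥0, b.QuasiGreedy K) ∧
      (∀ N : ℕ, b.kN N = max (bX.kN N) (bY.kN N)) := by
  refine ⟨StmtAux15.il bX bY, ?_, ?_, ⟨max KX KY, StmtAux15.il_quasiGreedy bX bY hX hY⟩,
    StmtAux15.il_kN bX bY⟩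
  · intro i
    show StmtAux15.ilE bX bY (2 * i) = _
    rw [StmtAux15.ilE, if_pos ⟨i, by omega⟩]
    have h : 2 * i / 2 = i := by omega
    rw [h]
  · intro i
    show StmtAux15.ilE bX bY (2 * i + 1) = _
    rw [StmtAux15.ilE, if_neg (by rw [Nat.even_iff]; omega)]
    have h : (2 * i + 1) / 2 = i := by omega
    rw [h]
end
end

section
/- Let 1 ≤ c_1 ≤ c_2 ≤ ... be a nondecreasing unbounded sequence with c_n ≤ n. Then there exists a Banach space X with a normalized monotone basis (e_i) such that k_{2N} ≤ max{1, c_N} for all N, yet (e_i) is not unconditional with constant coefficients (hence not quasi-greedy). -/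
set_option synthInstance.maxHeartbeats 1000000
set_option maxHeartbeats 2000000


open Finset NNReal ENNReal Filter

noncomputable section

variable (𝕜 X : Type*) [RCLike 𝕜] [NormedAddCommGroup X] [NormedSpace 𝕜 X]

variable {𝕜 X}

/-- A Banach space with a normalized monotone basis whose projection constants satisfy
`k_{2N} ≤ max {1, c_N}`, yet which is not unconditional with constant coefficients
(hence not quasi-greedy). -/
structure Stmt17Witness (c : ℕ → ℝ) : Type 1 where
  carrier : Type
  [grp : NormedAddCommGroup carrier]
  [mod : NormedSpace ℝ carrier]
  [comp : CompleteSpace carrier]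
  basis : GreedyBasis ℝ carrier
  /-- the basis is monotone -/
  monotone_basis : ∀ (x : carrier) (n : ℕ),
    ‖∑ j ∈ Finset.range n, basis.coeff j x • basis.e j‖ ≤ ‖x‖
  /-- `k_{2N} ≤ max {1, c_N}` -/
  proj_bound : ∀ N : ℕ, 1 ≤ N → ∀ A : Finset ℕ, A.card ≤ 2 * N →
    ‖basis.S A‖ ≤ max 1 (c N)
  /-- the basis is not unconditional with constant coefficients -/
  not_ucc : ¬ ∃ C : ℝ, ∀ A' A : Finset ℕ, A' ⊆ A →
    ‖∑ i ∈ A', basis.e i‖ ≤ C * ‖∑ i ∈ A, basis.e i‖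

namespace Stmt17Aux

variable (c : ℕ → ℝ)

def mq (n : ℕ) : ℝ := (Finset.Icc 1 (max 1 n)).inf' (by simp) (fun j => c j / j)
def d (n : ℕ) : ℝ := n * mq c n

/-- the blocks `S_j = {5^j+1, …, 5^j+2j}`. -/
def blk (j : ℕ) : Finset ℕ := Finset.Ioc (5^j) (5^j + 2*j)

lemma blk_card (j : ℕ) : (blk j).card = 2*j := by simp [blk]

lemma mem_blk {i j : ℕ} : i ∈ blk j ↔ 5^j < i ∧ i ≤ 5^j + 2*j := by simp [blk]

lemma lt_pow5 (j : ℕ) : j < 5^j := Nat.lt_pow_self (by norm_num)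

lemma blk_disjoint {j j' : ℕ} (h : j ≠ j') : Disjoint (blk j) (blk j') := by
  wlog hlt : j < j' generalizing j j'
  · exact (this h.symm (by omega)).symm
  rw [Finset.disjoint_left]
  intro i hi hi'
  rw [mem_blk] at hi hi'
  have h5 : 5^j + 2*j < 5^(j+1) := by
    have := lt_pow5 j
    have : 5^(j+1) = 5 * 5^j := by ring
    omega
  have : 5^(j+1) ≤ 5^j' := Nat.pow_le_pow_right (by norm_num) (by omega)
  omega

/-- index `i` is in at most one block, with index `< i`. -/
lemma blk_index_lt {i j : ℕ} (h : i ∈ blk j) : j < i := by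
  rw [mem_blk] at h
  exact lt_trans (lt_pow5 j) h.1

/-- alternating sum over an integer interval: closed form. -/
lemma alt_sum_Ioc_eq (a : ℕ) : ∀ b, a ≤ b →
    ∑ i ∈ Finset.Ioc a b, (-1:ℝ)^i = ((-1)^b - (-1)^a)/2 := by
  intro b
  induction b with
  | zero => intro h; interval_cases a <;> simp
  | succ n ih =>
    intro h
    rcases Nat.lt_or_ge n a with h2 | h2
    · have : a = n + 1 := by omega
      subst this; simp
    · have hins : Finset.Ioc a (n+1) = insert (n+1) (Finset.Ioc a n) := by
        ext x; simp; omega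
      rw [hins, Finset.sum_insert (by simp), ih h2, pow_succ]
      ring

lemma alt_sum_Ioc (a b : ℕ) : |∑ i ∈ Finset.Ioc a b, (-1:ℝ)^i| ≤ 1 := by
  rcases Nat.lt_or_ge b a with h | h
  · rw [Finset.Ioc_eq_empty (by omega)]; simp
  · rw [alt_sum_Ioc_eq a b h]
    have h1 : |(-1:ℝ)^b| = 1 := by simp
    have h2 : |(-1:ℝ)^a| = 1 := by simp
    calc |((-1:ℝ)^b - (-1)^a)/2| ≤ (|(-1:ℝ)^b| + |(-1)^a|)/2 := by
          rw [abs_div]; gcongr ?_ / ?_; exact abs_sub _ _; simp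
      _ = 1 := by rw [h1, h2]; norm_num

lemma Ioc_filter_le (a b m : ℕ) :
    (Finset.Ioc a b).filter (· ≤ m) = Finset.Ioc a (min b m) := by
  ext x; simp [Finset.mem_filter]; omega

variable {c}
variable (h1 : 1 ≤ c 1) (hmono : Monotone c) (hle : ∀ n : ℕ, 1 ≤ n → c n ≤ n)

include h1 hmono in
lemma c_pos {j : ℕ} (hj : 1 ≤ j) : 0 < c j := lt_of_lt_of_le one_pos (h1.trans (hmono hj))

include h1 hmono in
lemma mq_pos (n : ℕ) : 0 < mq c n := by
  rw [mq, Finset.lt_inf'_iff]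
  intro j hj
  simp only [Finset.mem_Icc] at hj
  exact div_pos (c_pos h1 hmono hj.1) (by exact_mod_cast Nat.lt_of_lt_of_le one_pos hj.1)

lemma mq_anti : Antitone (mq c) := by
  intro a b hab
  exact Finset.inf'_mono _ (Finset.Icc_subset_Icc le_rfl (by omega)) _

lemma mq_le {n : ℕ} (hn : 1 ≤ n) : mq c n ≤ c n / n := by
  apply Finset.inf'_le
  simp [Finset.mem_Icc, hn, le_max_right]

lemma d_le_c {n : ℕ} (hn : 1 ≤ n) : d c n ≤ c n := by
  have h := mq_le (c := c) hn
  have hn' : (0:ℝ) < n := by exact_mod_cast hn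
  calc d c n = n * mq c n := rfl
    _ ≤ n * (c n / n) := by nlinarith
    _ = c n := by field_simp

include h1 hmono hle in
lemma d_le_self (n : ℕ) : d c n ≤ n := by
  rcases Nat.eq_zero_or_pos n with h | h
  · simp [h, d]
  · exact (d_le_c h).trans (hle n h)

include h1 hmono in
lemma d_nonneg (n : ℕ) : 0 ≤ d c n :=
  mul_nonneg (Nat.cast_nonneg n) (mq_pos h1 hmono n).le

include h1 hmono in
lemma d_mono {a b : ℕ} (ha : 1 ≤ a) (hab : a ≤ b) : d c a ≤ d c b := by
  induction b with
  | zero => omega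
  | succ n ih =>
    rcases Nat.lt_or_ge a (n+1) with h | h
    · have hb : a ≤ n := by omega
      refine (ih hb).trans ?_
      -- d n ≤ d (n+1)
      have hn1 : 1 ≤ n := le_trans ha hb
      obtain ⟨j, hj, hjeq⟩ := Finset.exists_mem_eq_inf' (s := Finset.Icc 1 (max 1 (n+1)))
        (by simp) (fun j => c j / j)
      rcases Nat.lt_or_ge n j with hj2 | hj2
      · -- j = n+1, mq (n+1) = c (n+1)/(n+1), d (n+1) = c(n+1) ≥ c n ≥ d n
        simp only [Finset.mem_Icc] at hj
        have hj3 : j = n + 1 := by omega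
        have : mq c (n+1) = c (n+1) / (n+1) := by
          rw [mq, hjeq, hj3]; push_cast; ring
        have hd : d c (n+1) = c (n+1) := by
          rw [d, this]; field_simp; push_cast; ring
        rw [hd]
        exact (d_le_c hn1).trans (hmono (by omega))
      · -- min attained at j ≤ n, so mq (n+1) = mq n
        have hmqeq : mq c (n+1) = mq c n := by
          apply le_antisymm (mq_anti (by omega))
          show mq c n ≤ mq c (n+1)
          rw [mq, mq, hjeq]
          apply Finset.inf'_le
          simp only [Finset.mem_Icc] at hj ⊢
          omega
        rw [d, d, hmqeq]
        have := (mq_pos h1 hmono n).le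
        have : (n:ℝ) ≤ (n+1:ℕ) := by exact_mod_cast Nat.le_succ n
        nlinarith [(mq_pos h1 hmono n).le]
    · have : a = n + 1 := by omega
      subst this; rfl

include h1 hmono in
lemma d_unbdd (hunbdd : ∀ M : ℝ, ∃ n : ℕ, M < c n) (M : ℝ) : ∃ n : ℕ, 1 ≤ n ∧ M < d c n := by
  rcases le_or_gt M 0 with hM | hM
  · refine ⟨1, le_rfl, lt_of_le_of_lt hM ?_⟩
    have : d c 1 = c 1 := by
      rw [d, mq]; norm_num
    rw [this]; linarith
  · obtain ⟨n₀, hn₀⟩ := hunbdd M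
    have hn₀' : M < c (max 1 n₀) := lt_of_lt_of_le hn₀ (hmono (le_max_right _ _))
    set p := max 1 n₀ with hp
    have hp1 : 1 ≤ p := le_max_left _ _
    set n : ℕ := p * (⌈M⌉₊ + 1) + 1 with hn
    refine ⟨n, hn ▸ Nat.le_add_left 1 _, ?_⟩
    by_contra hcon
    push_neg at hcon
    -- d n ≤ M
    have hn1 : 1 ≤ n := hn ▸ Nat.le_add_left 1 _
    obtain ⟨j, hj, hjeq⟩ := Finset.exists_mem_eq_inf' (s := Finset.Icc 1 (max 1 n))
      (by simp) (fun j => c j / j)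
    simp only [Finset.mem_Icc, max_eq_right hn1] at hj
    have hmq : mq c n = c j / j := by rw [mq, hjeq]
    have hj0 : (0:ℝ) < j := by exact_mod_cast hj.1
    have hn0 : (0:ℝ) < n := by exact_mod_cast hn1
    have hcj : c j ≤ M * j / n := by
      have hthis : (n:ℝ) * (c j / j) ≤ M := by
        rw [← hmq]; exact hcon
      have h2 := mul_le_mul_of_nonneg_right hthis hj0.le
      have h3 : (n:ℝ) * (c j / ↑j) * ↑j = ↑n * c j := by field_simp
      rw [h3] at h2
      rw [le_div_iff₀ hn0]; nlinarith
    rcases Nat.lt_or_ge p j with hcase | hcase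
    · -- j > p : c j ≥ c p > M but c j ≤ M j / n ≤ M
      have h1' : M < c j := lt_of_lt_of_le hn₀' (hmono hcase.le)
      have : M * j / n ≤ M := by
        rw [div_le_iff₀ hn0]
        have : (j:ℝ) ≤ n := by exact_mod_cast hj.2
        nlinarith
      linarith
    · -- j ≤ p : c j ≥ 1 but M j / n < 1
      have h1' : (1:ℝ) ≤ c j := h1.trans (hmono hj.1)
      have hjp : (j:ℝ) ≤ p := by exact_mod_cast hcase
      have hMn : M * p < n := by
        have h2 : M < (⌈M⌉₊:ℝ) + 1 := lt_of_le_of_lt (Nat.le_ceil M) (by linarith)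
        have hp0 : (0:ℝ) < p := by exact_mod_cast hp1
        have : (n:ℝ) = p * ((⌈M⌉₊:ℝ) + 1) + 1 := by rw [hn]; push_cast; ring
        nlinarith
      have : M * j / n < 1 := by
        rw [div_lt_one hn0]
        nlinarith
      linarith



variable (c)

/-! ### The space -/

/-- index type: `inl i` = coordinate functionals, `inr (j,m)` = weighted partial block sums. -/
abbrev I : Type := ℕ ⊕ ℕ × ℕ

/-- the weight `c'_j/(2j)` (with the modified sequence `d`). -/
def w (j : ℕ) : ℝ := d c j / (2*j)

/-- the family of all "norming functionals" applied to a sequence. -/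
def F (x : ℕ → ℝ) : I → ℝ
  | Sum.inl i => x i
  | Sum.inr (j, m) => w c j * ∑ i ∈ (blk j).filter (· ≤ m), (-1:ℝ)^i * x i

lemma F_inl (x : ℕ → ℝ) (i : ℕ) : F c x (Sum.inl i) = x i := rfl

lemma F_inr (x : ℕ → ℝ) (j m : ℕ) :
    F c x (Sum.inr (j, m)) = w c j * ∑ i ∈ (blk j).filter (· ≤ m), (-1:ℝ)^i * x i := rfl

/-- basis vector in the ambient `ℓ∞` space. -/
def eE (i : ℕ) : lp (fun _ : I => ℝ) ⊤ :=
  ⟨F c ((Pi.single i 1 : ℕ → ℝ)), by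
    apply memℓp_infty
    refine ⟨max 1 (∑ j ∈ Finset.range (i+1), |w c j|), ?_⟩
    rintro r ⟨ι, rfl⟩
    match ι with
    | Sum.inl i' =>
      simp only [F_inl, Real.norm_eq_abs]
      refine le_trans ?_ (le_max_left _ _)
      rcases eq_or_ne i' i with h | h <;> simp [Pi.single_apply, h]
    | Sum.inr (j, m) =>
      simp only [F_inr, Real.norm_eq_abs]
      by_cases hmem : i ∈ (blk j).filter (· ≤ m)
      · have hsum : |∑ k ∈ (blk j).filter (· ≤ m), (-1:ℝ)^k * (Pi.single i 1 : ℕ → ℝ) k| ≤ 1 := by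
          rw [Finset.sum_eq_single_of_mem i hmem (fun k hk hki => by simp [Pi.single_apply, hki])]
          simp
        have hji : j < i := blk_index_lt (Finset.mem_filter.mp hmem).1
        have hw : |w c j| ≤ ∑ j' ∈ Finset.range (i+1), |w c j'| :=
          Finset.single_le_sum (f := fun j' => |w c j'|) (fun j' _ => abs_nonneg _)
            (Finset.mem_range.mpr (Nat.lt_succ_of_lt hji))
        refine le_trans (abs_mul _ _).le (le_trans ?_ (le_max_right _ _))
        calc |w c j| * |∑ k ∈ (blk j).filter (· ≤ m), (-1:ℝ)^k * (Pi.single i 1 : ℕ → ℝ) k|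
            ≤ |w c j| * 1 := by gcongr
          _ ≤ _ := by rw [mul_one]; exact hw
      · rw [Finset.sum_eq_zero fun k hk => by
          simp [Pi.single_apply, show k ≠ i from fun hki => hmem (hki ▸ hk)]]
        simp⟩

lemma eE_apply_inl (i i' : ℕ) :
    (eE c i : ∀ _ : I, ℝ) (Sum.inl i') = if i' = i then 1 else 0 := by
  simp [eE, F_inl, Pi.single_apply]

lemma eE_apply_inr (i j m : ℕ) :
    (eE c i : ∀ _ : I, ℝ) (Sum.inr (j, m)) =
      w c j * (if i ∈ (blk j).filter (· ≤ m) then (-1:ℝ)^i else 0) := by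
  show F c (Pi.single i 1 : ℕ → ℝ) (Sum.inr (j, m)) = _
  rw [F_inr]
  congr 1
  by_cases hmem : i ∈ (blk j).filter (· ≤ m)
  · rw [Finset.sum_eq_single_of_mem i hmem (fun k hk hki => by simp [Pi.single_apply, hki])]
    simp [hmem]
  · rw [Finset.sum_eq_zero fun k hk => by
      simp [Pi.single_apply, show k ≠ i from fun hki => hmem (hki ▸ hk)]]
    simp [hmem]

/-- generic finitely supported element. -/
def V (s : Finset ℕ) (a : ℕ → ℝ) : lp (fun _ : I => ℝ) ⊤ := ∑ i ∈ s, a i • eE c i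

lemma V_apply (s : Finset ℕ) (a : ℕ → ℝ) (ι : I) :
    (V c s a : ∀ _ : I, ℝ) ι = ∑ i ∈ s, a i * (eE c i : ∀ _ : I, ℝ) ι := by
  rw [V, lp.coeFn_sum, Finset.sum_apply]
  exact Finset.sum_congr rfl fun i _ => by rw [lp.coeFn_smul]; rfl

lemma V_apply_inl (s : Finset ℕ) (a : ℕ → ℝ) (i : ℕ) :
    (V c s a : ∀ _ : I, ℝ) (Sum.inl i) = if i ∈ s then a i else 0 := by
  rw [V_apply]
  by_cases h : i ∈ s
  · rw [Finset.sum_eq_single_of_mem i h (fun k hk hki => by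
      rw [eE_apply_inl]
      simp only [mul_ite, mul_one, mul_zero, ite_eq_right_iff]
      exact fun hik => absurd hik.symm hki)]
    simp [eE_apply_inl, h]
  · rw [Finset.sum_eq_zero fun k hk => by
      rw [eE_apply_inl]
      simp [show i ≠ k from fun hik => h (hik ▸ hk)]]
    simp [h]

lemma V_apply_inr (s : Finset ℕ) (a : ℕ → ℝ) (j m : ℕ) :
    (V c s a : ∀ _ : I, ℝ) (Sum.inr (j, m)) =
      w c j * ∑ i ∈ ((blk j).filter (· ≤ m)) ∩ s, (-1:ℝ)^i * a i := by
  rw [V_apply]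
  have : ∀ i ∈ s, a i * (eE c i : ∀ _ : I, ℝ) (Sum.inr (j, m)) =
      if i ∈ (blk j).filter (· ≤ m) then w c j * ((-1:ℝ)^i * a i) else 0 := by
    intro i _
    rw [eE_apply_inr]
    by_cases h : i ∈ (blk j).filter (· ≤ m) <;> simp [h] <;> ring
  rw [Finset.sum_congr rfl this, Finset.sum_ite_mem, Finset.inter_comm, Finset.mul_sum]

lemma coord_le_norm (f : lp (fun _ : I => ℝ) ⊤) (ι : I) : |(f : ∀ _ : I, ℝ) ι| ≤ ‖f‖ := by
  simpa [Real.norm_eq_abs] using lp.norm_apply_le_norm (by simp : (⊤:ENNReal) ≠ 0) f ι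

lemma norm_le_of_coords (f : lp (fun _ : I => ℝ) ⊤) {C : ℝ} (hC : 0 ≤ C)
    (h : ∀ ι, |(f : ∀ _ : I, ℝ) ι| ≤ C) : ‖f‖ ≤ C :=
  lp.norm_le_of_forall_le hC (fun ι => by simpa [Real.norm_eq_abs] using h ι)

instance factTop : Fact ((1:ENNReal) ≤ ⊤) := ⟨le_top⟩

/-- the Banach space: closure of the span of the basis vectors. -/
def Xs : Submodule ℝ (lp (fun _ : I => ℝ) ⊤) :=
  (Submodule.span ℝ (Set.range (eE c))).topologicalClosure

instance : CompleteSpace (Xs c) :=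
  (Submodule.isClosed_topologicalClosure _).completeSpace_coe

lemma V_mem (s : Finset ℕ) (a : ℕ → ℝ) : V c s a ∈ Xs c := by
  apply Submodule.le_topologicalClosure
  exact Submodule.sum_mem _ fun i hi =>
    Submodule.smul_mem _ _ (Submodule.subset_span ⟨i, rfl⟩)

/-- the basis vectors as elements of `X`. -/
def be (i : ℕ) : Xs c :=
  ⟨eE c i, Submodule.le_topologicalClosure _ (Submodule.subset_span ⟨i, rfl⟩)⟩

/-- the coordinate functionals. -/
def cf (i : ℕ) : Xs c →L[ℝ] ℝ :=
  LinearMap.mkContinuous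
    { toFun := fun x => ((x : lp (fun _ : I => ℝ) ⊤) : ∀ _ : I, ℝ) (Sum.inl i)
      map_add' := fun x y => rfl
      map_smul' := fun r x => rfl }
    1 (fun x => by
      rw [one_mul, Real.norm_eq_abs]; exact coord_le_norm (x : lp (fun _ : I => ℝ) ⊤) (Sum.inl i))

lemma cf_apply (i : ℕ) (x : Xs c) :
    cf c i x = ((x : lp (fun _ : I => ℝ) ⊤) : ∀ _ : I, ℝ) (Sum.inl i) := rfl

lemma norm_sub (x : Xs c) : ‖x‖ = ‖(x : lp (fun _ : I => ℝ) ⊤)‖ := rfl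

/-- action of partial projections on the finitely supported elements. -/
lemma sum_coeff_V (A s : Finset ℕ) (a : ℕ → ℝ) :
    (∑ j ∈ A, cf c j ⟨V c s a, V_mem c s a⟩ • be c j : Xs c)
      = ⟨V c (A ∩ s) a, V_mem c _ a⟩ := by
  apply Subtype.ext
  push_cast [AddSubmonoidClass.coe_finset_sum]
  have : ∀ j ∈ A, (cf c j ⟨V c s a, V_mem c s a⟩ • be c j : lp (fun _ : I => ℝ) ⊤)
      = if j ∈ s then a j • eE c j else 0 := by
    intro j _
    rw [cf_apply]
    show (((V c s a : ∀ _ : I, ℝ) (Sum.inl j)) • eE c j : lp (fun _ : I => ℝ) ⊤) = _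
    rw [V_apply_inl]
    by_cases h : j ∈ s <;> simp [h]
  rw [Finset.sum_congr rfl this, Finset.sum_ite_mem]
  rfl

/-- the partial-sum (monotone basis) estimate. -/
lemma norm_V_truncate (s : Finset ℕ) (a : ℕ → ℝ) (n : ℕ) :
    ‖V c (s.filter (· < n)) a‖ ≤ ‖V c s a‖ := by
  apply norm_le_of_coords _ (norm_nonneg _)
  intro ι
  match ι with
  | Sum.inl i =>
    rw [V_apply_inl]
    by_cases h : i ∈ s.filter (· < n)
    · rw [if_pos h]
      have h2 := coord_le_norm (V c s a) (Sum.inl i)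
      rwa [V_apply_inl, if_pos (Finset.mem_filter.mp h).1] at h2
    · rw [if_neg h]; simp
  | Sum.inr (j, m) =>
    rw [V_apply_inr]
    match n with
    | 0 =>
      have : s.filter (· < 0) = ∅ := by simp
      simp [this]
    | (n+1) =>
      have hset : ((blk j).filter (· ≤ m)) ∩ (s.filter (· < n+1))
          = ((blk j).filter (· ≤ min m n)) ∩ s := by
        ext x
        simp only [Finset.mem_inter, Finset.mem_filter, le_min_iff, Nat.lt_succ_iff]
        tauto
      rw [hset]
      have h2 := coord_le_norm (V c s a) (Sum.inr (j, min m n))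
      rwa [V_apply_inr] at h2

lemma d_zero : d c 0 = 0 := by simp [d]

lemma w_zero : w c 0 = 0 := by simp [w, d_zero]

lemma w_eq {j : ℕ} (hj : 1 ≤ j) : w c j = mq c j / 2 := by
  have hj0 : (j:ℝ) ≠ 0 := by positivity
  rw [w, d]
  field_simp

lemma w_mul_two_j (j : ℕ) : w c j * (2*j) = d c j := by
  rcases Nat.eq_zero_or_pos j with h | h
  · simp [h, w_zero, d_zero]
  · rw [w_eq c h, d]
    have hj0 : (j:ℝ) ≠ 0 := by exact_mod_cast h.ne'
    field_simp

variable {c}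
variable (h1 : 1 ≤ c 1) (hmono : Monotone c) (hle : ∀ n : ℕ, 1 ≤ n → c n ≤ n)

include h1 hmono in
lemma w_nonneg (j : ℕ) : 0 ≤ w c j := by
  rcases Nat.eq_zero_or_pos j with h | h
  · simp [h, w_zero]
  · rw [w_eq c h]
    exact div_nonneg (mq_pos h1 hmono j).le (by norm_num)

include h1 hmono hle in
/-- the key projection estimate on finitely supported vectors. -/
lemma norm_V_restrict {N : ℕ} (hN : 1 ≤ N) {A : Finset ℕ} (hA : A.card ≤ 2*N)
    (s : Finset ℕ) (a : ℕ → ℝ) :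
    ‖V c (A ∩ s) a‖ ≤ max 1 (c N) * ‖V c s a‖ := by
  set M := max 1 (c N) with hM
  have hM1 : (1:ℝ) ≤ M := le_max_left _ _
  have hcN : c N ≤ M := le_max_right _ _
  have hM0 : (0:ℝ) ≤ M := by linarith
  apply norm_le_of_coords _ (mul_nonneg hM0 (norm_nonneg _))
  intro ι
  have hVnorm : (0:ℝ) ≤ ‖V c s a‖ := norm_nonneg _
  have hai : ∀ i ∈ s, |a i| ≤ ‖V c s a‖ := by
    intro i hi
    have h2 := coord_le_norm (V c s a) (Sum.inl i)
    rwa [V_apply_inl, if_pos hi] at h2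
  match ι with
  | Sum.inl i =>
    rw [V_apply_inl]
    by_cases h : i ∈ A ∩ s
    · rw [if_pos h]
      have := hai i (Finset.mem_inter.mp h).2
      nlinarith
    · rw [if_neg h]
      simp only [abs_zero]
      positivity
  | Sum.inr (j, m) =>
    rw [V_apply_inr]
    set t' := ((blk j).filter (· ≤ m)) ∩ (A ∩ s) with ht'
    have hsub_s : t' ⊆ s := fun x hx =>
      (Finset.mem_inter.mp (Finset.mem_inter.mp hx).2).2
    have habs : |∑ i ∈ t', (-1:ℝ)^i * a i| ≤ (t'.card : ℝ) * ‖V c s a‖ := by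
      refine le_trans (Finset.abs_sum_le_sum_abs _ _) ?_
      have : ∀ i ∈ t', |(-1:ℝ)^i * a i| ≤ ‖V c s a‖ := by
        intro i hi
        rw [abs_mul, abs_pow, abs_neg, abs_one, one_pow, one_mul]
        exact hai i (hsub_s hi)
      calc ∑ i ∈ t', |(-1:ℝ)^i * a i| ≤ ∑ _i ∈ t', ‖V c s a‖ :=
            Finset.sum_le_sum this
        _ = (t'.card : ℝ) * ‖V c s a‖ := by rw [Finset.sum_const, nsmul_eq_mul]
    have hcard1 : (t'.card : ℝ) ≤ 2*j := by
      have : t' ⊆ blk j := fun x hx =>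
        (Finset.mem_filter.mp (Finset.mem_inter.mp hx).1).1
      have := Finset.card_le_card this
      rw [blk_card] at this
      exact_mod_cast this
    have hcard2 : (t'.card : ℝ) ≤ 2*N := by
      have : t' ⊆ A := fun x hx =>
        (Finset.mem_inter.mp (Finset.mem_inter.mp hx).2).1
      have h2 := (Finset.card_le_card this).trans hA
      exact_mod_cast h2
    have hw0 : 0 ≤ w c j := w_nonneg h1 hmono j
    have hwcard : w c j * (t'.card : ℝ) ≤ c N := by
      rcases le_or_gt j N with hcase | hcase
      · rcases Nat.eq_zero_or_pos j with hj0 | hj0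
        · rw [hj0, w_zero, zero_mul]
          exact le_trans (by linarith [c_pos h1 hmono (le_refl 1)]) (hmono hN)
        · calc w c j * (t'.card : ℝ) ≤ w c j * (2*j) := by nlinarith
            _ = d c j := w_mul_two_j c j
            _ ≤ d c N := d_mono h1 hmono hj0 hcase
            _ ≤ c N := d_le_c hN
      · have hj1 : 1 ≤ j := le_trans hN hcase.le
        have hmq0 : 0 ≤ mq c j := (mq_pos h1 hmono j).le
        calc w c j * (t'.card : ℝ) ≤ w c j * (2*N) := by nlinarith
          _ = mq c j * N := by rw [w_eq c hj1]; ring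
          _ ≤ mq c N * N := by
              have := mq_anti (c := c) hcase.le
              have hN0 : (0:ℝ) ≤ N := Nat.cast_nonneg N
              nlinarith
          _ = d c N := by rw [d]; ring
          _ ≤ c N := d_le_c hN
    calc |w c j * ∑ i ∈ t', (-1:ℝ)^i * a i|
        = w c j * |∑ i ∈ t', (-1:ℝ)^i * a i| := by
          rw [abs_mul, abs_of_nonneg hw0]
      _ ≤ w c j * ((t'.card : ℝ) * ‖V c s a‖) := by
          apply mul_le_mul_of_nonneg_left habs hw0
      _ = (w c j * (t'.card : ℝ)) * ‖V c s a‖ := by ring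
      _ ≤ c N * ‖V c s a‖ := by nlinarith
      _ ≤ M * ‖V c s a‖ := by nlinarith

include h1 hmono hle in
lemma w_le_one (j : ℕ) : w c j ≤ 1 := by
  rcases Nat.eq_zero_or_pos j with h | h
  · simp [h, w_zero]
  · rw [w_eq c h]
    have hj0 : (0:ℝ) < j := by exact_mod_cast h
    have h2 : mq c j ≤ c j / j := mq_le h
    have h3 : c j / j ≤ 1 := by
      rw [div_le_one hj0]; exact hle j h
    linarith

include h1 hmono hle in
lemma norm_eE (i : ℕ) : ‖eE c i‖ = 1 := by
  apply le_antisymm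
  · apply norm_le_of_coords _ (by norm_num)
    intro ι
    match ι with
    | Sum.inl i' =>
      rw [eE_apply_inl]
      by_cases h : i' = i <;> simp [h]
    | Sum.inr (j, m) =>
      rw [eE_apply_inr]
      have h0 := w_nonneg h1 hmono j
      have hle1 := w_le_one h1 hmono hle j
      by_cases h : i ∈ (blk j).filter (· ≤ m)
      · rw [if_pos h, abs_mul, abs_of_nonneg h0]
        simp only [abs_pow, abs_neg, abs_one, one_pow, mul_one]
        exact hle1
      · rw [if_neg h, mul_zero, abs_zero]; norm_num
  · have h2 := coord_le_norm (eE c i) (Sum.inl i)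
    rw [eE_apply_inl, if_pos rfl] at h2
    simpa using h2

omit h1 hmono hle
variable (c)

lemma exists_V_close (x : Xs c) {ε : ℝ} (hε : 0 < ε) :
    ∃ (s : Finset ℕ) (a : ℕ → ℝ), ‖x - ⟨V c s a, V_mem c s a⟩‖ < ε := by
  have hx : (x : lp (fun _ : I => ℝ) ⊤) ∈
      closure (Submodule.span ℝ (Set.range (eE c)) : Set (lp (fun _ : I => ℝ) ⊤)) := by
    have h2 := x.2
    rw [← Submodule.topologicalClosure_coe]
    exact h2
  obtain ⟨y, hy, hdist⟩ := Metric.mem_closure_iff.mp hx ε hε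
  obtain ⟨f, hf⟩ := Finsupp.mem_span_range_iff_exists_finsupp.mp hy
  have hyV : y = V c f.support ⇑f := by
    rw [← hf, V, Finsupp.sum]
  refine ⟨f.support, ⇑f, ?_⟩
  have : ‖x - ⟨V c f.support ⇑f, V_mem c _ _⟩‖
      = dist (x : lp (fun _ : I => ℝ) ⊤) y := by
    rw [dist_eq_norm, hyV]
    rfl
  rw [this]
  exact hdist

lemma opnorm_ext (T : Xs c →L[ℝ] Xs c) {M : ℝ} (hM : 0 ≤ M)
    (h : ∀ s a, ‖T ⟨V c s a, V_mem c s a⟩‖ ≤ M * ‖V c s a‖) (x : Xs c) :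
    ‖T x‖ ≤ M * ‖x‖ := by
  refine le_of_forall_pos_le_add fun ε hε => ?_
  have hden : (0:ℝ) < ‖T‖ + M + 1 := by positivity
  set δ := ε / (‖T‖ + M + 1) with hδ
  have hδ0 : 0 < δ := by positivity
  obtain ⟨s, a, hclose⟩ := exists_V_close c x hδ0
  set v : Xs c := ⟨V c s a, V_mem c s a⟩ with hv
  have hVv : ‖V c s a‖ = ‖v‖ := rfl
  have hvx : ‖v‖ ≤ ‖x‖ + δ := by
    calc ‖v‖ ≤ ‖x‖ + ‖v - x‖ := by
          have := norm_sub_norm_le v x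
          linarith [norm_sub_rev v x, norm_le_insert' v x, norm_sub_norm_le v x]
      _ ≤ ‖x‖ + δ := by rw [norm_sub_rev]; linarith
  have hT1 : ‖T (x - v)‖ ≤ ‖T‖ * δ := by
    calc ‖T (x - v)‖ ≤ ‖T‖ * ‖x - v‖ := T.le_opNorm _
      _ ≤ ‖T‖ * δ := by
          apply mul_le_mul_of_nonneg_left hclose.le (norm_nonneg T)
  have hT2 : ‖T v‖ ≤ M * (‖x‖ + δ) := by
    calc ‖T v‖ ≤ M * ‖V c s a‖ := h s a
      _ ≤ M * (‖x‖ + δ) := by rw [hVv]; exact mul_le_mul_of_nonneg_left hvx hM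
  have hδle : (‖T‖ + M) * δ < ε := by
    rw [hδ]
    rw [div_eq_inv_mul, ← mul_assoc]
    have : (‖T‖ + M) * (‖T‖ + M + 1)⁻¹ < 1 := by
      rw [mul_inv_lt_iff₀ hden]
      linarith
    nlinarith
  calc ‖T x‖ = ‖T (x - v) + T v‖ := by rw [map_sub, sub_add_cancel]
    _ ≤ ‖T (x - v)‖ + ‖T v‖ := norm_add_le _ _
    _ ≤ ‖T‖ * δ + M * (‖x‖ + δ) := by linarith
    _ = M * ‖x‖ + (‖T‖ + M) * δ := by ring
    _ ≤ M * ‖x‖ + ε := by linarith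

/-- projection operators. -/
def SA (A : Finset ℕ) : Xs c →L[ℝ] Xs c :=
  ∑ j ∈ A, (cf c j).smulRight (be c j)

lemma SA_apply (A : Finset ℕ) (x : Xs c) :
    SA c A x = ∑ j ∈ A, cf c j x • be c j := by
  rw [SA, ContinuousLinearMap.sum_apply]
  exact Finset.sum_congr rfl fun j _ => rfl

lemma SA_V (A s : Finset ℕ) (a : ℕ → ℝ) :
    SA c A ⟨V c s a, V_mem c s a⟩ = ⟨V c (A ∩ s) a, V_mem c _ a⟩ := by
  rw [SA_apply]
  exact sum_coeff_V c A s a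

lemma range_inter (n : ℕ) (s : Finset ℕ) :
    Finset.range n ∩ s = s.filter (· < n) := by
  ext x; simp [Finset.mem_filter, Finset.mem_range]; tauto

lemma P_norm (n : ℕ) (x : Xs c) : ‖SA c (Finset.range n) x‖ ≤ ‖x‖ := by
  have h := opnorm_ext c (SA c (Finset.range n)) (zero_le_one) (fun s a => by
    rw [SA_V, norm_sub, one_mul]
    show ‖V c (Finset.range n ∩ s) a‖ ≤ _
    rw [range_inter]
    exact norm_V_truncate c s a n) x
  simpa using h

lemma P_expansion (x : Xs c) :
    Filter.Tendsto (fun n => SA c (Finset.range n) x) Filter.atTop (nhds x) := by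
  rw [Metric.tendsto_atTop]
  intro ε hε
  have hε3 : 0 < ε/3 := by linarith
  obtain ⟨s, a, hclose⟩ := exists_V_close c x hε3
  set v : Xs c := ⟨V c s a, V_mem c s a⟩ with hv
  refine ⟨(s.sup id) + 1, fun n hn => ?_⟩
  have hrs : Finset.range n ∩ s = s := by
    rw [range_inter]
    apply Finset.filter_true_of_mem
    intro x hx
    have : x ≤ s.sup id := Finset.le_sup (f := id) hx
    omega
  have hPv : SA c (Finset.range n) v = v := by
    rw [hv, SA_V]
    exact Subtype.ext (congrArg (fun t => V c t a) hrs)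
  have h1' : ‖SA c (Finset.range n) x - SA c (Finset.range n) v‖ ≤ ε/3 := by
    rw [← map_sub]
    exact le_trans (P_norm c n (x - v)) hclose.le
  rw [dist_eq_norm]
  calc ‖SA c (Finset.range n) x - x‖
      = ‖(SA c (Finset.range n) x - SA c (Finset.range n) v) + (v - x)‖ := by
        rw [hPv]; congr 1; abel
    _ ≤ ‖SA c (Finset.range n) x - SA c (Finset.range n) v‖ + ‖v - x‖ := norm_add_le _ _
    _ ≤ ε/3 + ε/3 := by
        refine add_le_add h1' ?_
        rw [norm_sub_rev]; exact hclose.le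
    _ < ε := by linarith

include h1 hmono hle in
lemma norm_V_blk {j : ℕ} (hj : 1 ≤ j) : ‖V c (blk j) (fun _ => (1:ℝ))‖ = 1 := by
  apply le_antisymm
  · apply norm_le_of_coords _ zero_le_one
    intro ι
    match ι with
    | Sum.inl i =>
      rw [V_apply_inl]
      by_cases h : i ∈ blk j <;> simp [h]
    | Sum.inr (j', m) =>
      rw [V_apply_inr]
      rcases eq_or_ne j' j with h | h
      · subst h
        have hset : ((blk j').filter (· ≤ m)) ∩ blk j'
            = Finset.Ioc (5^j') (min (5^j'+2*j') m) := by
          rw [Finset.inter_eq_left.mpr (Finset.filter_subset _ _), blk, Ioc_filter_le]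
        rw [hset]
        have halt := alt_sum_Ioc (5^j') (min (5^j'+2*j') m)
        have hw0 := w_nonneg h1 hmono j'
        have hw1 := w_le_one h1 hmono hle j'
        have hsimp : ∑ i ∈ Finset.Ioc (5^j') (min (5^j'+2*j') m),
            (-1:ℝ)^i * (fun _ => (1:ℝ)) i
            = ∑ i ∈ Finset.Ioc (5^j') (min (5^j'+2*j') m), (-1:ℝ)^i := by
          simp
        rw [hsimp, abs_mul, abs_of_nonneg hw0]
        nlinarith [abs_nonneg (∑ i ∈ Finset.Ioc (5^j') (min (5^j'+2*j') m), (-1:ℝ)^i)]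
      · have hset : ((blk j').filter (· ≤ m)) ∩ blk j = ∅ := by
          apply Finset.eq_empty_of_forall_notMem
          intro x hx
          rw [Finset.mem_inter, Finset.mem_filter] at hx
          exact (Finset.disjoint_left.mp (blk_disjoint h)) hx.1.1 hx.2
        simp [hset]
  · have h2 := coord_le_norm (V c (blk j) (fun _ => (1:ℝ))) (Sum.inl (5^j+1))
    rw [V_apply_inl, if_pos (by rw [mem_blk]; omega)] at h2
    simpa using h2

/-- the "even half" of the block `S_j` (all of the same parity). -/
def evens (j : ℕ) : Finset ℕ := (Finset.Icc 1 j).image (fun k => 5^j + 2*k)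

lemma evens_subset {j : ℕ} : evens j ⊆ blk j := by
  intro x hx
  rw [evens, Finset.mem_image] at hx
  obtain ⟨k, hk, rfl⟩ := hx
  rw [Finset.mem_Icc] at hk
  rw [mem_blk]
  omega

include h1 hmono in
lemma norm_V_evens {j : ℕ} (hj : 1 ≤ j) :
    d c j / 2 ≤ ‖V c (evens j) (fun _ => (1:ℝ))‖ := by
  have h2 := coord_le_norm (V c (evens j) (fun _ => (1:ℝ))) (Sum.inr (j, 5^j + 2*j))
  rw [V_apply_inr] at h2
  have hfull : (blk j).filter (· ≤ 5^j+2*j) = blk j := by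
    apply Finset.filter_true_of_mem
    intro x hx
    rw [mem_blk] at hx
    omega
  have hinter : blk j ∩ evens j = evens j := Finset.inter_eq_right.mpr evens_subset
  rw [hfull, hinter] at h2
  have hsum : ∑ i ∈ evens j, (-1:ℝ)^i * (fun _ => (1:ℝ)) i = -(j:ℝ) := by
    rw [evens, Finset.sum_image (fun a _ b _ hab => by omega)]
    have hterm : ∀ k ∈ Finset.Icc 1 j, (-1:ℝ)^(5^j+2*k) * (fun _ => (1:ℝ)) (5^j+2*k) = -1 := by
      intro k _
      have hodd : Odd (5^j) := Odd.pow (by decide : Odd 5)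
      simp only [mul_one]
      rw [pow_add, hodd.neg_one_pow, pow_mul, neg_one_sq, one_pow, mul_one]
    rw [Finset.sum_congr rfl hterm]
    simp [Nat.card_Icc]
  rw [hsum] at h2
  have hw : w c j = mq c j / 2 := w_eq c hj
  have hmq0 := (mq_pos h1 hmono j).le
  have habs : |w c j * -(j:ℝ)| = d c j / 2 := by
    rw [abs_mul, abs_neg, Nat.abs_cast, abs_of_nonneg (w_nonneg h1 hmono j), hw, d]
    ring
  rwa [habs] at h2

/-- value of the sum of basis vectors. -/
lemma sum_be_val (A : Finset ℕ) :
    ((∑ i ∈ A, be c i : Xs c) : lp (fun _ : I => ℝ) ⊤) = V c A (fun _ => (1:ℝ)) := by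
  rw [AddSubmonoidClass.coe_finset_sum, V]
  exact Finset.sum_congr rfl fun i _ => (one_smul ℝ (eE c i)).symm


variable {c}

/-- the Schauder basis structure. -/
def gb (h1 : 1 ≤ c 1) (hmono : Monotone c) (hle : ∀ n : ℕ, 1 ≤ n → c n ≤ n) :
    GreedyBasis ℝ (Xs c) where
  e := be c
  coeff := cf c
  norm_e i := norm_eE h1 hmono hle i
  biorth i j := by
    rw [cf_apply]
    show (eE c j : ∀ _ : I, ℝ) (Sum.inl i) = _
    rw [eE_apply_inl]
  expansion x :=
    Filter.Tendsto.congr (fun n => SA_apply c (Finset.range n) x) (P_expansion c x)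


end Stmt17Aux

/-- For any nondecreasing unbounded sequence `1 ≤ c₁ ≤ c₂ ≤ …` with `c_n ≤ n` there is a
Banach space with a normalized monotone basis with `k_{2N} ≤ max {1, c_N}` which is not
unconditional with constant coefficients (hence not quasi-greedy). -/
theorem stmt17 (c : ℕ → ℝ) (h1 : 1 ≤ c 1) (hmono : Monotone c)
    (hunbdd : ∀ M : ℝ, ∃ n : ℕ, M < c n) (hle : ∀ n : ℕ, 1 ≤ n → c n ≤ n) :
    Nonempty (Stmt17Witness c) := by
  constructor
  refine
    { carrier := Stmt17Aux.Xs c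
      basis := Stmt17Aux.gb h1 hmono hle
      monotone_basis := ?_
      proj_bound := ?_
      not_ucc := ?_ }
  · intro x n
    have h := Stmt17Aux.P_norm c n x
    rw [Stmt17Aux.SA_apply] at h
    exact h
  · intro N hN A hA
    have hM0 : (0:ℝ) ≤ max 1 (c N) := le_trans zero_le_one (le_max_left _ _)
    apply ContinuousLinearMap.opNorm_le_bound _ hM0
    intro x
    have h := Stmt17Aux.opnorm_ext c (Stmt17Aux.SA c A) hM0 (fun s a => by
      rw [Stmt17Aux.SA_V]
      show ‖Stmt17Aux.V c (A ∩ s) a‖ ≤ _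
      exact Stmt17Aux.norm_V_restrict h1 hmono hle hN hA s a) x
    exact h
  · rintro ⟨C, hC⟩
    obtain ⟨j, hj1, hjd⟩ := Stmt17Aux.d_unbdd h1 hmono hunbdd (2*C)
    have h : ‖(∑ i ∈ Stmt17Aux.evens j, Stmt17Aux.be c i : Stmt17Aux.Xs c)‖
        ≤ C * ‖(∑ i ∈ Stmt17Aux.blk j, Stmt17Aux.be c i : Stmt17Aux.Xs c)‖ :=
      hC (Stmt17Aux.evens j) (Stmt17Aux.blk j) Stmt17Aux.evens_subset
    have h2 : ‖(∑ i ∈ Stmt17Aux.evens j, Stmt17Aux.be c i : Stmt17Aux.Xs c)‖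
        = ‖Stmt17Aux.V c (Stmt17Aux.evens j) (fun _ => (1:ℝ))‖ := by
      rw [Stmt17Aux.norm_sub, Stmt17Aux.sum_be_val]
    have h3 : ‖(∑ i ∈ Stmt17Aux.blk j, Stmt17Aux.be c i : Stmt17Aux.Xs c)‖ = 1 := by
      rw [Stmt17Aux.norm_sub, Stmt17Aux.sum_be_val]
      exact Stmt17Aux.norm_V_blk c h1 hmono hle hj1
    have h4 := Stmt17Aux.norm_V_evens c h1 hmono hj1
    rw [h2, h3, mul_one] at h
    linarith
end
end
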